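/- arXiv:1405.3030 — 9 statements merged into one kernel-verified Lean document; each statement's English description precedes it below -/
import Mathlib

section
/- Let D = (P, B, I) be a 2-(v,k,λ) design and let G = Aut(D). Then D is trivial (i.e. k = 2 or k = v) and G-pairwise transitive if and only if either (a) k = 2 and λ = 1, or (b) k = v and λ = |B|. -/
/-- The incidence relation `I` makes `P` (points) and `B` (blocks) into a
2-(v, k, l) design: there are `v` points, every block is incident with exactly
`k ≥ 2` points, and any two distinct points are incident with exactly `l` common blocks. -/
def Is2Design {P B : Type*} (I : P → B → Prop) (v k l : ℕ) : Prop :=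
  Nat.card P = v ∧ 2 ≤ k ∧ (∀ b : B, Nat.card {p : P // I p b} = k) ∧
    ∀ p q : P, p ≠ q → Nat.card {b : B // I p b ∧ I q b} = l

/-- The pair of permutations `(σ, τ)` is an automorphism of the design with incidence `I`. -/
def IsDesignAut {P B : Type*} (I : P → B → Prop) (σ : Equiv.Perm P) (τ : Equiv.Perm B) : Prop :=
  ∀ p b, I p b ↔ I (σ p) (τ b)

/-- The design with incidence `I` is `Aut(D)`-pairwise transitive: the full automorphism
group is transitive on ordered pairs of distinct points, incident point-block pairs,
non-incident point-block pairs, ordered pairs of distinct blocks with a common point,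
and ordered pairs of blocks with no common point. -/
def AutPairwiseTransitive {P B : Type*} (I : P → B → Prop) : Prop :=
  (∀ p₁ p₂ q₁ q₂ : P, p₁ ≠ p₂ → q₁ ≠ q₂ →
    ∃ σ τ, IsDesignAut I σ τ ∧ σ p₁ = q₁ ∧ σ p₂ = q₂) ∧
  (∀ (p p' : P) (b b' : B), I p b → I p' b' →
    ∃ σ τ, IsDesignAut I σ τ ∧ σ p = p' ∧ τ b = b') ∧
  (∀ (p p' : P) (b b' : B), ¬ I p b → ¬ I p' b' →
    ∃ σ τ, IsDesignAut I σ τ ∧ σ p = p' ∧ τ b = b') ∧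
  (∀ b₁ b₂ b₁' b₂' : B, b₁ ≠ b₂ → b₁' ≠ b₂' → (∃ p, I p b₁ ∧ I p b₂) →
    (∃ p, I p b₁' ∧ I p b₂') → ∃ σ τ, IsDesignAut I σ τ ∧ τ b₁ = b₁' ∧ τ b₂ = b₂') ∧
  (∀ b₁ b₂ b₁' b₂' : B, (¬ ∃ p, I p b₁ ∧ I p b₂) → (¬ ∃ p, I p b₁' ∧ I p b₂') →
    ∃ σ τ, IsDesignAut I σ τ ∧ τ b₁ = b₁' ∧ τ b₂ = b₂')

section PermHelpers

variable {α : Type*}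

/-- Any ordered pair of distinct elements can be mapped to any other by a permutation. -/
lemma exists_perm2 {a b a' b' : α} (hab : a ≠ b) (hab' : a' ≠ b') :
    ∃ σ : Equiv.Perm α, σ a = a' ∧ σ b = b' := by
  classical
  refine ⟨(Equiv.swap a a').trans (Equiv.swap (Equiv.swap a a' b) b'), ?_, ?_⟩
  · have h1 : a' ≠ Equiv.swap a a' b := by
      intro h
      have h2 : Equiv.swap a a' a = Equiv.swap a a' b := by
        rw [Equiv.swap_apply_left]; exact h
      exact hab ((Equiv.swap a a').injective h2)
    simp only [Equiv.trans_apply, Equiv.swap_apply_left]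
    exact Equiv.swap_apply_of_ne_of_ne h1 hab'
  · simp only [Equiv.trans_apply, Equiv.swap_apply_left]

/-- 3-transitivity of the symmetric group. -/
lemma exists_perm3 {a b c a' b' c' : α} (hab : a ≠ b) (hac : a ≠ c) (hbc : b ≠ c)
    (hab' : a' ≠ b') (hac' : a' ≠ c') (hbc' : b' ≠ c') :
    ∃ σ : Equiv.Perm α, σ a = a' ∧ σ b = b' ∧ σ c = c' := by
  classical
  obtain ⟨σ, ha, hb⟩ := exists_perm2 hab hab'
  refine ⟨σ.trans (Equiv.swap (σ c) c'), ?_, ?_, ?_⟩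
  · have h1 : a' ≠ σ c := by rw [← ha]; exact fun h => hac (σ.injective h)
    simp only [Equiv.trans_apply, ha]
    exact Equiv.swap_apply_of_ne_of_ne h1 hac'
  · have h1 : b' ≠ σ c := by rw [← hb]; exact fun h => hbc (σ.injective h)
    simp only [Equiv.trans_apply, hb]
    exact Equiv.swap_apply_of_ne_of_ne h1 hbc'
  · simp only [Equiv.trans_apply, Equiv.swap_apply_left]

/-- 4-transitivity of the symmetric group. -/
lemma exists_perm4 {a b c d a' b' c' d' : α}
    (hab : a ≠ b) (hac : a ≠ c) (had : a ≠ d) (hbc : b ≠ c) (hbd : b ≠ d) (hcd : c ≠ d)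
    (hab' : a' ≠ b') (hac' : a' ≠ c') (had' : a' ≠ d') (hbc' : b' ≠ c') (hbd' : b' ≠ d')
    (hcd' : c' ≠ d') :
    ∃ σ : Equiv.Perm α, σ a = a' ∧ σ b = b' ∧ σ c = c' ∧ σ d = d' := by
  classical
  obtain ⟨σ, ha, hb, hc⟩ := exists_perm3 hab hac hbc hab' hac' hbc'
  refine ⟨σ.trans (Equiv.swap (σ d) d'), ?_, ?_, ?_, ?_⟩
  · have h1 : a' ≠ σ d := by rw [← ha]; exact fun h => had (σ.injective h)
    simp only [Equiv.trans_apply, ha]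
    exact Equiv.swap_apply_of_ne_of_ne h1 had'
  · have h1 : b' ≠ σ d := by rw [← hb]; exact fun h => hbd (σ.injective h)
    simp only [Equiv.trans_apply, hb]
    exact Equiv.swap_apply_of_ne_of_ne h1 hbd'
  · have h1 : c' ≠ σ d := by rw [← hc]; exact fun h => hcd (σ.injective h)
    simp only [Equiv.trans_apply, hc]
    exact Equiv.swap_apply_of_ne_of_ne h1 hcd'
  · simp only [Equiv.trans_apply, Equiv.swap_apply_left]

/-- If a set has exactly the two elements `x, y` and contains `p ≠ q` and `z`,
then `z` is `p` or `q`. -/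
lemma pair_mem {x y p q z : α} (hpq : p ≠ q) (hp : p = x ∨ p = y) (hq : q = x ∨ q = y)
    (hz : z = x ∨ z = y) : z = p ∨ z = q := by
  rcases hp with hp | hp <;> rcases hq with hq | hq <;> rcases hz with hz | hz <;>
    first
      | exact absurd (hp.trans hq.symm) hpq
      | exact Or.inl (hz.trans hp.symm)
      | exact Or.inr (hz.trans hq.symm)

end PermHelpers

/-- A 2-(v,k,λ) design is trivial (`k = 2` or `k = v`) and `Aut(D)`-pairwise transitive
if and only if either `k = 2` and `λ = 1`, or `k = v` and `λ = |B|`. -/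
theorem trivial_and_aut_pairwise_transitive_iff
    {P B : Type*} [Finite P] [Finite B] [Nonempty P] [Nonempty B]
    (I : P → B → Prop) (v k l : ℕ) (hD : Is2Design I v k l) :
    ((k = 2 ∨ k = v) ∧ AutPairwiseTransitive I) ↔
      (k = 2 ∧ l = 1) ∨ (k = v ∧ l = Nat.card B) := by
  classical
  obtain ⟨hv, hk2, hkb, hlpq⟩ := hD
  -- number of points in a block, as a set-cardinality statement
  have hkb' : ∀ b : B, ({p | I p b} : Set P).ncard = k := by
    intro b
    rw [← Nat.card_coe_set_eq]
    exact hkb b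
  have hlpq' : ∀ p q : P, p ≠ q → ({b | I p b ∧ I q b} : Set B).ncard = l := by
    intro p q hpq
    rw [← Nat.card_coe_set_eq]
    exact hlpq p q hpq
  -- k ≤ v
  have hkv : k ≤ v := by
    obtain ⟨b⟩ := ‹Nonempty B›
    calc k = ({p | I p b} : Set P).ncard := (hkb' b).symm
    _ ≤ (Set.univ : Set P).ncard := Set.ncard_le_ncard (Set.subset_univ _) (Set.toFinite _)
    _ = Nat.card P := Set.ncard_univ P
    _ = v := hv
  -- in the case k = v, every point is on every block
  have hall : k = v → ∀ (p : P) (b : B), I p b := by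
    intro hkv' p b
    have : ({p | I p b} : Set P) = Set.univ := by
      apply Set.eq_of_subset_of_ncard_le (Set.subset_univ _)
      rw [hkb' b, Set.ncard_univ, hv, hkv']
    have := this.symm.subset (Set.mem_univ p)
    exact this
  -- in the case k = v, l = |B|
  have hlB : k = v → l = Nat.card B := by
    intro hkv'
    have hv2 : 1 < (Set.univ : Set P).ncard := by
      rw [Set.ncard_univ, hv]; omega
    obtain ⟨p, q, -, -, hpq⟩ := (Set.one_lt_ncard_iff (Set.toFinite _)).mp hv2
    rw [← hlpq p q hpq]
    exact Nat.card_congr (Equiv.subtypeUnivEquiv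
      (show ∀ b : B, I p b ∧ I q b from fun b => ⟨hall hkv' p b, hall hkv' q b⟩))
  -- extracting the two points of a block when k = 2
  have two_pts : k = 2 → ∀ b : B, ∃ x y : P, x ≠ y ∧ ∀ p, I p b ↔ p = x ∨ p = y := by
    intro hk b
    have : ({p | I p b} : Set P).ncard = 2 := by rw [hkb' b, hk]
    obtain ⟨x, y, hxy, hs⟩ := Set.ncard_eq_two.mp this
    refine ⟨x, y, hxy, fun p => ?_⟩
    have : I p b ↔ p ∈ ({p | I p b} : Set P) := Iff.rfl
    rw [this, hs]; simp
  -- the unique block through two points when l = 1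
  have uniq_blk : l = 1 → ∀ p q : P, p ≠ q → ∃! b : B, I p b ∧ I q b := by
    intro hl p q hpq
    have h1 : Nat.card {b : B // I p b ∧ I q b} = 1 := by rw [hlpq p q hpq, hl]
    obtain ⟨hs, ⟨⟨b, hb⟩⟩⟩ := Nat.card_eq_one_iff_unique.mp h1
    refine ⟨b, hb, fun b' hb' => ?_⟩
    exact congrArg Subtype.val (hs.elim ⟨b', hb'⟩ ⟨b, hb⟩)
  constructor
  · -- forward direction
    rintro ⟨htriv, h1, h2, h3, h4, h5⟩
    by_cases hkv' : k = v
    · exact Or.inr ⟨hkv', hlB hkv'⟩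
    · have hk : k = 2 := htriv.resolve_right hkv'
      -- v ≥ 3
      have hv3 : 3 ≤ v := by omega
      refine Or.inl ⟨hk, ?_⟩
      -- pick a block and its two points
      obtain ⟨b₀⟩ := ‹Nonempty B›
      obtain ⟨p, q, hpq, hb₀⟩ := two_pts hk b₀
      have hl1 : 1 ≤ l := by
        rw [← hlpq' p q hpq]
        exact (Set.ncard_pos (Set.toFinite _)).mpr
          ⟨b₀, (hb₀ p).mpr (Or.inl rfl), (hb₀ q).mpr (Or.inr rfl)⟩
      by_contra hlne
      have hl2 : 2 ≤ l := by omega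
      -- two distinct blocks b₁ b₂ through p, q
      have : 1 < ({b | I p b ∧ I q b} : Set B).ncard := by rw [hlpq' p q hpq]; omega
      obtain ⟨b₁, b₂, hb₁, hb₂, hb₁₂⟩ := (Set.one_lt_ncard_iff (Set.toFinite _)).mp this
      -- a third point r
      have hr : ∃ r : P, r ≠ p ∧ r ≠ q := by
        by_contra hno
        push_neg at hno
        have hsub : (Set.univ : Set P) ⊆ {p, q} := by
          intro x _
          rcases Classical.em (x = p) with h | h
          · exact Or.inl h
          · exact Or.inr (hno x h)
        have := Set.ncard_le_ncard hsub (Set.toFinite _)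
        rw [Set.ncard_univ, hv, Set.ncard_pair hpq] at this
        omega
      obtain ⟨r, hrp, hrq⟩ := hr
      -- a block b₃ through q and r
      have : 0 < ({b | I q b ∧ I r b} : Set B).ncard := by
        rw [hlpq' q r (Ne.symm hrq)]; omega
      obtain ⟨b₃, hqb₃, hrb₃⟩ := (Set.ncard_pos (Set.toFinite _)).mp this
      -- points of b₁ are exactly p, q; points of b₃ are exactly q, r
      obtain ⟨x₁, y₁, hx₁y₁, hpts₁⟩ := two_pts hk b₁
      obtain ⟨x₃, y₃, hx₃y₃, hpts₃⟩ := two_pts hk b₃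
      have hmem₁ : ∀ z, I z b₁ → z = p ∨ z = q := fun z hz =>
        pair_mem hpq ((hpts₁ p).mp hb₁.1) ((hpts₁ q).mp hb₁.2) ((hpts₁ z).mp hz)
      have hmem₃ : ∀ z, I z b₃ → z = q ∨ z = r := fun z hz =>
        pair_mem (Ne.symm hrq) ((hpts₃ q).mp hqb₃) ((hpts₃ r).mp hrb₃) ((hpts₃ z).mp hz)
      have hb₁₃ : b₁ ≠ b₃ := by
        intro h
        rcases hmem₁ r (h ▸ hrb₃) with h' | h'
        · exact hrp h'
        · exact hrq h'
      -- map the pair (b₁, b₂) to the pair (b₁, b₃)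
      obtain ⟨σ, τ, haut, hτ₁, hτ₂⟩ :=
        h4 b₁ b₂ b₁ b₃ hb₁₂ hb₁₃ ⟨p, hb₁.1, hb₂.1⟩ ⟨q, hb₁.2, hqb₃⟩
      -- σ p and σ q both lie in b₁ ∩ b₃, but that intersection is {q}
      have hσp₁ : I (σ p) b₁ := hτ₁ ▸ (haut p b₁).mp hb₁.1
      have hσp₃ : I (σ p) b₃ := hτ₂ ▸ (haut p b₂).mp hb₂.1
      have hσq₁ : I (σ q) b₁ := hτ₁ ▸ (haut q b₁).mp hb₁.2
      have hσq₃ : I (σ q) b₃ := hτ₂ ▸ (haut q b₂).mp hb₂.2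
      have hσpq : σ p = q := by
        rcases hmem₁ _ hσp₁ with h | h
        · rcases hmem₃ _ hσp₃ with h' | h'
          · exact h'
          · exact absurd (h'.symm.trans h) hrp
        · exact h
      have hσqq : σ q = q := by
        rcases hmem₁ _ hσq₁ with h | h
        · rcases hmem₃ _ hσq₃ with h' | h'
          · exact h'
          · exact absurd (h'.symm.trans h) hrp
        · exact h
      exact hpq (σ.injective (hσpq.trans hσqq.symm))
  · -- backward direction
    rintro (⟨hk, hl⟩ | ⟨hkv', hlB'⟩)
    · -- case k = 2, l = 1
      have h2b := two_pts hk
      have hub := uniq_blk hl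
      -- blocks are determined by their point sets
      have blk_ext : ∀ b b' : B, (∀ p, I p b → I p b') → b = b' := by
        intro b b' hbb'
        obtain ⟨x, y, hxy, hpts⟩ := h2b b
        have hx : I x b := (hpts x).mpr (Or.inl rfl)
        have hy : I y b := (hpts y).mpr (Or.inr rfl)
        obtain ⟨b₀, -, hb₀u⟩ := hub x y hxy
        exact (hb₀u b ⟨hx, hy⟩).trans (hb₀u b' ⟨hbb' x hx, hbb' y hy⟩).symm
      -- every permutation of the points extends to an automorphism
      have htau : ∀ σ : Equiv.Perm P, ∃ τ : Equiv.Perm B, IsDesignAut I σ τ := by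
        intro σ
        have key : ∀ b : B, ∃ b' : B, ∀ p, I p b' ↔ I (σ.symm p) b := by
          intro b
          obtain ⟨x, y, hxy, hpts⟩ := h2b b
          have hσxy : σ x ≠ σ y := fun h => hxy (σ.injective h)
          obtain ⟨b', ⟨hxb', hyb'⟩, -⟩ := hub (σ x) (σ y) hσxy
          obtain ⟨u, v, huv, hpts'⟩ := h2b b'
          refine ⟨b', fun p => ?_⟩
          have hmem : ∀ z, I z b' → z = σ x ∨ z = σ y := fun z hz =>
            pair_mem hσxy ((hpts' (σ x)).mp hxb') ((hpts' (σ y)).mp hyb') ((hpts' z).mp hz)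
          constructor
          · intro hp
            rcases hmem p hp with h | h
            · rw [hpts]; left; rw [h, Equiv.symm_apply_apply]
            · rw [hpts]; right; rw [h, Equiv.symm_apply_apply]
          · intro hp
            rcases (hpts _).mp hp with h | h
            · have : p = σ x := by
                rw [← h]; exact (Equiv.apply_symm_apply σ p).symm
              rw [this]; exact hxb'
            · have : p = σ y := by
                rw [← h]; exact (Equiv.apply_symm_apply σ p).symm
              rw [this]; exact hyb'
        choose f hf using key
        have hinj : Function.Injective f := by
          intro b₁ b₂ hfb
          apply blk_ext
          intro p hp
          have h1 : I (σ p) (f b₁) := by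
            rw [hf b₁, Equiv.symm_apply_apply]; exact hp
          rw [hfb, hf b₂, Equiv.symm_apply_apply] at h1
          exact h1
        refine ⟨Equiv.ofBijective f (Finite.injective_iff_bijective.mp hinj), fun p b => ?_⟩
        show I p b ↔ I (σ p) (f b)
        rw [hf b, Equiv.symm_apply_apply]
      -- an automorphism sending two points of a block to two points of another block
      -- sends the block to that block
      have hteq : ∀ (σ : Equiv.Perm P) (τ : Equiv.Perm B), IsDesignAut I σ τ →
          ∀ (b b' : B) (x y : P), x ≠ y → I x b → I y b → I (σ x) b' → I (σ y) b' →
          τ b = b' := by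
        intro σ τ haut b b' x y hxy hxb hyb hxb' hyb'
        have hσxy : σ x ≠ σ y := fun h => hxy (σ.injective h)
        obtain ⟨b₀, -, hb₀u⟩ := hub (σ x) (σ y) hσxy
        exact (hb₀u (τ b) ⟨(haut x b).mp hxb, (haut y b).mp hyb⟩).trans
          (hb₀u b' ⟨hxb', hyb'⟩).symm
      -- the second point of a block through a given point
      have hpartner : ∀ (p : P) (b : B), I p b → ∃ q, q ≠ p ∧ I q b := by
        intro p b hpb
        obtain ⟨x, y, hxy, hpts⟩ := h2b b
        rcases (hpts p).mp hpb with h | h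
        · exact ⟨y, by rw [h]; exact hxy.symm, (hpts y).mpr (Or.inr rfl)⟩
        · exact ⟨x, by rw [h]; exact hxy, (hpts x).mpr (Or.inl rfl)⟩
      refine ⟨Or.inl hk, ?_, ?_, ?_, ?_, ?_⟩
      · -- distinct point pairs
        intro p₁ p₂ q₁ q₂ h h'
        obtain ⟨σ, hσ₁, hσ₂⟩ := exists_perm2 h h'
        obtain ⟨τ, haut⟩ := htau σ
        exact ⟨σ, τ, haut, hσ₁, hσ₂⟩
      · -- incident point-block pairs
        intro p p' b b' hpb hp'b'
        obtain ⟨q, hqp, hqb⟩ := hpartner p b hpb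
        obtain ⟨q', hq'p', hq'b'⟩ := hpartner p' b' hp'b'
        obtain ⟨σ, hσ₁, hσ₂⟩ := exists_perm2 hqp.symm hq'p'.symm
        obtain ⟨τ, haut⟩ := htau σ
        refine ⟨σ, τ, haut, hσ₁, ?_⟩
        exact hteq σ τ haut b b' p q hqp.symm hpb hqb (hσ₁ ▸ hp'b') (hσ₂ ▸ hq'b')
      · -- non-incident point-block pairs
        intro p p' b b' hnb hnb'
        obtain ⟨x, y, hxy, hpts⟩ := h2b b
        obtain ⟨x', y', hxy', hpts'⟩ := h2b b'
        have hxb : I x b := (hpts x).mpr (Or.inl rfl)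
        have hyb : I y b := (hpts y).mpr (Or.inr rfl)
        have hxb' : I x' b' := (hpts' x').mpr (Or.inl rfl)
        have hyb' : I y' b' := (hpts' y').mpr (Or.inr rfl)
        have hxp : x ≠ p := fun h => hnb (h ▸ hxb)
        have hyp : y ≠ p := fun h => hnb (h ▸ hyb)
        have hxp' : x' ≠ p' := fun h => hnb' (h ▸ hxb')
        have hyp' : y' ≠ p' := fun h => hnb' (h ▸ hyb')
        obtain ⟨σ, hσ₁, hσ₂, hσ₃⟩ := exists_perm3 hxy hxp hyp hxy' hxp' hyp'
        obtain ⟨τ, haut⟩ := htau σ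
        refine ⟨σ, τ, haut, hσ₃, ?_⟩
        exact hteq σ τ haut b b' x y hxy hxb hyb (hσ₁ ▸ hxb') (hσ₂ ▸ hyb')
      · -- pairs of blocks with a common point
        intro b₁ b₂ b₁' b₂' h12 h12' ⟨p, hp1, hp2⟩ ⟨p', hp1', hp2'⟩
        obtain ⟨q₁, hq₁p, hq₁b⟩ := hpartner p b₁ hp1
        obtain ⟨q₂, hq₂p, hq₂b⟩ := hpartner p b₂ hp2
        obtain ⟨q₁', hq₁p', hq₁b'⟩ := hpartner p' b₁' hp1'
        obtain ⟨q₂', hq₂p', hq₂b'⟩ := hpartner p' b₂' hp2'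
        have hq₁₂ : q₁ ≠ q₂ := by
          intro h
          obtain ⟨b₀, -, hb₀u⟩ := hub p q₁ hq₁p.symm
          exact h12 ((hb₀u b₁ ⟨hp1, hq₁b⟩).trans (hb₀u b₂ ⟨hp2, h ▸ hq₂b⟩).symm)
        have hq₁₂' : q₁' ≠ q₂' := by
          intro h
          obtain ⟨b₀, -, hb₀u⟩ := hub p' q₁' hq₁p'.symm
          exact h12' ((hb₀u b₁' ⟨hp1', hq₁b'⟩).trans (hb₀u b₂' ⟨hp2', h ▸ hq₂b'⟩).symm)
        obtain ⟨σ, hσ₁, hσ₂, hσ₃⟩ :=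
          exists_perm3 hq₁p.symm hq₂p.symm hq₁₂ hq₁p'.symm hq₂p'.symm hq₁₂'
        obtain ⟨τ, haut⟩ := htau σ
        refine ⟨σ, τ, haut, ?_, ?_⟩
        · exact hteq σ τ haut b₁ b₁' p q₁ hq₁p.symm hp1 hq₁b (hσ₁ ▸ hp1') (hσ₂ ▸ hq₁b')
        · exact hteq σ τ haut b₂ b₂' p q₂ hq₂p.symm hp2 hq₂b (hσ₁ ▸ hp2') (hσ₃ ▸ hq₂b')
      · -- pairs of disjoint blocks
        intro b₁ b₂ b₁' b₂' hno hno'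
        obtain ⟨x₁, y₁, hxy₁, hpts₁⟩ := h2b b₁
        obtain ⟨x₂, y₂, hxy₂, hpts₂⟩ := h2b b₂
        obtain ⟨x₁', y₁', hxy₁', hpts₁'⟩ := h2b b₁'
        obtain ⟨x₂', y₂', hxy₂', hpts₂'⟩ := h2b b₂'
        have hx₁ : I x₁ b₁ := (hpts₁ x₁).mpr (Or.inl rfl)
        have hy₁ : I y₁ b₁ := (hpts₁ y₁).mpr (Or.inr rfl)
        have hx₂ : I x₂ b₂ := (hpts₂ x₂).mpr (Or.inl rfl)
        have hy₂ : I y₂ b₂ := (hpts₂ y₂).mpr (Or.inr rfl)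
        have hx₁' : I x₁' b₁' := (hpts₁' x₁').mpr (Or.inl rfl)
        have hy₁' : I y₁' b₁' := (hpts₁' y₁').mpr (Or.inr rfl)
        have hx₂' : I x₂' b₂' := (hpts₂' x₂').mpr (Or.inl rfl)
        have hy₂' : I y₂' b₂' := (hpts₂' y₂').mpr (Or.inr rfl)
        have d1 : x₁ ≠ x₂ := fun h => hno ⟨x₁, hx₁, h ▸ hx₂⟩
        have d2 : x₁ ≠ y₂ := fun h => hno ⟨x₁, hx₁, h ▸ hy₂⟩
        have d3 : y₁ ≠ x₂ := fun h => hno ⟨y₁, hy₁, h ▸ hx₂⟩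
        have d4 : y₁ ≠ y₂ := fun h => hno ⟨y₁, hy₁, h ▸ hy₂⟩
        have d1' : x₁' ≠ x₂' := fun h => hno' ⟨x₁', hx₁', h ▸ hx₂'⟩
        have d2' : x₁' ≠ y₂' := fun h => hno' ⟨x₁', hx₁', h ▸ hy₂'⟩
        have d3' : y₁' ≠ x₂' := fun h => hno' ⟨y₁', hy₁', h ▸ hx₂'⟩
        have d4' : y₁' ≠ y₂' := fun h => hno' ⟨y₁', hy₁', h ▸ hy₂'⟩
        obtain ⟨σ, hσ₁, hσ₂, hσ₃, hσ₄⟩ := exists_perm4 hxy₁ d1 d2 d3 d4 hxy₂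
          hxy₁' d1' d2' d3' d4' hxy₂'
        obtain ⟨τ, haut⟩ := htau σ
        refine ⟨σ, τ, haut, ?_, ?_⟩
        · exact hteq σ τ haut b₁ b₁' x₁ y₁ hxy₁ hx₁ hy₁ (hσ₁ ▸ hx₁') (hσ₂ ▸ hy₁')
        · exact hteq σ τ haut b₂ b₂' x₂ y₂ hxy₂ hx₂ hy₂ (hσ₃ ▸ hx₂') (hσ₄ ▸ hy₂')
    · -- case k = v
      have hI : ∀ (p : P) (b : B), I p b := hall hkv'
      refine ⟨Or.inr hkv', ?_, ?_, ?_, ?_, ?_⟩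
      · intro p₁ p₂ q₁ q₂ h h'
        obtain ⟨σ, hσ₁, hσ₂⟩ := exists_perm2 h h'
        exact ⟨σ, Equiv.refl B, fun p b => iff_of_true (hI p b) (hI _ _), hσ₁, hσ₂⟩
      · intro p p' b b' _ _
        exact ⟨Equiv.swap p p', Equiv.swap b b', fun p b => iff_of_true (hI p b) (hI _ _),
          Equiv.swap_apply_left p p', Equiv.swap_apply_left b b'⟩
      · intro p p' b b' hnb _
        exact absurd (hI p b) hnb
      · intro b₁ b₂ b₁' b₂' h12 h12' _ _
        obtain ⟨τ, hτ₁, hτ₂⟩ := exists_perm2 h12 h12'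
        exact ⟨Equiv.refl P, τ, fun p b => iff_of_true (hI p b) (hI _ _), hτ₁, hτ₂⟩
      · intro b₁ b₂ b₁' b₂' hno _
        obtain ⟨p⟩ := ‹Nonempty P›
        exact absurd ⟨p, hI p b₁, hI p b₂⟩ hno
end

section
/- Suppose D is a non-trivial G-pairwise transitive 2-(v,k,λ) design. Then D has no repeated blocks, i.e. distinct blocks b ≠ b' satisfy [b] ≠ [b']; and distinct points p₁ ≠ p₂ satisfy [p₁] ≠ [p₂]. -/
/-- The design with incidence `I` is `G`-pairwise transitive: `G` is transitive on
ordered pairs of distinct points, incident point-block pairs, non-incident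
point-block pairs, ordered pairs of distinct blocks with a common point, and
ordered pairs of blocks with no common point. -/
def PairwiseTransitive (G : Type*) {P B : Type*} [Group G] [MulAction G P] [MulAction G B]
    (I : P → B → Prop) : Prop :=
  (∀ p₁ p₂ q₁ q₂ : P, p₁ ≠ p₂ → q₁ ≠ q₂ → ∃ g : G, g • p₁ = q₁ ∧ g • p₂ = q₂) ∧
  (∀ (p p' : P) (b b' : B), I p b → I p' b' → ∃ g : G, g • p = p' ∧ g • b = b') ∧
  (∀ (p p' : P) (b b' : B), ¬ I p b → ¬ I p' b' → ∃ g : G, g • p = p' ∧ g • b = b') ∧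
  (∀ b₁ b₂ b₁' b₂' : B, b₁ ≠ b₂ → b₁' ≠ b₂' → (∃ p, I p b₁ ∧ I p b₂) →
    (∃ p, I p b₁' ∧ I p b₂') → ∃ g : G, g • b₁ = b₁' ∧ g • b₂ = b₂') ∧
  (∀ b₁ b₂ b₁' b₂' : B, (¬ ∃ p, I p b₁ ∧ I p b₂) → (¬ ∃ p, I p b₁' ∧ I p b₂') →
    ∃ g : G, g • b₁ = b₁' ∧ g • b₂ = b₂')

/-- A non-trivial `G`-pairwise transitive 2-design has no repeated blocks, and
distinct points are incident with distinct sets of blocks. -/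
theorem no_repeated_blocks_or_points
    {P B G : Type*} [Finite P] [Finite B] [Nonempty P] [Nonempty B]
    [Group G] [MulAction G P] [MulAction G B]
    (I : P → B → Prop) (v k l : ℕ)
    (hD : Is2Design I v k l) (hnt : 2 < k ∧ k < v)
    (hGI : ∀ (g : G) (p : P) (b : B), I p b ↔ I (g • p) (g • b))
    (hfaith : ∀ g : G, (∀ p : P, g • p = p) → (∀ b : B, g • b = b) → g = 1)
    (hPT : PairwiseTransitive G I) :
    (∀ b b' : B, b ≠ b' → {p : P | I p b} ≠ {p : P | I p b'}) ∧
    (∀ p p' : P, p ≠ p' → {b : B | I p b} ≠ {b : B | I p' b}) := by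
  obtain ⟨hv, hk2, hkb, hl⟩ := hD
  obtain ⟨hk, hkv⟩ := hnt
  obtain ⟨hpt, hflag, hanti, hconc, hdisj⟩ := hPT
  -- translation of point sets of blocks
  have hsetP : ∀ (g : G) (b : B), {p : P | I p (g • b)} = (g • ·) '' {p : P | I p b} := by
    intro g b
    ext x
    simp only [Set.mem_image, Set.mem_setOf_eq]
    constructor
    · intro hx
      refine ⟨g⁻¹ • x, ?_, by simp⟩
      have := (hGI g (g⁻¹ • x) b)
      rw [this]
      simpa using hx
    · rintro ⟨y, hy, rfl⟩; exact (hGI g y b).1 hy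
  -- translation of block sets of points
  have hsetB : ∀ (g : G) (p : P), {b : B | I (g • p) b} = (g • ·) '' {b : B | I p b} := by
    intro g p
    ext c
    simp only [Set.mem_image, Set.mem_setOf_eq]
    constructor
    · intro hc
      refine ⟨g⁻¹ • c, ?_, by simp⟩
      rw [hGI g p (g⁻¹ • c)]
      simpa using hc
    · rintro ⟨d, hd, rfl⟩; exact (hGI g p d).1 hd
  -- every block has at least two points
  have htwo : ∀ b : B, ∃ x y : P, x ≠ y ∧ I x b ∧ I y b := by
    intro b
    have h1 : 1 < Nat.card {x : P // I x b} := by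
      rw [hkb b]; omega
    have : Nontrivial {x : P // I x b} := Finite.one_lt_card_iff_nontrivial.mp (by simpa using h1)
    obtain ⟨⟨x, hx⟩, ⟨y, hy⟩, hxy⟩ := this
    exact ⟨x, y, fun h => hxy (Subtype.ext h), hx, hy⟩
  -- existence of a block through any two distinct points
  have hblock : ∀ p q : P, p ≠ q → ∃ c : B, I p c ∧ I q c := by
    intro p q hpq
    obtain ⟨c⟩ := ‹Nonempty B›
    obtain ⟨x, y, hxy, hx, hy⟩ := htwo c
    obtain ⟨g, hg1, hg2⟩ := hpt x y p q hxy hpq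
    refine ⟨g • c, ?_, ?_⟩
    · rw [← hg1]; exact (hGI g x c).1 hx
    · rw [← hg2]; exact (hGI g y c).1 hy
  constructor
  · -- no repeated blocks
    intro b b' hbb heq
    -- a point not on b
    have hr : ∃ r : P, ¬ I r b := by
      by_contra h
      push_neg at h
      have : Nat.card {x : P // I x b} = Nat.card P :=
        Nat.card_congr (Equiv.subtypeUnivEquiv h)
      rw [hkb b, hv] at this
      omega
    obtain ⟨r, hr⟩ := hr
    obtain ⟨p, _, _, hp, _⟩ := htwo b
    have hpr : p ≠ r := fun h => hr (h ▸ hp)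
    obtain ⟨c, hpc, hrc⟩ := hblock p r hpr
    have hbc : b ≠ c := fun h => hr (h ▸ hrc)
    have hpb' : I p b' := by
      have : p ∈ {x : P | I x b'} := heq ▸ hp
      exact this
    obtain ⟨g, hg1, hg2⟩ := hconc b b' b c hbb hbc ⟨p, hp, hpb'⟩ ⟨p, hp, hpc⟩
    have : {x : P | I x c} = {x : P | I x b} := by
      rw [← hg2, hsetP, ← heq, ← hsetP, hg1]
    exact hr (this ▸ hrc : r ∈ {x : P | I x b})
  · -- no repeated points
    intro p p' hpp heq
    -- all distinct points have equal block sets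
    have hall : ∀ q q' : P, q ≠ q' → {b : B | I q b} = {b : B | I q' b} := by
      intro q q' hqq
      obtain ⟨g, hg1, hg2⟩ := hpt p p' q q' hpp hqq
      rw [← hg1, ← hg2, hsetB, hsetB, heq]
    -- there is another point
    have h1 : 1 < Nat.card P := by rw [hv]; omega
    have : Nontrivial P := Finite.one_lt_card_iff_nontrivial.mp (by simpa using h1)
    obtain ⟨q, hq⟩ := exists_ne p
    obtain ⟨c, hpc, hqc⟩ := hblock p q (Ne.symm hq)
    have hallc : ∀ x : P, I x c := by
      intro x
      rcases eq_or_ne x p with rfl | hxp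
      · exact hpc
      · have := hall p x (Ne.symm hxp)
        exact (this ▸ hpc : c ∈ {b : B | I x b})
    have : Nat.card {x : P // I x c} = Nat.card P :=
      Nat.card_congr (Equiv.subtypeUnivEquiv hallc)
    rw [hkb c, hv] at this
    omega
end

section
/- Let D be a non-trivial 2-(v,k,λ) design and G ≤ Aut(D). The following are equivalent: (i) D is G-pairwise transitive; (ii) G^P is 2-transitive, G^B is either 2-transitive or transitive of rank 3 with some pair of blocks incident with no common point, and the stabiliser G_p has exactly two orbits on B for every point p; (iii) G^P is 2-transitive, G^B is either 2-transitive or transitive of rank 3 with some pair of blocks incident with no common point, and the stabiliser G_b has exactly two orbits on P for every block b. -/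
set_option linter.unusedSectionVars false
set_option maxHeartbeats 1000000

open MulAction


/-- The action of `G` on `X` is 2-transitive. -/
def IsDoublyTransitive (G X : Type*) [Group G] [MulAction G X] : Prop :=
  ∀ x₁ x₂ y₁ y₂ : X, x₁ ≠ x₂ → y₁ ≠ y₂ → ∃ g : G, g • x₁ = y₁ ∧ g • x₂ = y₂

/-- The permutation group induced by `G` on `X` is transitive of rank `n`:
a point stabiliser has exactly `n` orbits on `X`. -/
def HasRank (G X : Type*) [Group G] [MulAction G X] (n : ℕ) : Prop :=
  MulAction.IsPretransitive G X ∧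
    ∀ x : X, Nat.card (Quotient (MulAction.orbitRel (MulAction.stabilizer G x) X)) = n

lemma orbit_classes {H X : Type*} [Group H] [MulAction H X] [Finite X] {n : ℕ} (c : X → Fin n)
    (hinv : ∀ (h : H) (x : X), c (h • x) = c x)
    (hsurj : Function.Surjective c) :
    Nat.card (Quotient (orbitRel H X)) = n ↔
      ∀ x y : X, c x = c y → ∃ h : H, h • x = y := by
  have hwd : ∀ x y : X, orbitRel H X x y → c x = c y := by
    intro x y hxy
    rw [orbitRel_apply] at hxy
    obtain ⟨h, rfl⟩ := hxy
    exact hinv h y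
  set f : Quotient (orbitRel H X) → Fin n := Quotient.lift c hwd with hf
  have hfs : Function.Surjective f := fun i => by
    obtain ⟨x, hx⟩ := hsurj i
    exact ⟨⟦x⟧, hx⟩
  constructor
  · intro hcard x y hxy
    have hbij : Function.Bijective f := by
      rw [Nat.bijective_iff_surjective_and_card]
      exact ⟨hfs, by simpa using hcard⟩
    have h2 : (⟦x⟧ : Quotient (orbitRel H X)) = ⟦y⟧ := hbij.1 hxy
    have hrel : (orbitRel H X) x y := Quotient.exact h2
    obtain ⟨h, hh⟩ := orbitRel_apply.mp hrel
    exact ⟨h⁻¹, by rw [← hh]; simp⟩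
  · intro hfib
    have hinj : Function.Injective f := by
      intro a b
      induction a using Quotient.inductionOn with
      | h x =>
      induction b using Quotient.inductionOn with
      | h y =>
      intro hxy
      obtain ⟨h, hh⟩ := hfib x y hxy
      exact Quotient.sound (orbitRel_apply.mpr ⟨h⁻¹, by rw [← hh]; simp⟩)
    have : Nat.card (Quotient (orbitRel H X)) = Nat.card (Fin n) :=
      Nat.card_eq_of_bijective f ⟨hinj, hfs⟩
    simpa using this

section Design
variable {P B : Type*} [Finite P] [Finite B] {I : P → B → Prop} {v k l : ℕ}

lemma design_block_two_points (hD : Is2Design I v k l) (b : B) :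
    ∃ p q : P, p ≠ q ∧ I p b ∧ I q b := by
  have h := hD.2.2.1 b
  have h2 := hD.2.1
  have : Nontrivial {p : P // I p b} := by
    rw [← Finite.one_lt_card_iff_nontrivial, h]; omega
  obtain ⟨⟨p, hp⟩, ⟨q, hq⟩, hne⟩ := this
  exact ⟨p, q, by simpa using hne, hp, hq⟩

lemma design_block_point (hD : Is2Design I v k l) (b : B) : ∃ p : P, I p b := by
  obtain ⟨p, _, _, hp, _⟩ := design_block_two_points hD b
  exact ⟨p, hp⟩

lemma design_l_pos [Nonempty B] (hD : Is2Design I v k l) : 1 ≤ l := by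
  obtain ⟨b⟩ := ‹Nonempty B›
  obtain ⟨p, q, hne, hp, hq⟩ := design_block_two_points hD b
  have h := hD.2.2.2 p q hne
  have : 0 < Nat.card {b : B // I p b ∧ I q b} :=
    @Nat.card_pos _ ⟨⟨b, hp, hq⟩⟩ _
  omega

lemma design_pair_block [Nonempty B] (hD : Is2Design I v k l) {p q : P} (h : p ≠ q) :
    ∃ b : B, I p b ∧ I q b := by
  have hc := hD.2.2.2 p q h
  have hl := design_l_pos hD
  have hpos : 0 < Nat.card {b : B // I p b ∧ I q b} := by omega
  have : Nonempty {b : B // I p b ∧ I q b} := (Nat.card_pos_iff.mp hpos).1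
  obtain ⟨⟨b, hb⟩⟩ := this
  exact ⟨b, hb⟩

lemma design_nontrivialP (hD : Is2Design I v k l) (hnt : 2 < k ∧ k < v) : Nontrivial P := by
  rw [← Finite.one_lt_card_iff_nontrivial, hD.1]; omega

lemma design_point_off_block (hD : Is2Design I v k l) (hkv : k < v) (b : B) :
    ∃ p : P, ¬ I p b := by
  by_contra h
  push_neg at h
  have : Nat.card {p : P // I p b} = Nat.card P :=
    Nat.card_congr (Equiv.subtypeUnivEquiv h)
  rw [hD.2.2.1 b, hD.1] at this
  omega

lemma design_point_on_some [Nonempty B] (hD : Is2Design I v k l) (hnt : 2 < k ∧ k < v)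
    (p : P) : ∃ b : B, I p b := by
  have := design_nontrivialP hD hnt
  obtain ⟨q, hq⟩ := exists_ne p
  obtain ⟨b, hb⟩ := design_pair_block hD hq.symm
  exact ⟨b, hb.1⟩

lemma design_ncard_pair [Nonempty B] (hD : Is2Design I v k l) {p q : P} (h : p ≠ q) :
    ({b : B | I p b ∧ I q b}).ncard = l := by
  rw [← Nat.card_coe_set_eq]
  exact hD.2.2.2 p q h

lemma design_point_off_some [Nonempty B] (hD : Is2Design I v k l) (hnt : 2 < k ∧ k < v)
    (p : P) : ∃ b : B, ¬ I p b := by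
  by_contra hall
  push_neg at hall
  have hNT := design_nontrivialP hD hnt
  -- for any x ≠ p, y ≠ p, x ≠ y : blocks{p,x} = blocks{x,y} = blocks{p,y}
  have key : ∀ x y : P, x ≠ p → y ≠ p → x ≠ y →
      {b : B | I p b ∧ I x b} = {b : B | I p b ∧ I y b} := by
    intro x y hx hy hxy
    have h1 : {b : B | I x b ∧ I y b} ⊆ {b : B | I p b ∧ I x b} :=
      fun b hb => ⟨hall b, hb.1⟩
    have h2 : {b : B | I x b ∧ I y b} ⊆ {b : B | I p b ∧ I y b} :=
      fun b hb => ⟨hall b, hb.2⟩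
    have e1 : {b : B | I x b ∧ I y b} = {b : B | I p b ∧ I x b} :=
      Set.eq_of_subset_of_ncard_le h1
        (by rw [design_ncard_pair hD hxy, design_ncard_pair hD (Ne.symm hx)]) (Set.toFinite _)
    have e2 : {b : B | I x b ∧ I y b} = {b : B | I p b ∧ I y b} :=
      Set.eq_of_subset_of_ncard_le h2
        (by rw [design_ncard_pair hD hxy, design_ncard_pair hD (Ne.symm hy)]) (Set.toFinite _)
    rw [← e1, e2]
  obtain ⟨q, hq⟩ := exists_ne p
  obtain ⟨b₀, hb₀⟩ := design_pair_block hD (Ne.symm hq)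
  have hallpt : ∀ a : P, I a b₀ := by
    intro a
    by_cases hap : a = p
    · exact hap ▸ hall b₀
    by_cases haq : a = q
    · exact haq ▸ hb₀.2
    have := key q a hq hap (fun h => haq h.symm)
    have hb₀' : b₀ ∈ {b : B | I p b ∧ I a b} := this ▸ hb₀
    exact hb₀'.2
  have : Nat.card {p' : P // I p' b₀} = Nat.card P :=
    Nat.card_congr (Equiv.subtypeUnivEquiv hallpt)
  rw [hD.2.2.1 b₀, hD.1] at this
  omega

lemma design_meeting_block [Nonempty B] (hD : Is2Design I v k l) (hnt : 2 < k ∧ k < v)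
    (b : B) : ∃ b' : B, b' ≠ b ∧ ∃ p, I p b ∧ I p b' := by
  obtain ⟨p, hp⟩ := design_block_point hD b
  obtain ⟨q, hq⟩ := design_point_off_block hD hnt.2 b
  have hpq : p ≠ q := fun h => hq (h ▸ hp)
  obtain ⟨b', hb'⟩ := design_pair_block hD hpq
  exact ⟨b', fun h => hq (h ▸ hb'.2), p, hp, hb'.1⟩

end Design

section Main
variable {P B G : Type*} [Finite P] [Finite B] [Nonempty P] [Nonempty B]
  [Group G] [MulAction G P] [MulAction G B]
  {I : P → B → Prop} {v k l : ℕ}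

lemma stabP_orbits (hD : Is2Design I v k l) (hnt : 2 < k ∧ k < v)
    (hGI : ∀ (g : G) (p : P) (b : B), I p b ↔ I (g • p) (g • b)) (p : P) :
    Nat.card (Quotient (orbitRel (stabilizer G p) B)) = 2 ↔
      ∀ b b' : B, (I p b ↔ I p b') → ∃ g : G, g • p = p ∧ g • b = b' := by
  classical
  set c : B → Fin 2 := fun b => if I p b then 0 else 1 with hc
  have hinv : ∀ (h : stabilizer G p) (b : B), c (h • b) = c b := by
    intro h b
    have hpfix : (h : G) • p = p := h.prop
    have hiff : I p ((h : G) • b) ↔ I p b := by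
      have := hGI (h : G) p b
      rw [hpfix] at this
      exact this.symm
    simp only [hc, Subgroup.smul_def]
    exact if_congr hiff rfl rfl
  have hsurj : Function.Surjective c := by
    intro i
    fin_cases i
    · obtain ⟨b, hb⟩ := design_point_on_some hD hnt p
      exact ⟨b, by simp [hc, hb]⟩
    · obtain ⟨b, hb⟩ := design_point_off_some hD hnt p
      exact ⟨b, by simp [hc, hb]⟩
  rw [orbit_classes c hinv hsurj]
  constructor
  · intro H b b' hiff
    have hcc : c b = c b' := by
      simp only [hc]; exact if_congr hiff rfl rfl
    obtain ⟨⟨g, hg⟩, hgb⟩ := H b b' hcc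
    exact ⟨g, hg, by simpa [Subgroup.smul_def] using hgb⟩
  · intro H b b' hcc
    have hiff : I p b ↔ I p b' := by
      by_cases h1 : I p b <;> by_cases h2 : I p b' <;>
        [skip; skip; skip; skip] <;>
      first
        | exact iff_of_true h1 h2
        | exact iff_of_false h1 h2
        | (exfalso; simp only [hc, if_pos, if_neg, h1, h2, if_true, if_false] at hcc
           revert hcc; decide)
    obtain ⟨g, hg1, hg2⟩ := H b b' hiff
    exact ⟨⟨g, mem_stabilizer_iff.mpr hg1⟩, by simpa [Subgroup.smul_def] using hg2⟩

lemma stabB_orbits (hD : Is2Design I v k l) (hnt : 2 < k ∧ k < v)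
    (hGI : ∀ (g : G) (p : P) (b : B), I p b ↔ I (g • p) (g • b)) (b : B) :
    Nat.card (Quotient (orbitRel (stabilizer G b) P)) = 2 ↔
      ∀ p p' : P, (I p b ↔ I p' b) → ∃ g : G, g • b = b ∧ g • p = p' := by
  classical
  set c : P → Fin 2 := fun p => if I p b then 0 else 1 with hc
  have hinv : ∀ (h : stabilizer G b) (p : P), c (h • p) = c p := by
    intro h q
    have hbfix : (h : G) • b = b := h.prop
    have hiff : I ((h : G) • q) b ↔ I q b := by
      have := hGI (h : G) q b
      rw [hbfix] at this
      exact this.symm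
    simp only [hc, Subgroup.smul_def]
    exact if_congr hiff rfl rfl
  have hsurj : Function.Surjective c := by
    intro i
    fin_cases i
    · obtain ⟨q, hq⟩ := design_block_point hD b
      exact ⟨q, by simp [hc, hq]⟩
    · obtain ⟨q, hq⟩ := design_point_off_block hD hnt.2 b
      exact ⟨q, by simp [hc, hq]⟩
  rw [orbit_classes c hinv hsurj]
  constructor
  · intro H q q' hiff
    have hcc : c q = c q' := by
      simp only [hc]; exact if_congr hiff rfl rfl
    obtain ⟨⟨g, hg⟩, hgq⟩ := H q q' hcc
    exact ⟨g, hg, by simpa [Subgroup.smul_def] using hgq⟩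
  · intro H q q' hcc
    have hiff : I q b ↔ I q' b := by
      by_cases h1 : I q b <;> by_cases h2 : I q' b <;>
      first
        | exact iff_of_true h1 h2
        | exact iff_of_false h1 h2
        | (exfalso; simp only [hc, if_pos, if_neg, h1, h2, if_true, if_false] at hcc
           revert hcc; decide)
    obtain ⟨g, hg1, hg2⟩ := H q q' hiff
    exact ⟨⟨g, mem_stabilizer_iff.mpr hg1⟩, by simpa [Subgroup.smul_def] using hg2⟩

lemma stabB_orbits3 (hD : Is2Design I v k l) (hnt : 2 < k ∧ k < v)
    (hGI : ∀ (g : G) (p : P) (b : B), I p b ↔ I (g • p) (g • b)) (b : B)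
    (hdis : ∃ b' : B, ¬ ∃ p, I p b ∧ I p b') :
    Nat.card (Quotient (orbitRel (stabilizer G b) B)) = 3 ↔
      ((∀ b₁ b₂ : B, b₁ ≠ b → b₂ ≠ b → (∃ p, I p b ∧ I p b₁) → (∃ p, I p b ∧ I p b₂) →
          ∃ g : G, g • b = b ∧ g • b₁ = b₂) ∧
        (∀ b₁ b₂ : B, (¬ ∃ p, I p b ∧ I p b₁) → (¬ ∃ p, I p b ∧ I p b₂) →
          ∃ g : G, g • b = b ∧ g • b₁ = b₂)) := by
  classical
  have hmei : ∀ (g : G) (b₁ b₂ : B), (∃ p, I p b₁ ∧ I p b₂) →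
      ∃ p, I p (g • b₁) ∧ I p (g • b₂) := by
    rintro g b₁ b₂ ⟨q, h1, h2⟩
    exact ⟨g • q, (hGI g q b₁).mp h1, (hGI g q b₂).mp h2⟩
  set c : B → Fin 3 := fun b' => if b' = b then 0 else if ∃ p, I p b ∧ I p b' then 1 else 2
    with hc
  have hinv : ∀ (h : stabilizer G b) (b' : B), c (h • b') = c b' := by
    intro h b'
    have hbfix : (h : G) • b = b := h.prop
    have h1 : ((h : G) • b' = b) ↔ (b' = b) :=
      ⟨fun hh => smul_left_cancel _ (hh.trans hbfix.symm),
       fun hh => by rw [hh, hbfix]⟩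
    have h2 : (∃ p, I p b ∧ I p ((h : G) • b')) ↔ (∃ p, I p b ∧ I p b') := by
      constructor
      · intro hx
        have := hmei (h : G)⁻¹ b ((h : G) • b') hx
        simpa [inv_smul_smul, inv_smul_eq_iff.mpr hbfix.symm] using this
      · intro hx
        have := hmei (h : G) b b' hx
        simpa [hbfix] using this
    simp only [hc, Subgroup.smul_def]
    exact if_congr h1 rfl (if_congr h2 rfl rfl)
  have hsurj : Function.Surjective c := by
    intro i
    fin_cases i
    · exact ⟨b, by simp [hc]⟩
    · obtain ⟨b', hne, hp⟩ := design_meeting_block hD hnt b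
      exact ⟨b', by simp only [hc]; rw [if_neg hne, if_pos (by tauto)]; rfl⟩
    · obtain ⟨b', hb'⟩ := hdis
      have hne : b' ≠ b := by
        rintro rfl
        obtain ⟨q, hq⟩ := design_block_point hD b'
        exact hb' ⟨q, hq, hq⟩
      exact ⟨b', by simp only [hc]; rw [if_neg hne, if_neg hb']; rfl⟩
  rw [orbit_classes c hinv hsurj]
  constructor
  · intro H
    constructor
    · intro b₁ b₂ hne1 hne2 hm1 hm2
      have hcc : c b₁ = c b₂ := by
        simp only [hc]; rw [if_neg hne1, if_neg hne2, if_pos hm1, if_pos hm2]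
      obtain ⟨⟨g, hg⟩, hgb⟩ := H b₁ b₂ hcc
      exact ⟨g, hg, by simpa [Subgroup.smul_def] using hgb⟩
    · intro b₁ b₂ hm1 hm2
      have hne1 : b₁ ≠ b := by
        rintro rfl
        obtain ⟨q, hq⟩ := design_block_point hD b₁
        exact hm1 ⟨q, hq, hq⟩
      have hne2 : b₂ ≠ b := by
        rintro rfl
        obtain ⟨q, hq⟩ := design_block_point hD b₂
        exact hm2 ⟨q, hq, hq⟩
      have hcc : c b₁ = c b₂ := by
        simp only [hc]; rw [if_neg hne1, if_neg hne2, if_neg hm1, if_neg hm2]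
      obtain ⟨⟨g, hg⟩, hgb⟩ := H b₁ b₂ hcc
      exact ⟨g, hg, by simpa [Subgroup.smul_def] using hgb⟩
  · rintro ⟨H1, H2⟩ b₁ b₂ hcc
    by_cases he1 : b₁ = b
    · have he2 : b₂ = b := by
        by_contra he2
        by_cases hm2 : ∃ p, I p b ∧ I p b₂ <;>
          simp [hc, he1, he2, hm2] at hcc
      subst he1; subst he2
      exact ⟨1, one_smul _ _⟩
    by_cases hm1 : ∃ p, I p b ∧ I p b₁
    · have he2 : b₂ ≠ b := by
        rintro rfl
        simp [hc, he1, hm1] at hcc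
      have hm2 : ∃ p, I p b ∧ I p b₂ := by
        by_contra hm2
        simp [hc, he1, he2, hm1, hm2] at hcc
      obtain ⟨g, hg1, hg2⟩ := H1 b₁ b₂ he1 he2 hm1 hm2
      exact ⟨⟨g, mem_stabilizer_iff.mpr hg1⟩, by simpa [Subgroup.smul_def] using hg2⟩
    · have he2 : b₂ ≠ b := by
        rintro rfl
        simp [hc, he1, hm1] at hcc
      have hm2 : ¬ ∃ p, I p b ∧ I p b₂ := by
        intro hm2
        simp [hc, he1, he2, hm1, hm2] at hcc
      obtain ⟨g, hg1, hg2⟩ := H2 b₁ b₂ hm1 hm2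
      exact ⟨⟨g, mem_stabilizer_iff.mpr hg1⟩, by simpa [Subgroup.smul_def] using hg2⟩

end Main

/-- For a non-trivial 2-design and `G ≤ Aut(D)`, the following are equivalent:
(i) `D` is `G`-pairwise transitive;
(ii) `G` is 2-transitive on points, `G` is 2-transitive on blocks or has rank 3 on
blocks with some pair of blocks having no common point, and every point stabiliser
has exactly two orbits on blocks;
(iii) as (ii) but with every block stabiliser having exactly two orbits on points. -/
theorem pairwise_transitive_tfae
    {P B G : Type*} [Finite P] [Finite B] [Nonempty P] [Nonempty B]
    [Group G] [MulAction G P] [MulAction G B]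
    (I : P → B → Prop) (v k l : ℕ)
    (hD : Is2Design I v k l) (hnt : 2 < k ∧ k < v)
    (hGI : ∀ (g : G) (p : P) (b : B), I p b ↔ I (g • p) (g • b))
    (hfaith : ∀ g : G, (∀ p : P, g • p = p) → (∀ b : B, g • b = b) → g = 1) :
    (PairwiseTransitive G I ↔
      (IsDoublyTransitive G P ∧
       (IsDoublyTransitive G B ∨
         (HasRank G B 3 ∧ ∃ b₁ b₂ : B, b₁ ≠ b₂ ∧ ¬ ∃ p, I p b₁ ∧ I p b₂)) ∧
       ∀ p : P, Nat.card (Quotient (MulAction.orbitRel (MulAction.stabilizer G p) B)) = 2)) ∧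
    (PairwiseTransitive G I ↔
      (IsDoublyTransitive G P ∧
       (IsDoublyTransitive G B ∨
         (HasRank G B 3 ∧ ∃ b₁ b₂ : B, b₁ ≠ b₂ ∧ ¬ ∃ p, I p b₁ ∧ I p b₂)) ∧
       ∀ b : B, Nat.card (Quotient (MulAction.orbitRel (MulAction.stabilizer G b) P)) = 2)) := by
  classical
  have hmei : ∀ (g : G) (b₁ b₂ : B), (∃ p, I p b₁ ∧ I p b₂) →
      ∃ p, I p (g • b₁) ∧ I p (g • b₂) := by
    rintro g b₁ b₂ ⟨q, h1, h2⟩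
    exact ⟨g • q, (hGI g q b₁).mp h1, (hGI g q b₂).mp h2⟩
  have hmei' : ∀ (g : G) (b₁ b₂ : B), (¬ ∃ p, I p b₁ ∧ I p b₂) →
      ¬ ∃ p, I p (g • b₁) ∧ I p (g • b₂) := by
    intro g b₁ b₂ h hx
    exact h (by simpa [inv_smul_smul] using hmei g⁻¹ _ _ hx)
  -- (i) implies the common block condition
  have hBlkCommon : PairwiseTransitive G I →
      (IsDoublyTransitive G B ∨
        (HasRank G B 3 ∧ ∃ b₁ b₂ : B, b₁ ≠ b₂ ∧ ¬ ∃ p, I p b₁ ∧ I p b₂)) := by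
    intro hPT
    by_cases hdis : ∃ b₁ b₂ : B, ¬ ∃ p, I p b₁ ∧ I p b₂
    · right
      obtain ⟨d₁, d₂, hd⟩ := hdis
      have hdne : d₁ ≠ d₂ := by
        rintro rfl
        obtain ⟨q, hq⟩ := design_block_point hD d₁
        exact hd ⟨q, hq, hq⟩
      have htransB : ∀ b b' : B, ∃ g : G, g • b = b' := by
        intro b b'
        obtain ⟨q, hq⟩ := design_block_point hD b
        obtain ⟨q', hq'⟩ := design_block_point hD b'
        obtain ⟨g, _, hg⟩ := hPT.2.1 q q' b b' hq hq'
        exact ⟨g, hg⟩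
      refine ⟨⟨⟨fun b b' => htransB b b'⟩, ?_⟩, d₁, d₂, hdne, hd⟩
      intro b
      have hdisb : ∃ b' : B, ¬ ∃ p, I p b ∧ I p b' := by
        obtain ⟨g, hg⟩ := htransB d₁ b
        exact ⟨g • d₂, hg ▸ hmei' g d₁ d₂ hd⟩
      rw [stabB_orbits3 hD hnt hGI b hdisb]
      constructor
      · intro b₁ b₂ hne1 hne2 hm1 hm2
        exact hPT.2.2.2.1 b b₁ b b₂ (Ne.symm hne1) (Ne.symm hne2) hm1 hm2
      · intro b₁ b₂ hm1 hm2
        exact hPT.2.2.2.2 b b₁ b b₂ hm1 hm2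
    · left
      push_neg at hdis
      intro b₁ b₂ c₁ c₂ hne hne'
      exact hPT.2.2.2.1 b₁ b₂ c₁ c₂ hne hne' (hdis b₁ b₂) (hdis c₁ c₂)
  -- the common block condition implies items 4 and 5 and transitivity on blocks
  have hblkPT : (IsDoublyTransitive G B ∨
        (HasRank G B 3 ∧ ∃ b₁ b₂ : B, b₁ ≠ b₂ ∧ ¬ ∃ p, I p b₁ ∧ I p b₂)) →
      ((∀ b₁ b₂ b₁' b₂' : B, b₁ ≠ b₂ → b₁' ≠ b₂' → (∃ p, I p b₁ ∧ I p b₂) →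
          (∃ p, I p b₁' ∧ I p b₂') → ∃ g : G, g • b₁ = b₁' ∧ g • b₂ = b₂') ∧
       (∀ b₁ b₂ b₁' b₂' : B, (¬ ∃ p, I p b₁ ∧ I p b₂) → (¬ ∃ p, I p b₁' ∧ I p b₂') →
          ∃ g : G, g • b₁ = b₁' ∧ g • b₂ = b₂')) ∧ (∀ b b' : B, ∃ g : G, g • b = b') := by
    intro hblk
    rcases hblk with h2B | ⟨⟨hpre, hcard⟩, d₁, d₂, hdne, hd⟩
    · have htransB : ∀ b b' : B, ∃ g : G, g • b = b' := by
        intro b b'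
        by_cases h : b = b'
        · exact ⟨1, by rw [one_smul, h]⟩
        · obtain ⟨g, hg, _⟩ := h2B b b' b' b h (Ne.symm h)
          exact ⟨g, hg⟩
      refine ⟨⟨?_, ?_⟩, htransB⟩
      · intro b₁ b₂ b₁' b₂' hne hne' _ _
        exact h2B b₁ b₂ b₁' b₂' hne hne'
      · intro b₁ b₂ b₁' b₂' hm hm'
        have hne : b₁ ≠ b₂ := by
          rintro rfl
          obtain ⟨q, hq⟩ := design_block_point hD b₁
          exact hm ⟨q, hq, hq⟩
        have hne' : b₁' ≠ b₂' := by
          rintro rfl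
          obtain ⟨q, hq⟩ := design_block_point hD b₁'
          exact hm' ⟨q, hq, hq⟩
        exact h2B b₁ b₂ b₁' b₂' hne hne'
    · have htransB : ∀ b b' : B, ∃ g : G, g • b = b' := hpre.exists_smul_eq
      have hcrit : ∀ b : B,
          (∀ b₁ b₂ : B, b₁ ≠ b → b₂ ≠ b → (∃ p, I p b ∧ I p b₁) → (∃ p, I p b ∧ I p b₂) →
            ∃ g : G, g • b = b ∧ g • b₁ = b₂) ∧
          (∀ b₁ b₂ : B, (¬ ∃ p, I p b ∧ I p b₁) → (¬ ∃ p, I p b ∧ I p b₂) →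
            ∃ g : G, g • b = b ∧ g • b₁ = b₂) := by
        intro b
        have hdisb : ∃ b' : B, ¬ ∃ p, I p b ∧ I p b' := by
          obtain ⟨g, hg⟩ := htransB d₁ b
          exact ⟨g • d₂, hg ▸ hmei' g d₁ d₂ hd⟩
        exact (stabB_orbits3 hD hnt hGI b hdisb).mp (hcard b)
      refine ⟨⟨?_, ?_⟩, htransB⟩
      · intro b₁ b₂ b₁' b₂' hne hne' hm hm'
        obtain ⟨g₁, hg₁⟩ := htransB b₁ b₁'
        have hm₁ : ∃ p, I p b₁' ∧ I p (g₁ • b₂) := by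
          have := hmei g₁ b₁ b₂ hm; rwa [hg₁] at this
        have hne₁ : g₁ • b₂ ≠ b₁' := by
          intro h
          exact hne (smul_left_cancel g₁ (h.trans hg₁.symm)).symm
        obtain ⟨g₂, hg₂b, hg₂⟩ := (hcrit b₁').1 (g₁ • b₂) b₂' hne₁ (Ne.symm hne') hm₁ hm'
        exact ⟨g₂ * g₁, by rw [mul_smul, hg₁, hg₂b], by rw [mul_smul, hg₂]⟩
      · intro b₁ b₂ b₁' b₂' hm hm'
        obtain ⟨g₁, hg₁⟩ := htransB b₁ b₁'
        have hm₁ : ¬ ∃ p, I p b₁' ∧ I p (g₁ • b₂) := by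
          have := hmei' g₁ b₁ b₂ hm; rwa [hg₁] at this
        obtain ⟨g₂, hg₂b, hg₂⟩ := (hcrit b₁').2 (g₁ • b₂) b₂' hm₁ hm'
        exact ⟨g₂ * g₁, by rw [mul_smul, hg₁, hg₂b], by rw [mul_smul, hg₂]⟩
  -- forward: stabiliser orbit counts
  have hfwd_ii : PairwiseTransitive G I → ∀ p : P,
      Nat.card (Quotient (orbitRel (stabilizer G p) B)) = 2 := by
    intro hPT p
    rw [stabP_orbits hD hnt hGI p]
    intro b b' hiff
    by_cases h : I p b
    · exact hPT.2.1 p p b b' h (hiff.mp h)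
    · exact hPT.2.2.1 p p b b' h (fun hx => h (hiff.mpr hx))
  have hfwd_iii : PairwiseTransitive G I → ∀ b : B,
      Nat.card (Quotient (orbitRel (stabilizer G b) P)) = 2 := by
    intro hPT b
    rw [stabB_orbits hD hnt hGI b]
    intro q q' hiff
    by_cases h : I q b
    · obtain ⟨g, h1, h2⟩ := hPT.2.1 q q' b b h (hiff.mp h)
      exact ⟨g, h2, h1⟩
    · obtain ⟨g, h1, h2⟩ := hPT.2.2.1 q q' b b h (fun hx => h (hiff.mpr hx))
      exact ⟨g, h2, h1⟩
  -- backward directions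
  have hbwd_ii : (IsDoublyTransitive G P ∧
      (IsDoublyTransitive G B ∨
        (HasRank G B 3 ∧ ∃ b₁ b₂ : B, b₁ ≠ b₂ ∧ ¬ ∃ p, I p b₁ ∧ I p b₂)) ∧
      (∀ p : P, Nat.card (Quotient (orbitRel (stabilizer G p) B)) = 2)) →
      PairwiseTransitive G I := by
    rintro ⟨h2P, hblk, horb⟩
    obtain ⟨⟨hitem4, hitem5⟩, htransB⟩ := hblkPT hblk
    have htransP : ∀ p p' : P, ∃ g : G, g • p = p' := by
      intro p p'
      by_cases h : p = p'
      · exact ⟨1, by rw [one_smul, h]⟩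
      · obtain ⟨g, hg, _⟩ := h2P p p' p' p h (Ne.symm h)
        exact ⟨g, hg⟩
    refine ⟨h2P, ?_, ?_, hitem4, hitem5⟩
    · intro p p' b b' hpb hp'b'
      obtain ⟨g₁, hg₁⟩ := htransP p p'
      have h1 : I p' (g₁ • b) := by rw [← hg₁]; exact (hGI g₁ p b).mp hpb
      obtain ⟨g₂, hg₂p, hg₂⟩ := (stabP_orbits hD hnt hGI p').mp (horb p')
        (g₁ • b) b' (iff_of_true h1 hp'b')
      exact ⟨g₂ * g₁, by rw [mul_smul, hg₁, hg₂p], by rw [mul_smul, hg₂]⟩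
    · intro p p' b b' hpb hp'b'
      obtain ⟨g₁, hg₁⟩ := htransP p p'
      have h1 : ¬ I p' (g₁ • b) := by
        rw [← hg₁]; exact fun hx => hpb ((hGI g₁ p b).mpr hx)
      obtain ⟨g₂, hg₂p, hg₂⟩ := (stabP_orbits hD hnt hGI p').mp (horb p')
        (g₁ • b) b' (iff_of_false h1 hp'b')
      exact ⟨g₂ * g₁, by rw [mul_smul, hg₁, hg₂p], by rw [mul_smul, hg₂]⟩
  have hbwd_iii : (IsDoublyTransitive G P ∧
      (IsDoublyTransitive G B ∨
        (HasRank G B 3 ∧ ∃ b₁ b₂ : B, b₁ ≠ b₂ ∧ ¬ ∃ p, I p b₁ ∧ I p b₂)) ∧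
      (∀ b : B, Nat.card (Quotient (orbitRel (stabilizer G b) P)) = 2)) →
      PairwiseTransitive G I := by
    rintro ⟨h2P, hblk, horb⟩
    obtain ⟨⟨hitem4, hitem5⟩, htransB⟩ := hblkPT hblk
    refine ⟨h2P, ?_, ?_, hitem4, hitem5⟩
    · intro p p' b b' hpb hp'b'
      obtain ⟨g₁, hg₁⟩ := htransB b b'
      have h1 : I (g₁ • p) b' := by rw [← hg₁]; exact (hGI g₁ p b).mp hpb
      obtain ⟨g₂, hg₂b, hg₂⟩ := (stabB_orbits hD hnt hGI b').mp (horb b')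
        (g₁ • p) p' (iff_of_true h1 hp'b')
      exact ⟨g₂ * g₁, by rw [mul_smul, hg₂], by rw [mul_smul, hg₁, hg₂b]⟩
    · intro p p' b b' hpb hp'b'
      obtain ⟨g₁, hg₁⟩ := htransB b b'
      have h1 : ¬ I (g₁ • p) b' := by
        rw [← hg₁]; exact fun hx => hpb ((hGI g₁ p b).mpr hx)
      obtain ⟨g₂, hg₂b, hg₂⟩ := (stabB_orbits hD hnt hGI b').mp (horb b')
        (g₁ • p) p' (iff_of_false h1 hp'b')
      exact ⟨g₂ * g₁, by rw [mul_smul, hg₂], by rw [mul_smul, hg₁, hg₂b]⟩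
  constructor
  · exact ⟨fun hPT => ⟨hPT.1, hBlkCommon hPT, hfwd_ii hPT⟩, hbwd_ii⟩
  · exact ⟨fun hPT => ⟨hPT.1, hBlkCommon hPT, hfwd_iii hPT⟩, hbwd_iii⟩
end

section
/- Let D be a non-trivial symmetric 2-(v,k,λ) design and G ≤ Aut(D). Then D is G-pairwise transitive if and only if the induced permutation group G^P on points is 2-transitive. -/
open Finset

section DesignCount
variable {P B : Type*} [Fintype P] [Fintype B] {I : P → B → Prop} {v k l : ℕ}

lemma design_basic [Nonempty P] [Nonempty B]
    (hD : Is2Design I v k l) (hk2 : 2 < k) (hkv : k < v)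
    (hB : Fintype.card B = v) :
    (∀ p : P, Nat.card {b : B // I p b} = k) ∧ 1 ≤ l ∧ l < k := by
  classical
  obtain ⟨hv, _hk, hblock, hpair⟩ := hD
  have hvP : Fintype.card P = v := by rw [← Nat.card_eq_fintype_card]; exact hv
  have hbk : ∀ b : B, (univ.filter fun q : P => I q b).card = k := fun b => by
    rw [← Fintype.card_subtype, ← Nat.card_eq_fintype_card]; exact hblock b
  set Np : P → ℕ := fun p => (univ.filter fun b : B => I p b).card with hNp
  -- step 1
  have step1 : ∀ p : P, Np p * (k - 1) = (v - 1) * l := by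
    intro p
    have hsum : ∑ b : B, ∑ q : P, (if I p b ∧ I q b ∧ q ≠ p then 1 else 0)
        = ∑ q : P, ∑ b : B, (if I p b ∧ I q b ∧ q ≠ p then 1 else 0) :=
      Finset.sum_comm
    have lhs : ∑ b : B, ∑ q : P, (if I p b ∧ I q b ∧ q ≠ p then 1 else 0)
        = Np p * (k - 1) := by
      have h1 : ∀ b : B, (∑ q : P, if I p b ∧ I q b ∧ q ≠ p then 1 else 0)
          = if I p b then k - 1 else 0 := by
        intro b
        rw [← Finset.card_filter]
        by_cases h : I p b
        · have : (univ.filter fun q : P => I p b ∧ I q b ∧ q ≠ p)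
              = (univ.filter fun q : P => I q b).erase p := by
            ext q; simp [h, and_comm, eq_comm]
          rw [this, Finset.card_erase_of_mem (by simp [h]), hbk b, if_pos h]
        · have : (univ.filter fun q : P => I p b ∧ I q b ∧ q ≠ p) = ∅ := by
            apply Finset.filter_false_of_mem; intro x _; simp [h]
          rw [this, if_neg h]; simp
      rw [Finset.sum_congr rfl fun b _ => h1 b, ← Finset.sum_filter]
      simp [hNp, mul_comm]
    have rhs : ∑ q : P, ∑ b : B, (if I p b ∧ I q b ∧ q ≠ p then 1 else 0)
        = (v - 1) * l := by
      have h1 : ∀ q : P, (∑ b : B, if I p b ∧ I q b ∧ q ≠ p then 1 else 0)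
          = if q ≠ p then l else 0 := by
        intro q
        rw [← Finset.card_filter]
        by_cases h : q = p
        · subst h
          have : (univ.filter fun b : B => I q b ∧ I q b ∧ q ≠ q) = ∅ := by
            apply Finset.filter_false_of_mem; intro x _; simp
          rw [this]; simp
        · have : (univ.filter fun b : B => I p b ∧ I q b ∧ q ≠ p)
              = (univ.filter fun b : B => I p b ∧ I q b) := by
            ext b; simp [h]
          rw [this, if_pos h, ← Fintype.card_subtype, ← Nat.card_eq_fintype_card]
          exact hpair p q (Ne.symm h)
      rw [Finset.sum_congr rfl fun q _ => h1 q, ← Finset.sum_filter]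
      have : (univ.filter fun q : P => q ≠ p).card = v - 1 := by
        rw [Finset.filter_ne', Finset.card_erase_of_mem (Finset.mem_univ p),
          Finset.card_univ, hvP]
      simp [this, mul_comm]
    rw [← lhs, hsum, rhs]
  -- step 2 : sum of Np = v * k
  have step2 : ∑ p : P, Np p = v * k := by
    have : ∑ p : P, Np p = ∑ p : P, ∑ b : B, (if I p b then 1 else 0) := by
      apply Finset.sum_congr rfl; intro p _; rw [← Finset.card_filter]
    rw [this, Finset.sum_comm]
    have : ∀ b : B, (∑ p : P, if I p b then 1 else 0) = k := by
      intro b; rw [← Finset.card_filter]; exact hbk b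
    rw [Finset.sum_congr rfl fun b _ => this b, Finset.sum_const, Finset.card_univ,
      hB, smul_eq_mul]
  -- constancy
  have hconst : ∀ p q : P, Np p = Np q := by
    intro p q
    have := (step1 p).trans (step1 q).symm
    exact Nat.eq_of_mul_eq_mul_right (by omega) this
  obtain ⟨p0⟩ := ‹Nonempty P›
  have hNpk : ∀ p : P, Np p = k := by
    have hs : ∑ p : P, Np p = v * Np p0 := by
      rw [Finset.sum_congr rfl fun p _ => hconst p p0, Finset.sum_const,
        Finset.card_univ, hvP, smul_eq_mul]
    have : v * Np p0 = v * k := by rw [← hs, step2]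
    have h0 : Np p0 = k := Nat.eq_of_mul_eq_mul_left (by omega) this
    intro p; rw [hconst p p0, h0]
  have hr : ∀ p : P, Nat.card {b : B // I p b} = k := by
    intro p; rw [Nat.card_eq_fintype_card, Fintype.card_subtype]; exact hNpk p
  refine ⟨hr, ?_, ?_⟩
  · -- l ≥ 1
    obtain ⟨b0⟩ := ‹Nonempty B›
    have : 1 < (univ.filter fun q : P => I q b0).card := by rw [hbk b0]; omega
    obtain ⟨p, hp, q, hq, hpq⟩ := Finset.one_lt_card.mp this
    simp only [Finset.mem_filter] at hp hq
    have : b0 ∈ univ.filter fun b : B => I p b ∧ I q b := by simp [hp.2, hq.2]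
    have hcard : 0 < (univ.filter fun b : B => I p b ∧ I q b).card :=
      Finset.card_pos.mpr ⟨b0, this⟩
    have := hpair p q hpq
    rw [Nat.card_eq_fintype_card, Fintype.card_subtype] at this
    omega
  · -- l < k
    have h1 := step1 p0
    rw [hNpk p0] at h1
    by_contra hlk
    push_neg at hlk
    have h2 : k * (k - 1) < k * (v - 1) :=
      Nat.mul_lt_mul_of_le_of_lt (le_refl k) (by omega) (by omega)
    have h3 : (v - 1) * l ≥ (v - 1) * k := Nat.mul_le_mul_left _ hlk
    have h4 : k * (v - 1) = (v - 1) * k := Nat.mul_comm _ _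
    omega
end DesignCount

open Finset

section FixCount
variable {P B G : Type*} [Fintype P] [Fintype B] [Group G] [MulAction G P] [MulAction G B]

set_option maxHeartbeats 1000000 in
lemma fix_count_eq (I : P → B → Prop) (k l : ℕ) (e : B ≃ P)
    (hrk : ∀ p : P, Nat.card {b : B // I p b} = k)
    (hlam : ∀ p q : P, p ≠ q → Nat.card {b : B // I p b ∧ I q b} = l)
    (hlk : l < k)
    (hGI : ∀ (g : G) (p : P) (b : B), I p b ↔ I (g • p) (g • b))
    (g : G) :
    Nat.card {p : P // g • p = p} = Nat.card {b : B // g • b = b} := by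
  classical
  set N : ℕ := Fintype.card P with hN
  set a : ℝ := (k : ℝ) - l with ha_def
  have ha : a ≠ 0 := by
    have : (l : ℝ) < k := by exact_mod_cast hlk
    simp [ha_def]; linarith
  set t : ℝ := a + l * N with ht_def
  have ht : t ≠ 0 := by
    have h1 : (0:ℝ) < a := by
      have : (l : ℝ) < k := by exact_mod_cast hlk
      simp [ha_def]; linarith
    have h2 : (0:ℝ) ≤ (l:ℝ) * N := by positivity
    simp only [ht_def]; nlinarith
  set M : Matrix P P ℝ := Matrix.of fun p q => if I p (e.symm q) then 1 else 0 with hM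
  set J : Matrix P P ℝ := Matrix.of fun _ _ => 1 with hJ
  have hrk' : ∀ p : P, (univ.filter fun b : B => I p b).card = k := fun p => by
    rw [← Fintype.card_subtype, ← Nat.card_eq_fintype_card]; exact hrk p
  have hlam' : ∀ p q : P, p ≠ q → (univ.filter fun b : B => I p b ∧ I q b).card = l :=
    fun p q h => by
      rw [← Fintype.card_subtype, ← Nat.card_eq_fintype_card]; exact hlam p q h
  -- M * Mᵀ
  have hA : M * M.transpose = a • 1 + (l : ℝ) • J := by
    ext p q
    rw [Matrix.mul_apply]
    have hterm : ∀ x : P, M p x * M.transpose x q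
        = if I p (e.symm x) ∧ I q (e.symm x) then (1:ℝ) else 0 := by
      intro x
      simp only [hM, Matrix.transpose_apply, Matrix.of_apply]
      split_ifs with h1 h2 h3 h3 <;> simp_all
    rw [Finset.sum_congr rfl fun x _ => hterm x]
    have hre : ∑ x : P, (if I p (e.symm x) ∧ I q (e.symm x) then (1:ℝ) else 0)
        = ∑ b : B, (if I p b ∧ I q b then (1:ℝ) else 0) :=
      Fintype.sum_equiv e.symm _ _ (fun x => rfl)
    rw [hre, Finset.sum_boole]
    by_cases hpq : p = q
    · subst hpq
      have : (univ.filter fun b : B => I p b ∧ I p b) = univ.filter fun b : B => I p b := by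
        simp
      rw [this, hrk' p]
      simp [Matrix.one_apply, Matrix.add_apply, Matrix.smul_apply, hJ, ha_def]
    · rw [hlam' p q hpq]
      simp [Matrix.one_apply, Matrix.add_apply, Matrix.smul_apply, hpq, hJ]
  have hJJ : J * J = (N : ℝ) • J := by
    ext p q
    simp [Matrix.mul_apply, hJ, hN]
  set c : ℝ := a⁻¹ with hc_def
  set d : ℝ := -(l : ℝ) / (a * t) with hd_def
  set Ainv : Matrix P P ℝ := c • 1 + d • J with hAinv
  have hAAinv : (a • 1 + (l : ℝ) • J) * Ainv = 1 := by
    have h1 : a * c = 1 := mul_inv_cancel₀ ha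
    have h2 : a * d + ((l : ℝ) * c + (l : ℝ) * d * N) = 0 := by
      rw [hc_def, hd_def]
      field_simp
      rw [ht_def]
      ring
    have expand : (a • 1 + (l : ℝ) • J) * Ainv
        = (a * c) • (1 : Matrix P P ℝ) + (a * d + ((l : ℝ) * c + (l : ℝ) * d * N)) • J := by
      rw [hAinv]
      simp only [add_mul, mul_add, Matrix.smul_mul, Matrix.mul_smul, one_mul, mul_one,
        hJJ, smul_smul, add_smul]
      module
    rw [expand, h1, h2, one_smul, zero_smul, add_zero]
  have hright : M * (M.transpose * Ainv) = 1 := by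
    rw [← mul_assoc, hA, hAAinv]
  haveI : Invertible M := invertibleOfRightInverse _ _ hright
  -- permutation matrices
  set Pg : Matrix P P ℝ := Matrix.of fun p q : P => if q = g • p then 1 else 0 with hPg
  set Qg : Matrix P P ℝ :=
    Matrix.of fun x y : P => if e.symm y = g • (e.symm x) then 1 else 0 with hQg
  have hPM : Pg * M = M * Qg := by
    ext p y
    have lhs : (Pg * M) p y = M (g • p) y := by
      rw [Matrix.mul_apply]
      rw [Finset.sum_eq_single (g • p)]
      · simp [hPg]
      · intro x _ hx; simp [hPg, hx]
      · simp
    have rhs : (M * Qg) p y = (if I p (g⁻¹ • e.symm y) then (1:ℝ) else 0) := by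
      rw [Matrix.mul_apply]
      rw [Finset.sum_eq_single (e (g⁻¹ • e.symm y))]
      · simp [hM, hQg, smul_smul]
      · intro x _ hx
        have hcond : ¬ (e.symm y = g • e.symm x) := by
          intro hcon
          apply hx
          have h5 : e.symm x = g⁻¹ • e.symm y := by rw [hcon, inv_smul_smul]
          calc x = e (e.symm x) := (e.apply_symm_apply x).symm
            _ = e (g⁻¹ • e.symm y) := by rw [h5]
        simp [hQg, hcond]
      · simp
    rw [lhs, rhs]
    have := hGI g⁻¹ (g • p) (e.symm y)
    simp only [inv_smul_smul] at this
    simp [hM, ← this]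
  have htr : Pg.trace = Qg.trace := by
    have hQ : Qg = ⅟M * (Pg * M) := by
      rw [hPM, ← mul_assoc, invOf_mul_self, one_mul]
    rw [hQ, Matrix.trace_mul_comm, mul_assoc, mul_invOf_self, mul_one]
  -- compute the traces
  have htrP : Pg.trace = ((univ.filter fun p : P => g • p = p).card : ℝ) := by
    rw [Matrix.trace]
    rw [Finset.sum_congr rfl (fun p _ => show Pg.diag p = if g • p = p then (1:ℝ) else 0 by
      simp [Matrix.diag, hPg, eq_comm])]
    rw [Finset.sum_boole]
  have htrQ : Qg.trace = ((univ.filter fun b : B => g • b = b).card : ℝ) := by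
    rw [Matrix.trace]
    have h6 : ∑ x : P, Qg.diag x
        = ∑ x : P, (fun b : B => if g • b = b then (1:ℝ) else 0) (e.symm x) :=
      Finset.sum_congr rfl (fun x _ => by simp [Matrix.diag, hQg, eq_comm])
    have h7 : ∑ x : P, (fun b : B => if g • b = b then (1:ℝ) else 0) (e.symm x)
        = ∑ b : B, if g • b = b then (1:ℝ) else 0 :=
      Fintype.sum_equiv e.symm _ _ (fun x => rfl)
    rw [h6, h7, Finset.sum_boole]
  have hcard : (univ.filter fun p : P => g • p = p).card
      = (univ.filter fun b : B => g • b = b).card := by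
    have := htr
    rw [htrP, htrQ] at this
    exact_mod_cast this
  rw [Nat.card_eq_fintype_card, Fintype.card_subtype, Nat.card_eq_fintype_card,
    Fintype.card_subtype, hcard]

end FixCount

open Finset MulAction

section Orbits
variable {G X : Type*} [Group G] [MulAction G X]

lemma natCard_fixedBy_prod {Y : Type*} [MulAction G Y] (g : G) :
    Nat.card (fixedBy (X × Y) g) = Nat.card (fixedBy X g) * Nat.card (fixedBy Y g) := by
  have h : fixedBy (X × Y) g = (fixedBy X g) ×ˢ (fixedBy Y g) := by
    ext ⟨x, y⟩
    simp [MulAction.mem_fixedBy, Prod.ext_iff]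
  rw [h, Nat.card_congr (Equiv.Set.prod _ _), Nat.card_prod]

lemma orbit_count_two (f : X → Prop)
    (hinv : ∀ (g : G) (x : X), f (g • x) ↔ f x)
    (h1 : ∃ x, f x) (h2 : ∃ x, ¬ f x)
    (ht : ∀ x y, f x → f y → ∃ g : G, g • x = y)
    (hf : ∀ x y, ¬ f x → ¬ f y → ∃ g : G, g • x = y) :
    Nat.card (Quotient (orbitRel G X)) = 2 := by
  classical
  have hresp : ∀ x y : X, (orbitRel G X).r x y → decide (f x) = decide (f y) := by
    intro x y hxy
    obtain ⟨g, hg⟩ := hxy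
    have : f x ↔ f y := by
      rw [show x = g • y from hg.symm]
      exact hinv g y
    simp [this]
  set F : Quotient (orbitRel G X) → Bool := Quotient.lift (fun x => decide (f x)) hresp
    with hF
  have hsurj : Function.Surjective F := by
    intro b
    cases b
    · obtain ⟨x, hx⟩ := h2
      exact ⟨⟦x⟧, by simp [hF, hx]⟩
    · obtain ⟨x, hx⟩ := h1
      exact ⟨⟦x⟧, by simp [hF, hx]⟩
  have hinj : Function.Injective F := by
    intro q1 q2 hq
    induction q1 using Quotient.inductionOn with | h x =>
    induction q2 using Quotient.inductionOn with | h y =>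
    simp only [hF, Quotient.lift_mk, decide_eq_decide] at hq
    have hxy : ∃ g : G, g • x = y := by
      by_cases hx : f x
      · exact ht x y hx (hq.mp hx)
      · exact hf x y hx (fun hy => hx (hq.mpr hy))
    obtain ⟨g, hg⟩ := hxy
    exact Quotient.sound ⟨g⁻¹, by simp [← hg]⟩
  rw [Nat.card_congr (Equiv.ofBijective F ⟨hinj, hsurj⟩)]
  simp [Nat.card_eq_fintype_card]

lemma orbit_trans_of_count_two [Finite X] (f : X → Prop)
    (hinv : ∀ (g : G) (x : X), f (g • x) ↔ f x)
    (h1 : ∃ x, f x) (h2 : ∃ x, ¬ f x)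
    (hcount : Nat.card (Quotient (orbitRel G X)) = 2) :
    ∀ x y, f x → f y → ∃ g : G, g • x = y := by
  classical
  have hresp : ∀ x y : X, (orbitRel G X).r x y → decide (f x) = decide (f y) := by
    intro x y hxy
    obtain ⟨g, hg⟩ := hxy
    have : f x ↔ f y := by
      rw [show x = g • y from hg.symm]
      exact hinv g y
    simp [this]
  set F : Quotient (orbitRel G X) → Bool := Quotient.lift (fun x => decide (f x)) hresp
    with hF
  have hsurj : Function.Surjective F := by
    intro b
    cases b
    · obtain ⟨x, hx⟩ := h2
      exact ⟨⟦x⟧, by simp [hF, hx]⟩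
    · obtain ⟨x, hx⟩ := h1
      exact ⟨⟦x⟧, by simp [hF, hx]⟩
  letI : Fintype (Quotient (orbitRel G X)) := Fintype.ofFinite _
  have hbij : Function.Bijective F := by
    rw [Fintype.bijective_iff_surjective_and_card]
    refine ⟨hsurj, ?_⟩
    rw [← Nat.card_eq_fintype_card, hcount, Fintype.card_bool]
  intro x y hx hy
  have : F ⟦x⟧ = F ⟦y⟧ := by simp [hF, hx, hy]
  have := hbij.1 this
  obtain ⟨g, hg⟩ := Quotient.exact this
  exact ⟨g⁻¹, by simp [← hg]⟩

lemma burnside_natCard (G X : Type*) [Group G] [Fintype G] [MulAction G X] [Finite X] :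
    ∑ g : G, Nat.card (fixedBy X g)
      = Nat.card (Quotient (orbitRel G X)) * Fintype.card G := by
  classical
  letI : Fintype X := Fintype.ofFinite X
  letI : ∀ g : G, Fintype (fixedBy X g) := fun g => Fintype.ofFinite _
  letI : Fintype (Quotient (orbitRel G X)) := Fintype.ofFinite _
  calc ∑ g : G, Nat.card (fixedBy X g)
      = ∑ g : G, Fintype.card (fixedBy X g) :=
        Finset.sum_congr rfl fun g _ => Nat.card_eq_fintype_card
    _ = Fintype.card (Quotient (orbitRel G X)) * Fintype.card G :=
        MulAction.sum_card_fixedBy_eq_card_orbits_mul_card_group G X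
    _ = Nat.card (Quotient (orbitRel G X)) * Fintype.card G := by
        rw [Nat.card_eq_fintype_card]

end Orbits
section Key
open Finset MulAction

variable {P B G : Type*}

lemma key_lemma [Fintype P] [Fintype B] [Nonempty P] [Nonempty B]
    [Group G] [Finite G] [MulAction G P] [MulAction G B]
    (I : P → B → Prop) (v k l : ℕ)
    (hD : Is2Design I v k l) (hk2 : 2 < k) (hkv : k < v)
    (hsym : Nat.card B = Nat.card P)
    (hGI : ∀ (g : G) (p : P) (b : B), I p b ↔ I (g • p) (g • b))
    (h2t : IsDoublyTransitive G P) :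
    (∀ (p p' : P) (b b' : B), I p b → I p' b' → ∃ g : G, g • p = p' ∧ g • b = b') ∧
    (∀ (p p' : P) (b b' : B), ¬ I p b → ¬ I p' b' → ∃ g : G, g • p = p' ∧ g • b = b') ∧
    (∀ b₁ b₂ b₁' b₂' : B, b₁ ≠ b₂ → b₁' ≠ b₂' → ∃ g : G, g • b₁ = b₁' ∧ g • b₂ = b₂') ∧
    (∀ b₁ b₂ : B, ∃ p, I p b₁ ∧ I p b₂) := by
  classical
  have hvP : Fintype.card P = v := by rw [← Nat.card_eq_fintype_card, hD.1]
  have hvB : Fintype.card B = v := by rw [← Nat.card_eq_fintype_card, hsym, hD.1]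
  obtain ⟨hrk, hl1, hlk⟩ := design_basic hD hk2 hkv hvB
  have e : B ≃ P := Fintype.equivOfCardEq (by rw [hvB, hvP])
  have hfix : ∀ g : G,
      Nat.card (fixedBy P g) = Nat.card (fixedBy B g) :=
    fun g => fix_count_eq I k l e hrk hD.2.2.2 hlk hGI g
  -- nontriviality
  have hntP : Nontrivial P := by
    rw [← Fintype.one_lt_card_iff_nontrivial, hvP]; omega
  have hntB : Nontrivial B := by
    rw [← Fintype.one_lt_card_iff_nontrivial, hvB]; omega
  -- transitivity on P
  have htrans : ∀ p q : P, ∃ g : G, g • p = q := by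
    intro p q
    obtain ⟨p2, hp2⟩ := exists_ne p
    obtain ⟨q2, hq2⟩ := exists_ne q
    obtain ⟨g, hg, -⟩ := h2t p p2 q q2 (Ne.symm hp2) (Ne.symm hq2)
    exact ⟨g, hg⟩
  -- orbit count on P × P equals 2
  have hPP : Nat.card (Quotient (orbitRel G (P × P))) = 2 := by
    apply orbit_count_two (f := fun x : P × P => x.1 = x.2)
    · intro g x
      simp only [Prod.smul_fst, Prod.smul_snd]
      exact smul_left_cancel_iff g
    · exact ⟨(Classical.arbitrary P, Classical.arbitrary P), rfl⟩
    · obtain ⟨p, q, hpq⟩ := exists_pair_ne P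
      exact ⟨(p, q), hpq⟩
    · rintro ⟨x1, x2⟩ ⟨y1, y2⟩ hx hy
      simp only at hx hy
      subst hx; subst hy
      obtain ⟨g, hg⟩ := htrans x1 y1
      exact ⟨g, by simp [Prod.ext_iff, hg]⟩
    · rintro ⟨x1, x2⟩ ⟨y1, y2⟩ hx hy
      obtain ⟨g, hg1, hg2⟩ := h2t x1 x2 y1 y2 hx hy
      exact ⟨g, by simp [Prod.ext_iff, hg1, hg2]⟩
  letI : Fintype G := Fintype.ofFinite G
  have hGpos : 0 < Fintype.card G := Fintype.card_pos
  -- Burnside transfers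
  have bPP := burnside_natCard G (P × P)
  have bPB := burnside_natCard G (P × B)
  have bBB := burnside_natCard G (B × B)
  have hsumPP : ∑ g : G, Nat.card (fixedBy (P × P) g)
      = ∑ g : G, Nat.card (fixedBy (P × B) g) := by
    refine Finset.sum_congr rfl fun g _ => ?_
    rw [natCard_fixedBy_prod, natCard_fixedBy_prod, hfix g]
  have hsumPP' : ∑ g : G, Nat.card (fixedBy (P × P) g)
      = ∑ g : G, Nat.card (fixedBy (B × B) g) := by
    refine Finset.sum_congr rfl fun g _ => ?_
    rw [natCard_fixedBy_prod, natCard_fixedBy_prod, hfix g]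
  have hPB : Nat.card (Quotient (orbitRel G (P × B))) = 2 := by
    have := bPB
    rw [← hsumPP, bPP, hPP] at this
    exact (Nat.eq_of_mul_eq_mul_right hGpos this.symm)
  have hBB : Nat.card (Quotient (orbitRel G (B × B))) = 2 := by
    have := bBB
    rw [← hsumPP', bPP, hPP] at this
    exact (Nat.eq_of_mul_eq_mul_right hGpos this.symm)
  -- existence of flags and antiflags
  have hflag : ∀ b : B, ∃ p : P, I p b := by
    intro b
    have hcard : Nat.card {p : P // I p b} = k := hD.2.2.1 b
    have : Nonempty {p : P // I p b} := by
      apply Nat.card_pos_iff.mp (by omega) |>.1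
    obtain ⟨⟨p, hp⟩⟩ := this
    exact ⟨p, hp⟩
  have hantiflag : ∀ b : B, ∃ p : P, ¬ I p b := by
    intro b
    by_contra hcon
    push_neg at hcon
    have h1 : (univ.filter fun p : P => I p b) = univ := by
      ext p; simp [hcon p]
    have h2 : (univ.filter fun p : P => I p b).card = k := by
      rw [← Fintype.card_subtype, ← Nat.card_eq_fintype_card]; exact hD.2.2.1 b
    rw [h1, Finset.card_univ, hvP] at h2
    omega
  have hinvPB : ∀ (g : G) (x : P × B), I (g • x).1 (g • x).2 ↔ I x.1 x.2 := by
    intro g x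
    simp only [Prod.smul_fst, Prod.smul_snd]
    exact (hGI g x.1 x.2).symm
  obtain ⟨b0⟩ := ‹Nonempty B›
  obtain ⟨pf, hpf⟩ := hflag b0
  obtain ⟨pa, hpa⟩ := hantiflag b0
  -- flag transitivity
  have flagtrans := orbit_trans_of_count_two (f := fun x : P × B => I x.1 x.2)
    hinvPB ⟨(pf, b0), hpf⟩ ⟨(pa, b0), hpa⟩ hPB
  -- antiflag transitivity
  have antiflagtrans := orbit_trans_of_count_two (f := fun x : P × B => ¬ I x.1 x.2)
    (fun g x => not_congr (hinvPB g x)) ⟨(pa, b0), hpa⟩ ⟨(pf, b0), not_not_intro hpf⟩ hPB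
  -- block pair transitivity
  obtain ⟨c1, c2, hc12⟩ := exists_pair_ne B
  have blocktrans := orbit_trans_of_count_two (f := fun x : B × B => x.1 ≠ x.2)
    (fun g x => by
      simp only [Prod.smul_fst, Prod.smul_snd, ne_eq]
      exact not_congr (smul_left_cancel_iff g))
    ⟨(c1, c2), hc12⟩ ⟨(b0, b0), not_not_intro rfl⟩ hBB
  refine ⟨?_, ?_, ?_, ?_⟩
  · intro p p' b b' h1 h2
    obtain ⟨g, hg⟩ := flagtrans (p, b) (p', b') h1 h2
    rw [Prod.ext_iff] at hg
    exact ⟨g, hg.1, hg.2⟩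
  · intro p p' b b' h1 h2
    obtain ⟨g, hg⟩ := antiflagtrans (p, b) (p', b') h1 h2
    rw [Prod.ext_iff] at hg
    exact ⟨g, hg.1, hg.2⟩
  · intro b1 b2 b1' b2' h1 h2
    obtain ⟨g, hg⟩ := blocktrans (b1, b2) (b1', b2') h1 h2
    rw [Prod.ext_iff] at hg
    exact ⟨g, hg.1, hg.2⟩
  · -- any two blocks share a point
    intro b1 b2
    by_cases h12 : b1 = b2
    · subst h12
      obtain ⟨p, hp⟩ := hflag b1
      exact ⟨p, hp, hp⟩
    · -- find two distinct blocks with a common point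
      obtain ⟨p0⟩ := ‹Nonempty P›
      have hcard : (univ.filter fun b : B => I p0 b).card = k := by
        rw [← Fintype.card_subtype, ← Nat.card_eq_fintype_card]; exact hrk p0
      have : 1 < (univ.filter fun b : B => I p0 b).card := by omega
      obtain ⟨d1, hd1, d2, hd2, hd12⟩ := Finset.one_lt_card.mp this
      simp only [Finset.mem_filter] at hd1 hd2
      obtain ⟨g, hg⟩ := blocktrans (d1, d2) (b1, b2) hd12 h12
      simp only [Prod.ext_iff, Prod.smul_fst, Prod.smul_snd] at hg
      refine ⟨g • p0, ?_, ?_⟩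
      · rw [← hg.1]; exact (hGI g p0 d1).mp hd1.2
      · rw [← hg.2]; exact (hGI g p0 d2).mp hd2.2

end Key

instance permPairSMulLeft (α β : Type*) : SMul (Equiv.Perm α × Equiv.Perm β) α :=
  ⟨fun g p => g.1 p⟩

instance permPairSMulRight (α β : Type*) : SMul (Equiv.Perm α × Equiv.Perm β) β :=
  ⟨fun g b => g.2 b⟩

instance permPairActLeft (α β : Type*) : MulAction (Equiv.Perm α × Equiv.Perm β) α where
  one_smul p := rfl
  mul_smul g h p := rfl

instance permPairActRight (α β : Type*) : MulAction (Equiv.Perm α × Equiv.Perm β) β where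
  one_smul b := rfl
  mul_smul g h b := rfl

/-- A non-trivial symmetric 2-design is `G`-pairwise transitive if and only if the
group induced by `G` on points is 2-transitive. -/
theorem symmetric_pairwise_transitive_iff_two_transitive
    {P B G : Type*} [Finite P] [Finite B] [Nonempty P] [Nonempty B]
    [Group G] [MulAction G P] [MulAction G B]
    (I : P → B → Prop) (v k l : ℕ)
    (hD : Is2Design I v k l) (hnt : 2 < k ∧ k < v)
    (hsym : Nat.card B = Nat.card P)
    (hGI : ∀ (g : G) (p : P) (b : B), I p b ↔ I (g • p) (g • b))
    (hfaith : ∀ g : G, (∀ p : P, g • p = p) → (∀ b : B, g • b = b) → g = 1) :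
    PairwiseTransitive G I ↔ IsDoublyTransitive G P := by
  constructor
  · intro hPT
    exact hPT.1
  · intro h2t
    classical
    letI : Fintype P := Fintype.ofFinite P
    letI : Fintype B := Fintype.ofFinite B
    set φ : G →* Equiv.Perm P × Equiv.Perm B :=
      (MulAction.toPermHom G P).prod (MulAction.toPermHom G B) with hφ
    set H := φ.range with hH
    have hlift : ∀ h : H, ∃ g : G, (∀ p : P, h • p = g • p) ∧ (∀ b : B, h • b = g • b) := by
      rintro ⟨hval, g, rfl⟩
      exact ⟨g, fun p => rfl, fun b => rfl⟩
    have h2tH : IsDoublyTransitive H P := by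
      intro x1 x2 y1 y2 hx hy
      obtain ⟨g, hg1, hg2⟩ := h2t x1 x2 y1 y2 hx hy
      exact ⟨⟨φ g, ⟨g, rfl⟩⟩, hg1, hg2⟩
    have hGIH : ∀ (h : H) (p : P) (b : B), I p b ↔ I (h • p) (h • b) := by
      intro h p b
      obtain ⟨g, hp, hb⟩ := hlift h
      rw [hp p, hb b]
      exact hGI g p b
    obtain ⟨c2, c3, c4, c5⟩ := key_lemma (G := H) I v k l hD hnt.1 hnt.2 hsym hGIH h2tH
    refine ⟨h2t, ?_, ?_, ?_, ?_⟩
    · intro p p' b b' h1 h2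
      obtain ⟨h, hh1, hh2⟩ := c2 p p' b b' h1 h2
      obtain ⟨g, hp, hb⟩ := hlift h
      exact ⟨g, by rw [← hp p]; exact hh1, by rw [← hb b]; exact hh2⟩
    · intro p p' b b' h1 h2
      obtain ⟨h, hh1, hh2⟩ := c3 p p' b b' h1 h2
      obtain ⟨g, hp, hb⟩ := hlift h
      exact ⟨g, by rw [← hp p]; exact hh1, by rw [← hb b]; exact hh2⟩
    · intro b1 b2 b1' b2' hne hne' _ _
      obtain ⟨h, hh1, hh2⟩ := c4 b1 b2 b1' b2' hne hne'
      obtain ⟨g, hp, hb⟩ := hlift h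
      exact ⟨g, by rw [← hb b1]; exact hh1, by rw [← hb b2]; exact hh2⟩
    · intro b1 b2 b1' b2' h12 h12'
      exact absurd (c5 b1 b2) h12
end

section
/- Let D be a non-trivial G-pairwise transitive 2-(v,k,λ) design. If G^B has rank 2 (i.e. is 2-transitive on blocks), then D is symmetric (|B| = |P|). If G^B has rank 3, then D is quasisymmetric (the quantity |[b] ∩ [b']| takes exactly two values over pairs of distinct blocks b, b') and one of the two intersection numbers is 0 (there exist disjoint blocks). -/
lemma aux_card_ne {α : Type*} [Finite α] (a : α) :
    Nat.card {x : α // x ≠ a} = Nat.card α - 1 := by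
  letI := Fintype.ofFinite α
  classical
  rw [Nat.card_eq_fintype_card, Nat.card_eq_fintype_card]
  have h1 : Fintype.card {x : α // x ≠ a} = Fintype.card {x : α // ¬ x = a} :=
    Fintype.card_congr (Equiv.subtypeEquivRight (fun _ => Iff.rfl))
  rw [h1, Fintype.card_subtype_compl, Fintype.card_subtype_eq]

lemma aux_card_and_ne {α : Type*} [Finite α] {Q : α → Prop} {a : α} (h : Q a) :
    Nat.card {x : α // Q x ∧ x ≠ a} = Nat.card {x : α // Q x} - 1 := by
  have e : {x : α // Q x ∧ x ≠ a} ≃ {y : {x : α // Q x} // y ≠ ⟨a, h⟩} :=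
    ⟨fun x => ⟨⟨x.1, x.2.1⟩, fun hy => x.2.2 (congrArg Subtype.val hy)⟩,
     fun y => ⟨y.1.1, y.1.2, fun hy => y.2 (Subtype.ext hy)⟩,
     fun x => rfl, fun y => rfl⟩
  rw [Nat.card_congr e, aux_card_ne]

lemma aux_card_sigma_const {ι : Type*} [Finite ι] {f : ι → Type*} [∀ i, Finite (f i)] {c : ℕ}
    (h : ∀ i, Nat.card (f i) = c) : Nat.card (Σ i, f i) = Nat.card ι * c := by
  letI := Fintype.ofFinite ι
  letI : ∀ i, Fintype (f i) := fun i => Fintype.ofFinite _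
  rw [Nat.card_eq_fintype_card, Nat.card_eq_fintype_card, Fintype.card_sigma]
  have : ∀ i : ι, Fintype.card (f i) = c := fun i => by
    rw [← Nat.card_eq_fintype_card]; exact h i
  simp [this, Finset.sum_const, Finset.card_univ, mul_comm]

lemma aux_card_offdiag {α : Type*} [Finite α] :
    Nat.card {x : α × α // x.1 ≠ x.2} = Nat.card α * (Nat.card α - 1) := by
  have e : {x : α × α // x.1 ≠ x.2} ≃ Σ a : α, {y : α // y ≠ a} :=
    ⟨fun x => ⟨x.1.1, x.1.2, Ne.symm x.2⟩, fun s => ⟨(s.1, s.2.1), Ne.symm s.2.2⟩,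
     fun x => rfl, fun s => rfl⟩
  rw [Nat.card_congr e, aux_card_sigma_const (fun a => aux_card_ne a)]

lemma aux_card_pairs {α : Type*} [Finite α] (Q : α → Prop) :
    Nat.card {x : α × α // x.1 ≠ x.2 ∧ Q x.1 ∧ Q x.2}
      = Nat.card {a : α // Q a} * (Nat.card {a : α // Q a} - 1) := by
  have e : {x : α × α // x.1 ≠ x.2 ∧ Q x.1 ∧ Q x.2}
      ≃ {y : {a : α // Q a} × {a : α // Q a} // y.1 ≠ y.2} :=
    { toFun := fun x => ⟨(⟨x.1.1, x.2.2.1⟩, ⟨x.1.2, x.2.2.2⟩), by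
        intro hy; exact x.2.1 (congrArg Subtype.val hy)⟩
      invFun := fun y => ⟨(y.1.1.1, y.1.2.1), fun hy => y.2 (Subtype.ext hy), y.1.1.2, y.1.2.2⟩
      left_inv := fun x => rfl
      right_inv := fun y => rfl }
  rw [Nat.card_congr e, aux_card_offdiag]

lemma aux_card_zero {α : Type*} [Finite α] : Nat.card α = 0 ↔ IsEmpty α := by
  constructor
  · intro h
    rcases Nat.card_eq_zero.mp h with h | h
    · exact h
    · exact absurd ‹Finite α› h.not_finite
  · intro h; exact Nat.card_eq_zero.mpr (Or.inl h)

set_option maxHeartbeats 1000000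

section Act

variable {P B G : Type*} [Group G] [MulAction G P] [MulAction G B]
variable {I : P → B → Prop}

def auxInterEquiv (hGI : ∀ (g : G) (p : P) (b : B), I p b ↔ I (g • p) (g • b))
    (g : G) (b₁ b₂ : B) :
    {p : P // I p b₁ ∧ I p b₂} ≃ {p : P // I p (g • b₁) ∧ I p (g • b₂)} where
  toFun x := ⟨g • x.1, (hGI g x.1 b₁).mp x.2.1, (hGI g x.1 b₂).mp x.2.2⟩
  invFun y := ⟨g⁻¹ • y.1,
    (hGI g (g⁻¹ • y.1) b₁).mpr (by rw [smul_inv_smul]; exact y.2.1),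
    (hGI g (g⁻¹ • y.1) b₂).mpr (by rw [smul_inv_smul]; exact y.2.2)⟩
  left_inv x := Subtype.ext (inv_smul_smul g x.1)
  right_inv y := Subtype.ext (smul_inv_smul g y.1)

def auxBlocksEquiv (hGI : ∀ (g : G) (p : P) (b : B), I p b ↔ I (g • p) (g • b))
    (g : G) (p : P) : {b : B // I p b} ≃ {b : B // I (g • p) b} where
  toFun x := ⟨g • x.1, (hGI g p x.1).mp x.2⟩
  invFun y := ⟨g⁻¹ • y.1, by
    have := (hGI g⁻¹ (g • p) y.1).mp y.2
    rwa [inv_smul_smul] at this⟩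
  left_inv x := Subtype.ext (inv_smul_smul g x.1)
  right_inv y := Subtype.ext (smul_inv_smul g y.1)

end Act
/-- For a non-trivial `G`-pairwise transitive 2-design: if `G` has rank 2 on blocks
then the design is symmetric; and if `G` has rank 3 on blocks then the design is
quasisymmetric, block intersection sizes taking exactly the two values `0` and some
`μ > 0`. -/
theorem rank_two_symmetric_and_rank_three_quasisymmetric
    {P B G : Type*} [Finite P] [Finite B] [Nonempty P] [Nonempty B]
    [Group G] [MulAction G P] [MulAction G B]
    (I : P → B → Prop) (v k l : ℕ)
    (hD : Is2Design I v k l) (hnt : 2 < k ∧ k < v)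
    (hGI : ∀ (g : G) (p : P) (b : B), I p b ↔ I (g • p) (g • b))
    (hfaith : ∀ g : G, (∀ p : P, g • p = p) → (∀ b : B, g • b = b) → g = 1)
    (hPT : PairwiseTransitive G I) :
    (HasRank G B 2 → Nat.card B = Nat.card P) ∧
    (HasRank G B 3 → ∃ μ : ℕ, 0 < μ ∧
      (∀ b b' : B, b ≠ b' →
        Nat.card {p : P // I p b ∧ I p b'} = 0 ∨ Nat.card {p : P // I p b ∧ I p b'} = μ) ∧
      (∃ b b' : B, b ≠ b' ∧ Nat.card {p : P // I p b ∧ I p b'} = 0) ∧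
      (∃ b b' : B, b ≠ b' ∧ Nat.card {p : P // I p b ∧ I p b'} = μ)) := by
  classical
  obtain ⟨hv, hk2, hcardb, hl⟩ := hD
  obtain ⟨hk3, hkv⟩ := hnt
  obtain ⟨hPT1, hPT2, hPT3, hPT4, hPT5⟩ := hPT
  have hv1 : 1 < Nat.card P := by rw [hv]; omega
  haveI : Nontrivial P := Finite.one_lt_card_iff_nontrivial.mp hv1
  -- transitivity on points
  have hTpt : ∀ p q : P, ∃ g : G, g • p = q := by
    intro p q
    obtain ⟨p', hp'⟩ := exists_ne p
    obtain ⟨q', hq'⟩ := exists_ne q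
    obtain ⟨g, hg1, -⟩ := hPT1 p p' q q' (Ne.symm hp') (Ne.symm hq')
    exact ⟨g, hg1⟩
  set n := Nat.card B with hn
  obtain ⟨p₀⟩ : Nonempty P := inferInstance
  set r := Nat.card {b : B // I p₀ b} with hrdef
  have hr : ∀ p : P, Nat.card {b : B // I p b} = r := by
    intro p
    obtain ⟨g, hg⟩ := hTpt p₀ p
    have h := Nat.card_congr (auxBlocksEquiv hGI g p₀)
    rw [hg] at h
    exact h.symm
  have hl1 : 0 < l := by
    obtain ⟨b₀⟩ : Nonempty B := inferInstance
    have h2 : 1 < Nat.card {p : P // I p b₀} := by rw [hcardb]; omega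
    haveI := Finite.one_lt_card_iff_nontrivial.mp h2
    obtain ⟨x, y, hxy⟩ := exists_pair_ne {p : P // I p b₀}
    have hxy' : x.1 ≠ y.1 := fun h => hxy (Subtype.ext h)
    rw [← hl x.1 y.1 hxy']
    haveI : Nonempty {b : B // I x.1 b ∧ I y.1 b} := ⟨⟨b₀, x.2, y.2⟩⟩
    exact Nat.card_pos
  have hptin : ∀ b : B, ∃ p, I p b := by
    intro b
    have h0 : 0 < Nat.card {p : P // I p b} := by rw [hcardb]; omega
    obtain ⟨⟨p, hp⟩⟩ := (Nat.card_pos_iff.mp h0).1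
    exact ⟨p, hp⟩
  have hptout : ∀ b : B, ∃ q, ¬ I q b := by
    intro b
    by_contra h
    push_neg at h
    have h2 : Nat.card {p : P // I p b} = Nat.card P :=
      Nat.card_congr (Equiv.subtypeUnivEquiv h)
    rw [hcardb, hv] at h2
    omega
  have hmeet : ∀ b : B, ∃ b' : B, b' ≠ b ∧ ∃ p, I p b ∧ I p b' := by
    intro b
    obtain ⟨p, hp⟩ := hptin b
    obtain ⟨q, hq⟩ := hptout b
    have hpq : p ≠ q := fun h => hq (h ▸ hp)
    have h0 : 0 < Nat.card {b' : B // I p b' ∧ I q b'} := by rw [hl p q hpq]; omega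
    obtain ⟨⟨b', hb'1, hb'2⟩⟩ := (Nat.card_pos_iff.mp h0).1
    exact ⟨b', fun h => hq (h ▸ hb'2), p, hp, hb'1⟩
  -- description of equality in the orbit quotient
  have hQeq : ∀ (b₀ x y : B),
      (Quotient.mk (MulAction.orbitRel (MulAction.stabilizer G b₀) B) x
        = Quotient.mk (MulAction.orbitRel (MulAction.stabilizer G b₀) B) y)
        ↔ ∃ g : G, g • b₀ = b₀ ∧ g • y = x := by
    intro b₀ x y
    rw [Quotient.eq]
    constructor
    · intro h
      obtain ⟨⟨g, hg⟩, hgy⟩ := MulAction.mem_orbit_iff.mp (MulAction.orbitRel_apply.mp h)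
      exact ⟨g, hg, hgy⟩
    · rintro ⟨g, hg, hgy⟩
      exact MulAction.orbitRel_apply.mpr
        (MulAction.mem_orbit_iff.mpr ⟨⟨g, hg⟩, hgy⟩)
  have claim3 : ∀ b₀ : B, MulAction.IsPretransitive G B →
      (∃ c c' : B, c ≠ c' ∧ ¬∃ p, I p c ∧ I p c') →
      3 ≤ Nat.card (Quotient (MulAction.orbitRel (MulAction.stabilizer G b₀) B)) := by
    rintro b₀ hTr ⟨c, c', hcc, hdis⟩
    haveI := hTr
    obtain ⟨b₁, hb₁ne, p₁, hp₁0, hp₁1⟩ := hmeet b₀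
    obtain ⟨g, hg⟩ := MulAction.exists_smul_eq G c b₀
    have hb₂ne : g • c' ≠ b₀ := by
      rw [← hg]
      intro h
      exact hcc (smul_left_cancel g h).symm
    have hdis₂ : ¬∃ p, I p b₀ ∧ I p (g • c') := by
      rintro ⟨p, h1, h2⟩
      refine hdis ⟨g⁻¹ • p, ?_, ?_⟩
      · have h3 := (hGI g⁻¹ p b₀).mp h1
        rwa [← hg, inv_smul_smul] at h3
      · have h3 := (hGI g⁻¹ p (g • c')).mp h2
        rwa [inv_smul_smul] at h3
    letI := Fintype.ofFinite (Quotient (MulAction.orbitRel (MulAction.stabilizer G b₀) B))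
    rw [Nat.card_eq_fintype_card]
    refine Fintype.two_lt_card_iff.mpr
      ⟨Quotient.mk _ b₀, Quotient.mk _ b₁, Quotient.mk _ (g • c'), ?_, ?_, ?_⟩
    · intro h
      obtain ⟨g', hg'0, hg'1⟩ := (hQeq b₀ b₀ b₁).mp h
      exact hb₁ne (smul_left_cancel g' (hg'1.trans hg'0.symm))
    · intro h
      obtain ⟨g', hg'0, hg'1⟩ := (hQeq b₀ b₀ (g • c')).mp h
      exact hb₂ne (smul_left_cancel g' (hg'1.trans hg'0.symm))
    · intro h
      obtain ⟨g', hg'0, hg'1⟩ := (hQeq b₀ b₁ (g • c')).mp h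
      refine hdis₂ ⟨g'⁻¹ • p₁, ?_, ?_⟩
      · have h3 := (hGI g'⁻¹ p₁ b₀).mp hp₁0
        rwa [inv_smul_eq_iff.mpr hg'0.symm] at h3
      · have h3 := (hGI g'⁻¹ p₁ b₁).mp hp₁1
        rwa [inv_smul_eq_iff.mpr hg'1.symm] at h3
  have claim2 : ∀ b₀ : B, (∀ c c' : B, c ≠ c' → ∃ p, I p c ∧ I p c') →
      Nat.card (Quotient (MulAction.orbitRel (MulAction.stabilizer G b₀) B)) ≤ 2 := by
    intro b₀ hnod
    obtain ⟨b₁, hb₁ne, hcom⟩ := hmeet b₀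
    have hsurj : Function.Surjective (fun i : Fin 2 =>
        if i = 0 then Quotient.mk (MulAction.orbitRel (MulAction.stabilizer G b₀) B) b₀
        else Quotient.mk (MulAction.orbitRel (MulAction.stabilizer G b₀) B) b₁) := by
      intro q
      obtain ⟨b, rfl⟩ := Quotient.exists_rep q
      by_cases hb : b = b₀
      · exact ⟨0, by simp [hb]⟩
      · refine ⟨1, ?_⟩
        simp only [Fin.isValue, one_ne_zero, if_false]
        obtain ⟨g, hg0, hg1⟩ :=
          hPT4 b₀ b₁ b₀ b (Ne.symm hb₁ne) (Ne.symm hb) hcom (hnod b₀ b (Ne.symm hb))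
        exact ((hQeq b₀ b b₁).mpr ⟨g, hg0, hg1⟩).symm
    calc Nat.card (Quotient (MulAction.orbitRel (MulAction.stabilizer G b₀) B))
        ≤ Nat.card (Fin 2) := Nat.card_le_card_of_surjective _ hsurj
      _ = 2 := by simp
  constructor
  · -- rank 2 : symmetric
    rintro ⟨hTr, hrank⟩
    obtain ⟨b₀⟩ : Nonempty B := inferInstance
    have hnod : ∀ c c' : B, c ≠ c' → ∃ p, I p c ∧ I p c' := by
      by_contra h
      push_neg at h
      obtain ⟨c, c', hcc, hdis⟩ := h
      have h3 := claim3 b₀ hTr ⟨c, c', hcc, fun ⟨p, h1, h2⟩ => hdis p h1 h2⟩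
      rw [hrank b₀] at h3
      omega
    obtain ⟨b₁, hb₁ne, p₁, hp₁⟩ := hmeet b₀
    set μ := Nat.card {p : P // I p b₀ ∧ I p b₁} with hμdef
    have hμ1 : 0 < μ := by
      haveI : Nonempty {p : P // I p b₀ ∧ I p b₁} := ⟨⟨p₁, hp₁⟩⟩
      exact Nat.card_pos
    have hmu : ∀ b b' : B, b ≠ b' → Nat.card {p : P // I p b ∧ I p b'} = μ := by
      intro b b' hbb'
      obtain ⟨g, hg0, hg1⟩ := hPT4 b₀ b₁ b b' (Ne.symm hb₁ne) hbb' ⟨p₁, hp₁⟩ (hnod b b' hbb')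
      have h := Nat.card_congr (auxInterEquiv hGI g b₀ b₁)
      rw [hg0, hg1] at h
      exact h.symm
    -- the four counting identities
    have hE1 : n * k = v * r := by
      have e1 : {x : P × B // I x.1 x.2} ≃ Σ p : P, {b : B // I p b} :=
        Equiv.subtypeProdEquivSigmaSubtype I
      have e2 : {x : P × B // I x.1 x.2} ≃ Σ b : B, {p : P // I p b} :=
        Equiv.trans
          ⟨fun x => ⟨(x.1.2, x.1.1), x.2⟩, fun x => ⟨(x.1.2, x.1.1), x.2⟩,
            fun x => rfl, fun x => rfl⟩
          (Equiv.subtypeProdEquivSigmaSubtype (fun (b : B) (p : P) => I p b))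
      have c1 : Nat.card {x : P × B // I x.1 x.2} = v * r := by
        rw [Nat.card_congr e1, aux_card_sigma_const hr, hv]
      have c2 : Nat.card {x : P × B // I x.1 x.2} = n * k := by
        rw [Nat.card_congr e2, aux_card_sigma_const hcardb, ← hn]
      omega
    have hE2 : (v - 1) * l = r * (k - 1) := by
      have e : (Σ q : {q : P // q ≠ p₀}, {b : B // I p₀ b ∧ I q.1 b})
          ≃ Σ b : {b : B // I p₀ b}, {q : P // I q b.1 ∧ q ≠ p₀} :=
        ⟨fun x => ⟨⟨x.2.1, x.2.2.1⟩, ⟨x.1.1, x.2.2.2, x.1.2⟩⟩,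
         fun y => ⟨⟨y.2.1, y.2.2.2⟩, ⟨y.1.1, y.1.2, y.2.2.1⟩⟩,
         fun x => rfl, fun y => rfl⟩
      have c1 : Nat.card (Σ q : {q : P // q ≠ p₀}, {b : B // I p₀ b ∧ I q.1 b})
          = (Nat.card P - 1) * l :=
        aux_card_sigma_const (fun q : {q : P // q ≠ p₀} => hl p₀ q.1 (Ne.symm q.2)) |>.trans
          (by rw [aux_card_ne p₀])
      have c2 : Nat.card (Σ b : {b : B // I p₀ b}, {q : P // I q b.1 ∧ q ≠ p₀})
          = r * (k - 1) :=
        aux_card_sigma_const (fun b : {b : B // I p₀ b} => by rw [aux_card_and_ne (Q := fun q => I q b.1) (a := p₀) b.2, hcardb]) |>.trans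
          (by rw [hr p₀])
      rw [← hv, ← c1, Nat.card_congr e, c2]
    have hE3 : (n - 1) * μ = k * (r - 1) := by
      have e : (Σ b' : {b' : B // b' ≠ b₀}, {p : P // I p b₀ ∧ I p b'.1})
          ≃ Σ p : {p : P // I p b₀}, {b' : B // I p.1 b' ∧ b' ≠ b₀} :=
        ⟨fun x => ⟨⟨x.2.1, x.2.2.1⟩, ⟨x.1.1, x.2.2.2, x.1.2⟩⟩,
         fun y => ⟨⟨y.2.1, y.2.2.2⟩, ⟨y.1.1, y.1.2, y.2.2.1⟩⟩,
         fun x => rfl, fun y => rfl⟩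
      have c1 : Nat.card (Σ b' : {b' : B // b' ≠ b₀}, {p : P // I p b₀ ∧ I p b'.1})
          = (n - 1) * μ :=
        aux_card_sigma_const (fun b' : {b' : B // b' ≠ b₀} => hmu b₀ b'.1 (Ne.symm b'.2)) |>.trans
          (by rw [aux_card_ne b₀, ← hn])
      have c2 : Nat.card (Σ p : {p : P // I p b₀}, {b' : B // I p.1 b' ∧ b' ≠ b₀})
          = k * (r - 1) :=
        aux_card_sigma_const (fun p : {p : P // I p b₀} => by rw [aux_card_and_ne (Q := fun b' => I p.1 b') (a := b₀) p.2, hr p.1]) |>.trans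
          (by rw [hcardb b₀])
      rw [← c1, Nat.card_congr e, c2]
    have hE4 : (n - 1) * (μ * (μ - 1)) = (k * (k - 1)) * (l - 1) := by
      have e : (Σ b' : {b' : B // b' ≠ b₀},
            {x : P × P // x.1 ≠ x.2 ∧ (I x.1 b₀ ∧ I x.1 b'.1) ∧ (I x.2 b₀ ∧ I x.2 b'.1)})
          ≃ Σ pq : {x : P × P // x.1 ≠ x.2 ∧ I x.1 b₀ ∧ I x.2 b₀},
            {b' : B // (I pq.1.1 b' ∧ I pq.1.2 b') ∧ b' ≠ b₀} :=
        ⟨fun x => ⟨⟨x.2.1, x.2.2.1, x.2.2.2.1.1, x.2.2.2.2.1⟩,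
            ⟨x.1.1, ⟨x.2.2.2.1.2, x.2.2.2.2.2⟩, x.1.2⟩⟩,
         fun y => ⟨⟨y.2.1, y.2.2.2⟩,
            ⟨y.1.1, y.1.2.1, ⟨y.1.2.2.1, y.2.2.1.1⟩, ⟨y.1.2.2.2, y.2.2.1.2⟩⟩⟩,
         fun x => rfl, fun y => rfl⟩
      have c1 : Nat.card (Σ b' : {b' : B // b' ≠ b₀},
            {x : P × P // x.1 ≠ x.2 ∧ (I x.1 b₀ ∧ I x.1 b'.1) ∧ (I x.2 b₀ ∧ I x.2 b'.1)})
          = (n - 1) * (μ * (μ - 1)) :=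
        aux_card_sigma_const (fun b' : {b' : B // b' ≠ b₀} => by
          rw [aux_card_pairs (fun p => I p b₀ ∧ I p b'.1), hmu b₀ b'.1 (Ne.symm b'.2)])
          |>.trans (by rw [aux_card_ne b₀, ← hn])
      have c2 : Nat.card (Σ pq : {x : P × P // x.1 ≠ x.2 ∧ I x.1 b₀ ∧ I x.2 b₀},
            {b' : B // (I pq.1.1 b' ∧ I pq.1.2 b') ∧ b' ≠ b₀})
          = (k * (k - 1)) * (l - 1) :=
        aux_card_sigma_const (fun pq : {x : P × P // x.1 ≠ x.2 ∧ I x.1 b₀ ∧ I x.2 b₀} => by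
          rw [aux_card_and_ne (Q := fun b' => I pq.1.1 b' ∧ I pq.1.2 b')
              ⟨pq.2.2.1, pq.2.2.2⟩, hl pq.1.1 pq.1.2 pq.2.1])
          |>.trans (by rw [aux_card_pairs (fun p => I p b₀), hcardb b₀])
      rw [← c1, Nat.card_congr e, c2]
    -- numerical bounds
    have hr1 : 1 ≤ r := by
      obtain ⟨q, hq⟩ := exists_ne p₀
      have h0 : 0 < Nat.card {b : B // I p₀ b ∧ I q b} := by
        rw [hl p₀ q (Ne.symm hq)]; omega
      obtain ⟨⟨b, hb, -⟩⟩ := (Nat.card_pos_iff.mp h0).1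
      have h1 : 0 < Nat.card {b' : B // I p₀ b'} := by
        haveI : Nonempty {b' : B // I p₀ b'} := ⟨⟨b, hb⟩⟩
        exact Nat.card_pos
      omega
    have hn2 : 2 ≤ n := by
      have h1 : 1 < Nat.card B :=
        Finite.one_lt_card_iff_nontrivial.mpr ⟨b₀, b₁, Ne.symm hb₁ne⟩
      omega
    -- pass to the integers
    zify [show 1 ≤ v by omega, show 1 ≤ k by omega] at hE2
    zify [show 1 ≤ n by omega, hr1] at hE3
    zify [show 1 ≤ n by omega, show 1 ≤ μ by omega, show 1 ≤ k by omega,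
      show 1 ≤ l by omega] at hE4
    have e1 : (n : ℤ) * k = (v : ℤ) * r := by exact_mod_cast hE1
    have hk0 : (0:ℤ) < (k:ℤ) := by exact_mod_cast (show 0 < k by omega)
    have s5 : ((n:ℤ) - 1) * (((k:ℤ) - 1) * ((l:ℤ) - 1) + ((r:ℤ) - 1))
        = (k:ℤ) * ((r:ℤ) - 1) ^ 2 := by
      apply mul_left_cancel₀ (ne_of_gt hk0)
      linear_combination (-((n:ℤ) - 1)) * hE4
        + (((n:ℤ) - 1) * μ + (k:ℤ) * ((r:ℤ) - 1) - ((n:ℤ) - 1)) * hE3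
    have s6 : ((n:ℤ) - 1) * ((r:ℤ) * ((k:ℤ) - 1) ^ 2 + ((v:ℤ) - 1) * ((r:ℤ) - k))
        = (k:ℤ) * ((r:ℤ) - 1) ^ 2 * ((v:ℤ) - 1) := by
      linear_combination ((v:ℤ) - 1) * s5 - ((n:ℤ) - 1) * ((k:ℤ) - 1) * hE2
    have s7 : ((v:ℤ) * r - k) * ((r:ℤ) * ((k:ℤ) - 1) ^ 2 + ((v:ℤ) - 1) * ((r:ℤ) - k))
        = (k:ℤ) ^ 2 * ((r:ℤ) - 1) ^ 2 * ((v:ℤ) - 1) := by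
      linear_combination (k:ℤ) * s6
        - ((r:ℤ) * ((k:ℤ) - 1) ^ 2 + ((v:ℤ) - 1) * ((r:ℤ) - k)) * e1
    have s8 : ((v:ℤ) - k) ^ 2 * (r:ℤ) * ((r:ℤ) - k) = 0 := by
      linear_combination s7
    have hvk : (k:ℤ) < (v:ℤ) := by exact_mod_cast hkv
    have hr0 : (0:ℤ) < (r:ℤ) := by exact_mod_cast (show 0 < r by omega)
    have hrk : (r:ℤ) = (k:ℤ) := by
      rcases mul_eq_zero.mp s8 with h | h
      · rcases mul_eq_zero.mp h with h' | h'
        · exfalso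
          have h'' : (v:ℤ) - k = 0 := pow_eq_zero_iff two_ne_zero |>.mp h'
          linarith
        · exfalso; linarith
      · linarith
    have hnv : (n:ℤ) = (v:ℤ) := by
      apply mul_right_cancel₀ (ne_of_gt hk0)
      rw [e1, hrk]
    have hnv' : n = v := by exact_mod_cast hnv
    rw [hv]
    exact hnv'
  · -- rank 3 : quasisymmetric
    rintro ⟨hTr, hrank⟩
    obtain ⟨b₀⟩ : Nonempty B := inferInstance
    obtain ⟨b₁, hb₁ne, p₁, hp₁⟩ := hmeet b₀
    have hμ1 : 0 < Nat.card {p : P // I p b₀ ∧ I p b₁} := by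
      haveI : Nonempty {p : P // I p b₀ ∧ I p b₁} := ⟨⟨p₁, hp₁⟩⟩
      exact Nat.card_pos
    have hex0 : ∃ c c' : B, c ≠ c' ∧ ¬∃ p, I p c ∧ I p c' := by
      by_contra h
      push_neg at h
      have h2 := claim2 b₀ h
      rw [hrank b₀] at h2
      omega
    obtain ⟨c, c', hcc, hdis⟩ := hex0
    refine ⟨Nat.card {p : P // I p b₀ ∧ I p b₁}, hμ1, ?_, ⟨c, c', hcc, ?_⟩,
      ⟨b₀, b₁, Ne.symm hb₁ne, rfl⟩⟩
    · intro b b' hbb'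
      by_cases hcom : ∃ p, I p b ∧ I p b'
      · right
        obtain ⟨g, hg0, hg1⟩ := hPT4 b₀ b₁ b b' (Ne.symm hb₁ne) hbb' ⟨p₁, hp₁⟩ hcom
        have h := Nat.card_congr (auxInterEquiv hGI g b₀ b₁)
        rw [hg0, hg1] at h
        exact h.symm
      · left
        exact aux_card_zero.mpr ⟨fun x => hcom ⟨x.1, x.2⟩⟩
    · exact aux_card_zero.mpr ⟨fun x => hdis ⟨x.1, x.2⟩⟩
end

section
/- Let 1 < k ≤ v be integers and G ≤ Aut(C_{v,k}) = Sym(v). The complete design C_{v,k} is non-trivial and G-pairwise transitive if and only if k = v−1 ≥ 3 and G is a 2-transitive subgroup of Sym(v). Moreover C_{v,v−1} is a symmetric 2-design. -/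
section Aux

variable {P : Type*} [DecidableEq P] [Fintype P]

lemma aux_exists_erase (s : Finset P) (h : s.card = Fintype.card P - 1)
    (hpos : 1 ≤ Fintype.card P) : ∃ a, a ∉ s ∧ s = Finset.univ.erase a := by
  have hcompl : sᶜ.card = 1 := by
    rw [Finset.card_compl, h]
    omega
  obtain ⟨a, ha⟩ := Finset.card_eq_one.mp hcompl
  have hanot : a ∉ s := by
    have : a ∈ sᶜ := ha ▸ Finset.mem_singleton_self a
    simpa using this
  refine ⟨a, hanot, ?_⟩
  have hs : s = sᶜᶜ := (compl_compl s).symm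
  rw [hs, ha]
  ext x
  simp [Finset.mem_erase, eq_comm]

lemma aux_image_erase (σ : Equiv.Perm P) (a : P) :
    (Finset.univ.erase a).image σ = Finset.univ.erase (σ a) := by
  rw [Finset.image_erase σ.injective, Finset.image_univ_equiv]

lemma aux_erase_inj {a b : P} (h : Finset.univ.erase a = Finset.univ.erase b) : a = b := by
  by_contra hab
  have : a ∈ Finset.univ.erase b := Finset.mem_erase.mpr ⟨hab, Finset.mem_univ a⟩
  rw [← h] at this
  exact (Finset.notMem_erase a _) this

end Aux

/-- The complete design `C_{v,k}` on the point set `P` (with `|P| = v`), whose blocks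
are all the `k`-subsets of `P`, is `G`-pairwise transitive for the subgroup
`G ≤ Sym(P)` (acting on blocks by taking images). -/
def SubgroupPairwiseTransitiveComplete (P : Type*) [DecidableEq P]
    (G : Subgroup (Equiv.Perm P)) (k : ℕ) : Prop :=
  (∀ p₁ p₂ q₁ q₂ : P, p₁ ≠ p₂ → q₁ ≠ q₂ → ∃ σ ∈ G, σ p₁ = q₁ ∧ σ p₂ = q₂) ∧
  (∀ (p q : P) (s t : Finset P), s.card = k → t.card = k → p ∈ s → q ∈ t →
    ∃ σ ∈ G, σ p = q ∧ s.image σ = t) ∧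
  (∀ (p q : P) (s t : Finset P), s.card = k → t.card = k → p ∉ s → q ∉ t →
    ∃ σ ∈ G, σ p = q ∧ s.image σ = t) ∧
  (∀ s₁ s₂ t₁ t₂ : Finset P, s₁.card = k → s₂.card = k → t₁.card = k → t₂.card = k →
    s₁ ≠ s₂ → t₁ ≠ t₂ → (s₁ ∩ s₂).Nonempty → (t₁ ∩ t₂).Nonempty →
    ∃ σ ∈ G, s₁.image σ = t₁ ∧ s₂.image σ = t₂) ∧
  (∀ s₁ s₂ t₁ t₂ : Finset P, s₁.card = k → s₂.card = k → t₁.card = k → t₂.card = k →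
    s₁ ∩ s₂ = ∅ → t₁ ∩ t₂ = ∅ →
    ∃ σ ∈ G, s₁.image σ = t₁ ∧ s₂.image σ = t₂)

/-- For integers `1 < k ≤ v` and `G ≤ Aut(C_{v,k}) = Sym(v)`, the complete design
`C_{v,k}` is non-trivial and `G`-pairwise transitive if and only if `k = v - 1 ≥ 3`
and `G` is a 2-transitive subgroup of `Sym(v)`.  Moreover `C_{v,v-1}` is a symmetric
2-design: it has as many blocks as points, and any two distinct points are incident
with a constant number of common blocks. -/
theorem complete_design_subgroup_pairwise_transitive_iff
    (P : Type*) [DecidableEq P] [Fintype P] (v k : ℕ)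
    (hP : Fintype.card P = v) (hk1 : 1 < k) (hkv : k ≤ v)
    (G : Subgroup (Equiv.Perm P)) :
    (((2 < k ∧ k < v) ∧ SubgroupPairwiseTransitiveComplete P G k) ↔
      (k = v - 1 ∧ 3 ≤ k ∧
        ∀ p₁ p₂ q₁ q₂ : P, p₁ ≠ p₂ → q₁ ≠ q₂ → ∃ σ ∈ G, σ p₁ = q₁ ∧ σ p₂ = q₂)) ∧
    Fintype.card {s : Finset P // s.card = v - 1} = Fintype.card P ∧
    (∃ l : ℕ, ∀ p q : P, p ≠ q →
      Nat.card {s : Finset P // s.card = v - 1 ∧ p ∈ s ∧ q ∈ s} = l) := by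
  subst hP
  refine ⟨⟨?_, ?_⟩, ?_, ?_⟩
  · -- forward direction
    rintro ⟨⟨hk2, hkv'⟩, h1, h2, h3, h4, h5⟩
    refine ⟨?_, by omega, h1⟩
    by_contra hne
    have hk2v : k + 2 ≤ Fintype.card P := by omega
    obtain ⟨u, -, hu⟩ := Finset.exists_subset_card_eq
      (show k + 2 ≤ (Finset.univ : Finset P).card by rw [Finset.card_univ]; omega)
    obtain ⟨w, hwu, hw⟩ := Finset.exists_subset_card_eq (show k ≤ u.card by omega)
    have hsd : (u \ w).card = 2 := by rw [Finset.card_sdiff_of_subset hwu]; omega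
    obtain ⟨a, b, hab, hab2⟩ := Finset.card_eq_two.mp hsd
    have haw : a ∉ w := by
      have : a ∈ u \ w := by rw [hab2]; simp
      exact (Finset.mem_sdiff.mp this).2
    have hbw : b ∉ w := by
      have : b ∈ u \ w := by rw [hab2]; simp
      exact (Finset.mem_sdiff.mp this).2
    obtain ⟨x, hx, y, hy, hxy⟩ := Finset.one_lt_card.mp (show 1 < w.card by omega)
    set s₂ := insert a (w.erase x) with hs₂def
    set t₂ := insert a (insert b ((w.erase x).erase y)) with ht₂def
    have hex : (w.erase x).card = k - 1 := by rw [Finset.card_erase_of_mem hx, hw]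
    have hyex : y ∈ w.erase x := Finset.mem_erase.mpr ⟨Ne.symm hxy, hy⟩
    have hexy : ((w.erase x).erase y).card = k - 2 := by
      rw [Finset.card_erase_of_mem hyex, hex]; omega
    have has₂ : a ∉ w.erase x := fun h => haw (Finset.mem_erase.mp h).2
    have hs₂card : s₂.card = k := by
      rw [hs₂def, Finset.card_insert_of_notMem has₂, hex]; omega
    have hbt : b ∉ (w.erase x).erase y :=
      fun h => hbw (Finset.mem_erase.mp (Finset.mem_erase.mp h).2).2
    have hat : a ∉ insert b ((w.erase x).erase y) := by
      simp only [Finset.mem_insert]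
      rintro (rfl | h)
      · exact hab rfl
      · exact haw (Finset.mem_erase.mp (Finset.mem_erase.mp h).2).2
    have ht₂card : t₂.card = k := by
      rw [ht₂def, Finset.card_insert_of_notMem hat, Finset.card_insert_of_notMem hbt,
        hexy]
      omega
    have hinter1 : w ∩ s₂ = w.erase x := by
      ext z
      simp only [hs₂def, Finset.mem_inter, Finset.mem_insert, Finset.mem_erase]
      constructor
      · rintro ⟨hzw, rfl | h⟩
        · exact absurd hzw haw
        · exact h
      · rintro ⟨hzx, hzw⟩
        exact ⟨hzw, Or.inr ⟨hzx, hzw⟩⟩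
    have hinter2 : w ∩ t₂ = (w.erase x).erase y := by
      ext z
      simp only [ht₂def, Finset.mem_inter, Finset.mem_insert, Finset.mem_erase]
      constructor
      · rintro ⟨hzw, rfl | rfl | h⟩
        · exact absurd hzw haw
        · exact absurd hzw hbw
        · exact h
      · rintro ⟨hzy, hzx, hzw⟩
        exact ⟨hzw, Or.inr (Or.inr ⟨hzy, hzx, hzw⟩)⟩
    have hne1 : w ≠ s₂ := by
      intro h
      exact haw (h ▸ Finset.mem_insert_self a _)
    have hne2 : w ≠ t₂ := by
      intro h
      exact haw (h ▸ Finset.mem_insert_self a _)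
    have hnon1 : (w ∩ s₂).Nonempty := by
      rw [hinter1, ← Finset.card_pos, hex]; omega
    have hnon2 : (w ∩ t₂).Nonempty := by
      rw [hinter2, ← Finset.card_pos, hexy]; omega
    obtain ⟨σ, -, e1, e2⟩ := h4 w s₂ w t₂ hw hs₂card hw ht₂card hne1 hne2 hnon1 hnon2
    have hcardeq : (w ∩ s₂).card = (w ∩ t₂).card := by
      have himg := Finset.image_inter w s₂ σ.injective
      rw [e1, e2] at himg
      rw [← Finset.card_image_of_injective (w ∩ s₂) σ.injective, himg]
    rw [hinter1, hinter2, hex, hexy] at hcardeq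
    omega
  · -- reverse direction
    rintro ⟨hkeq, hk3, htrans⟩
    have hv4 : 4 ≤ Fintype.card P := by omega
    have hpos : 1 ≤ Fintype.card P := by omega
    have hnt : Nontrivial P := Fintype.one_lt_card_iff_nontrivial.mp (by omega)
    refine ⟨⟨by omega, by omega⟩, htrans, ?_, ?_, ?_, ?_⟩
    · intro p q s t hs ht hps hqt
      obtain ⟨a, has, hsa⟩ := aux_exists_erase s (by omega) hpos
      obtain ⟨b, hbt, htb⟩ := aux_exists_erase t (by omega) hpos
      have hpa : p ≠ a := fun h => has (h ▸ hps)
      have hqb : q ≠ b := fun h => hbt (h ▸ hqt)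
      obtain ⟨σ, hσ, e1, e2⟩ := htrans p a q b hpa hqb
      exact ⟨σ, hσ, e1, by rw [hsa, aux_image_erase, e2, ← htb]⟩
    · intro p q s t hs ht hps hqt
      obtain ⟨a, has, hsa⟩ := aux_exists_erase s (by omega) hpos
      obtain ⟨b, hbt, htb⟩ := aux_exists_erase t (by omega) hpos
      have hpa : p = a := by
        by_contra h
        exact hps (hsa ▸ Finset.mem_erase.mpr ⟨h, Finset.mem_univ p⟩)
      have hqb : q = b := by
        by_contra h
        exact hqt (htb ▸ Finset.mem_erase.mpr ⟨h, Finset.mem_univ q⟩)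
      subst hpa
      subst hqb
      obtain ⟨p', hp'⟩ := exists_ne p
      obtain ⟨q', hq'⟩ := exists_ne q
      obtain ⟨σ, hσ, e1, e2⟩ := htrans p p' q q' (Ne.symm hp') (Ne.symm hq')
      exact ⟨σ, hσ, e1, by rw [hsa, aux_image_erase, e1, ← htb]⟩
    · intro s₁ s₂ t₁ t₂ h1c h2c h3c h4c hne1 hne2 _ _
      obtain ⟨a, -, ha⟩ := aux_exists_erase s₁ (by omega) hpos
      obtain ⟨b, -, hb⟩ := aux_exists_erase s₂ (by omega) hpos
      obtain ⟨c, -, hc⟩ := aux_exists_erase t₁ (by omega) hpos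
      obtain ⟨d, -, hd⟩ := aux_exists_erase t₂ (by omega) hpos
      have hab : a ≠ b := fun h => hne1 (by rw [ha, hb, h])
      have hcd : c ≠ d := fun h => hne2 (by rw [hc, hd, h])
      obtain ⟨σ, hσ, e1, e2⟩ := htrans a b c d hab hcd
      exact ⟨σ, hσ, by rw [ha, aux_image_erase, e1, ← hc],
        by rw [hb, aux_image_erase, e2, ← hd]⟩
    · intro s₁ s₂ t₁ t₂ h1c h2c _ _ hdisj _
      exfalso
      have hsum := Finset.card_union_add_card_inter s₁ s₂
      rw [hdisj, Finset.card_empty] at hsum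
      have hle := Finset.card_le_univ (s₁ ∪ s₂)
      omega
  · -- number of blocks equals number of points
    rw [Fintype.card_finset_len, Nat.choose_symm (show 1 ≤ Fintype.card P by omega),
      Nat.choose_one_right]
  · -- constant number of blocks through two distinct points
    refine ⟨Fintype.card P - 2, fun p q hpq => ?_⟩
    have hpos : 1 ≤ Fintype.card P := by omega
    have key : Nat.card {a : P // a ≠ p ∧ a ≠ q} =
        Nat.card {s : Finset P // s.card = Fintype.card P - 1 ∧ p ∈ s ∧ q ∈ s} := by
      apply Nat.card_eq_of_bijective (fun a =>
        ⟨Finset.univ.erase a.1,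
          by rw [Finset.card_erase_of_mem (Finset.mem_univ _), Finset.card_univ],
          Finset.mem_erase.mpr ⟨Ne.symm a.2.1, Finset.mem_univ p⟩,
          Finset.mem_erase.mpr ⟨Ne.symm a.2.2, Finset.mem_univ q⟩⟩)
      constructor
      · intro a a' h
        exact Subtype.ext (aux_erase_inj (congrArg Subtype.val h))
      · rintro ⟨s, hcard, hp, hq⟩
        obtain ⟨a, has, hsa⟩ := aux_exists_erase s hcard hpos
        refine ⟨⟨a, fun h => has (h ▸ hp), fun h => has (h ▸ hq)⟩, ?_⟩
        exact Subtype.ext hsa.symm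
    rw [← key, Nat.card_eq_fintype_card, Fintype.card_subtype]
    have hfil : Finset.univ.filter (fun a : P => a ≠ p ∧ a ≠ q) =
        Finset.univ \ {p, q} := by
      ext z
      simp [Finset.mem_sdiff]
    rw [hfil, Finset.card_sdiff_of_subset (Finset.subset_univ _), Finset.card_univ,
      Finset.card_pair hpq]
end

section
/- Suppose D is a non-trivial G-pairwise transitive 2-(v,k,λ) design and there exists a G-invariant partition S of the block set B such that the induced action G^S is 2-transitive. If the actions of G on P and on S are equivalent (i.e. there exists a G-equivariant bijection from P to S), then every part of S has size 1, k = v−1, and the map sending each block b to the unique point not incident with b is a bijection from B to P (so D is the complete design C_{v,v−1}). -/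
open scoped Pointwise

/-- Suppose the non-trivial 2-design `D` is `G`-pairwise transitive, `S` is a
`G`-invariant partition of the block set on which `G` acts 2-transitively, and the
actions of `G` on the points and on `S` are equivalent (via the `G`-equivariant
bijection `φ`).  Then all parts of `S` are singletons, `k = v - 1`, and mapping each
block to the unique point not incident with it is a bijection, i.e. `D` is the
complete design `C_{v,v-1}`. -/
theorem equivalent_actions_implies_complete_design
    {P B G : Type*} [Finite P] [Finite B] [Nonempty P] [Nonempty B]
    [Group G] [MulAction G P] [MulAction G B]
    (I : P → B → Prop) (v k l : ℕ)
    (hD : Is2Design I v k l) (hnt : 2 < k ∧ k < v)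
    (hGI : ∀ (g : G) (p : P) (b : B), I p b ↔ I (g • p) (g • b))
    (hfaith : ∀ g : G, (∀ p : P, g • p = p) → (∀ b : B, g • b = b) → g = 1)
    (hPT : PairwiseTransitive G I)
    (S : Set (Set B)) (hpart : Setoid.IsPartition S)
    (hinv : ∀ (g : G), ∀ s ∈ S, g • s ∈ S)
    (h2t : ∀ s₁ s₂ t₁ t₂ : Set B, s₁ ∈ S → s₂ ∈ S → t₁ ∈ S → t₂ ∈ S →
      s₁ ≠ s₂ → t₁ ≠ t₂ → ∃ g : G, g • s₁ = t₁ ∧ g • s₂ = t₂)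
    (φ : P → Set B) (hφS : ∀ p, φ p ∈ S) (hφinj : Function.Injective φ)
    (hφsurj : ∀ s ∈ S, ∃ p, φ p = s)
    (hφequiv : ∀ (g : G) (p : P), φ (g • p) = g • φ p) :
    (∀ s ∈ S, ∃ b : B, s = {b}) ∧ k = v - 1 ∧
      ∃ e : B ≃ P, ∀ (b : B) (p : P), ¬ I p b ↔ e b = p := by
  obtain ⟨hv, hk2, hkb, hl⟩ := hD
  obtain ⟨hk3, hkv⟩ := hnt
  -- uniqueness of parts
  have huniq : ∀ {s t : Set B} (b : B), s ∈ S → t ∈ S → b ∈ s → b ∈ t → s = t := by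
    intro s t b hs ht hbs hbt
    obtain ⟨u, -, hu⟩ := (hpart.2 b)
    rw [hu s ⟨hs, hbs⟩, hu t ⟨ht, hbt⟩]
  have hφeq : ∀ {p q : P} (b : B), b ∈ φ p → b ∈ φ q → p = q := by
    intro p q b hp hq
    exact hφinj (huniq b (hφS p) (hφS q) hp hq)
  -- Claim A: incident implies not in the part
  have claimA : ∀ (p : P) (b : B), I p b → b ∉ φ p := by
    intro p b hI hmem
    have hall : ∀ (p' : P) (b' : B), I p' b' → b' ∈ φ p' := by
      intro p' b' hI'
      obtain ⟨g, hgp, hgb⟩ := hPT.2.1 p p' b b' hI hI'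
      rw [← hgp, ← hgb, hφequiv]
      exact Set.smul_mem_smul_set hmem
    -- pick block b, two distinct incident points
    have h2 : 1 < Nat.card {p : P // I p b} := by rw [hkb b]; omega
    have : Nontrivial {p : P // I p b} := Finite.one_lt_card_iff_nontrivial.mp h2
    obtain ⟨⟨p₁, h₁⟩, ⟨p₂, h₂⟩, hne⟩ := this.exists_pair_ne
    have : p₁ = p₂ := hφeq b (hall p₁ b h₁) (hall p₂ b h₂)
    exact hne (Subtype.ext this)
  -- Claim B : non-incident implies in the part
  have claimB : ∀ (p : P) (b : B), ¬ I p b → b ∈ φ p := by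
    -- some block is in some part
    have : ∃ (p₀ : P) (b₀ : B), b₀ ∈ φ p₀ := by
      obtain ⟨b₀⟩ := ‹Nonempty B›
      obtain ⟨s, ⟨hs, hbs⟩, -⟩ := hpart.2 b₀
      obtain ⟨p₀, hp₀⟩ := hφsurj s hs
      exact ⟨p₀, b₀, hp₀ ▸ hbs⟩
    obtain ⟨p₀, b₀, hmem₀⟩ := this
    have hnI₀ : ¬ I p₀ b₀ := fun h => claimA p₀ b₀ h hmem₀
    intro p b hnI
    obtain ⟨g, hgp, hgb⟩ := hPT.2.2.1 p₀ p b₀ b hnI₀ hnI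
    rw [← hgp, ← hgb, hφequiv]
    exact Set.smul_mem_smul_set hmem₀
  have hiff : ∀ (p : P) (b : B), b ∈ φ p ↔ ¬ I p b :=
    fun p b => ⟨fun h hI => claimA p b hI h, claimB p b⟩
  -- Claim C: unique non-incident point
  have claimC : ∀ b : B, ∃! p : P, ¬ I p b := by
    intro b
    have hex : ∃ p : P, ¬ I p b := by
      by_contra hall
      push_neg at hall
      have : Nat.card {p : P // I p b} = Nat.card P :=
        Nat.card_eq_of_bijective Subtype.val
          ⟨Subtype.val_injective, fun p => ⟨⟨p, hall p⟩, rfl⟩⟩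
      rw [hkb b, hv] at this; omega
    obtain ⟨p, hp⟩ := hex
    exact ⟨p, hp, fun q hq => hφeq b ((hiff q b).mpr hq) ((hiff p b).mpr hp)⟩
  -- k = v - 1
  have hkv1 : v = k + 1 := by
    obtain ⟨b⟩ := ‹Nonempty B›
    have h1 : Nat.card {p : P // ¬ I p b} = 1 := by
      rw [Nat.card_eq_one_iff_unique]
      obtain ⟨p, hp, hu⟩ := claimC b
      exact ⟨⟨fun x y => Subtype.ext ((hu x x.2).trans (hu y y.2).symm)⟩, ⟨p, hp⟩⟩
    have := Set.ncard_add_ncard_compl {p : P | I p b}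
    rw [← Nat.card_coe_set_eq, ← Nat.card_coe_set_eq] at this
    have hc : ({p : P | I p b}ᶜ : Set P) = {p : P | ¬ I p b} := rfl
    rw [hc, hv] at this
    have e1 : Nat.card ↥{p : P | I p b} = k := hkb b
    have e2 : Nat.card ↥{p : P | ¬ I p b} = 1 := h1
    omega
  -- parts are singletons
  have hsing : ∀ p : P, ∃ b : B, φ p = {b} := by
    intro p
    have hne : (φ p).Nonempty := Set.nonempty_iff_ne_empty.mpr
      (fun h => hpart.1 (h ▸ hφS p))
    obtain ⟨b, hb⟩ := hne
    refine ⟨b, Set.eq_singleton_iff_unique_mem.mpr ⟨hb, ?_⟩⟩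
    intro b' hb'
    by_contra hbne
    -- pick q ≠ p
    have hPnt : Nontrivial P := by
      rw [← Finite.one_lt_card_iff_nontrivial, hv]; omega
    obtain ⟨q, hq⟩ := exists_ne p
    -- c in φ q
    have hneq : (φ q).Nonempty := Set.nonempty_iff_ne_empty.mpr
      (fun h => hpart.1 (h ▸ hφS q))
    obtain ⟨c, hc⟩ := hneq
    have hbc : b ≠ c := fun h => hq (hφeq b hb (h ▸ hc)).symm
    -- pick r ∉ {p, q}
    have hr : ∃ r : P, r ≠ p ∧ r ≠ q := by
      have h2 := Set.ncard_add_ncard_compl ({p, q} : Set P)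
      have hle : ({p, q} : Set P).ncard ≤ 2 := by
        apply le_trans (Set.ncard_insert_le p {q})
        simp [Set.ncard_singleton]
      rw [hv] at h2
      have : ({p, q} : Set P)ᶜ.Nonempty := by
        rw [Set.nonempty_iff_ne_empty]
        intro he
        rw [he, Set.ncard_empty] at h2
        omega
      obtain ⟨r, hrm⟩ := this
      simp only [Set.mem_compl_iff, Set.mem_insert_iff, Set.mem_singleton_iff, not_or] at hrm
      exact ⟨r, hrm.1, hrm.2⟩
    obtain ⟨r, hrp, hrq⟩ := hr
    -- r is incident with b, b', c
    have hIrb : I r b := by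
      by_contra h
      exact hrp (hφeq b ((hiff r b).mpr h) hb)
    have hIrb' : I r b' := by
      by_contra h
      exact hrp (hφeq b' ((hiff r b').mpr h) hb')
    have hIrc : I r c := by
      by_contra h
      exact hrq (hφeq c ((hiff r c).mpr h) hc)
    obtain ⟨g, hgb, hgb'⟩ := hPT.2.2.2.1 b b' b c (Ne.symm hbne) hbc ⟨r, hIrb, hIrb'⟩ ⟨r, hIrb, hIrc⟩
    -- g • φ p = φ (g • p) contains b and c
    have hb2 : b ∈ φ (g • p) := by
      rw [hφequiv, ← hgb]; exact Set.smul_mem_smul_set hb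
    have hc2 : c ∈ φ (g • p) := by
      rw [hφequiv, ← hgb']; exact Set.smul_mem_smul_set hb'
    have h1 : g • p = p := hφeq b hb2 hb
    rw [h1] at hc2
    exact hq (hφeq c hc hc2)
  refine ⟨?_, by omega, ?_⟩
  · intro s hs
    obtain ⟨p, hp⟩ := hφsurj s hs
    obtain ⟨b, hb⟩ := hsing p
    exact ⟨b, hp ▸ hb⟩
  · have hbij : Function.Bijective (fun b : B => (claimC b).choose) := by
      constructor
      · intro b₁ b₂ h
        dsimp only at h
        have h₁ : ¬ I (claimC b₁).choose b₁ := (claimC b₁).choose_spec.1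
        have h₂ : ¬ I (claimC b₂).choose b₂ := (claimC b₂).choose_spec.1
        obtain ⟨b, hb⟩ := hsing (claimC b₁).choose
        have m₁ : b₁ ∈ φ (claimC b₁).choose := (hiff _ _).mpr h₁
        have m₂ : b₂ ∈ φ (claimC b₁).choose := by
          rw [h]; exact (hiff _ _).mpr h₂
        rw [hb] at m₁ m₂
        rw [Set.mem_singleton_iff] at m₁ m₂
        rw [m₁, m₂]
      · intro p
        obtain ⟨b, hb⟩ := hsing p
        have : b ∈ φ p := hb ▸ rfl
        exact ⟨b, ((claimC b).choose_spec.2 p ((hiff p b).mp this)).symm ▸ rfl⟩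
    refine ⟨Equiv.ofBijective _ hbij, fun b p => ?_⟩
    simp only [Equiv.ofBijective_apply]
    constructor
    · intro h; exact ((claimC b).choose_spec.2 p h).symm
    · intro h; rw [← h]; exact (claimC b).choose_spec.1
end

section
/- Suppose D is a non-trivial G-pairwise transitive 2-(v,k,λ) design and G^B has rank 3. Then 3 ≤ k ≤ v/2; the number r of blocks incident with each point satisfies 3 ≤ r ≤ |B|/2; and for every block b, the stabiliser G_b has an orbit on P of size k. -/
lemma myDoubleCount {P B : Type*} [Finite P] [Finite B] (I : P → B → Prop) {k r : ℕ}
    (hk : ∀ b : B, Nat.card {p : P // I p b} = k)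
    (hr : ∀ p : P, Nat.card {b : B // I p b} = r) :
    Nat.card P * r = Nat.card B * k := by
  classical
  have _ := Fintype.ofFinite P
  have _ := Fintype.ofFinite B
  have e1 : {x : P × B // I x.1 x.2} ≃ Σ p : P, {b : B // I p b} :=
    ⟨fun x => ⟨x.1.1, x.1.2, x.2⟩, fun y => ⟨(y.1, y.2.1), y.2.2⟩,
      fun ⟨⟨p, b⟩, h⟩ => rfl, fun ⟨p, b, h⟩ => rfl⟩
  have e2 : {x : P × B // I x.1 x.2} ≃ Σ b : B, {p : P // I p b} :=
    ⟨fun x => ⟨x.1.2, x.1.1, x.2⟩, fun y => ⟨(y.2.1, y.1), y.2.2⟩,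
      fun ⟨⟨p, b⟩, h⟩ => rfl, fun ⟨b, p, h⟩ => rfl⟩
  have h1 : Nat.card {x : P × B // I x.1 x.2} = Nat.card P * r := by
    rw [Nat.card_congr e1, Nat.card_eq_fintype_card, Fintype.card_sigma]
    have hc : ∀ p : P, Fintype.card {b : B // I p b} = r := fun p => by
      rw [← Nat.card_eq_fintype_card, hr]
    simp [hc, Finset.sum_const, Finset.card_univ, Nat.card_eq_fintype_card, mul_comm]
  have h2 : Nat.card {x : P × B // I x.1 x.2} = Nat.card B * k := by
    rw [Nat.card_congr e2, Nat.card_eq_fintype_card, Fintype.card_sigma]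
    have hc : ∀ b : B, Fintype.card {p : P // I p b} = k := fun b => by
      rw [← Nat.card_eq_fintype_card, hk]
    simp [hc, Finset.sum_const, Finset.card_univ, Nat.card_eq_fintype_card, mul_comm]
  omega

lemma myCardNe {P : Type*} [Finite P] (p : P) :
    Nat.card {q : P // q ≠ p} = Nat.card P - 1 := by
  classical
  have _ := Fintype.ofFinite P
  rw [Nat.card_eq_fintype_card, Nat.card_eq_fintype_card]
  have : Fintype.card {q : P // ¬ q = p} = Fintype.card P - Fintype.card {q : P // q = p} :=
    Fintype.card_subtype_compl _
  simpa [Fintype.card_subtype_eq] using this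

lemma myCardErase {P B : Type*} [Finite P] (I : P → B → Prop) {k : ℕ} {b : B} {p : P}
    (hk : Nat.card {q : P // I q b} = k) (hpb : I p b) :
    Nat.card {q : P // I q b ∧ q ≠ p} = k - 1 := by
  classical
  have _ := Fintype.ofFinite P
  rw [Nat.card_eq_fintype_card] at hk ⊢
  rw [Fintype.card_subtype]
  have heq : (Finset.univ.filter fun q : P => I q b ∧ q ≠ p)
      = (Finset.univ.filter fun q : P => I q b).erase p := by
    ext q; simp [Finset.mem_erase, and_comm]
  rw [heq, Finset.card_erase_of_mem (by simp [hpb]), ← Fintype.card_subtype, hk]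

/-- For a non-trivial `G`-pairwise transitive 2-design in which `G` has rank 3 on
blocks: `3 ≤ k ≤ v/2`, the number `r` of blocks on each point satisfies
`3 ≤ r ≤ |B|/2`, and every block stabiliser has an orbit on the points of size `k`. -/
theorem rank_three_block_orbit_sizes
    {P B G : Type*} [Finite P] [Finite B] [Nonempty P] [Nonempty B]
    [Group G] [MulAction G P] [MulAction G B]
    (I : P → B → Prop) (v k l r : ℕ)
    (hD : Is2Design I v k l) (hnt : 2 < k ∧ k < v)
    (hr : ∀ p : P, Nat.card {b : B // I p b} = r)
    (hGI : ∀ (g : G) (p : P) (b : B), I p b ↔ I (g • p) (g • b))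
    (hfaith : ∀ g : G, (∀ p : P, g • p = p) → (∀ b : B, g • b = b) → g = 1)
    (hPT : PairwiseTransitive G I)
    (hrank : HasRank G B 3) :
    3 ≤ k ∧ 2 * k ≤ v ∧ 3 ≤ r ∧ 2 * r ≤ Nat.card B ∧
      ∀ b : B, ∃ p : P, Nat.card ↥(MulAction.orbit (MulAction.stabilizer G b) p) = k := by
  classical
  obtain ⟨hv, hk2, hk, hl⟩ := hD
  obtain ⟨hk3, hkv⟩ := hnt
  obtain ⟨b₀⟩ := ‹Nonempty B›
  -- l ≥ 1
  have htriv : Nontrivial {p : P // I p b₀} := by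
    have _ := Fintype.ofFinite {p : P // I p b₀}
    apply Fintype.one_lt_card_iff_nontrivial.mp
    rw [← Nat.card_eq_fintype_card, hk b₀]; omega
  obtain ⟨⟨p₁, hp1⟩, ⟨p₂, hp2⟩, hne⟩ := htriv
  have hp12 : p₁ ≠ p₂ := fun h => hne (Subtype.ext h)
  have hl1 : 1 ≤ l := by
    have : Nonempty {b : B // I p₁ b ∧ I p₂ b} := ⟨⟨b₀, hp1, hp2⟩⟩
    rw [← hl p₁ p₂ hp12]
    exact Nat.card_pos
  -- disjoint blocks exist, via rank 3
  have hdisj : ∃ b b' : B, ¬ ∃ p, I p b ∧ I p b' := by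
    by_contra hmeets
    push_neg at hmeets
    have hq := hrank.2 b₀
    have key : ∀ b₂ b₂' : B, b₂ ≠ b₀ → b₂' ≠ b₀ →
        (MulAction.orbitRel (MulAction.stabilizer G b₀) B) b₂ b₂' := by
      intro b₂ b₂' h2 h2'
      obtain ⟨g, hg1, hg2⟩ := hPT.2.2.2.1 b₀ b₂' b₀ b₂ (Ne.symm h2') (Ne.symm h2)
        (hmeets _ _) (hmeets _ _)
      exact MulAction.mem_orbit_iff.mpr ⟨⟨g, hg1⟩, hg2⟩
    have hresp : ∀ x y : B, (MulAction.orbitRel (MulAction.stabilizer G b₀) B) x y →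
        (decide (x = b₀) : Bool) = decide (y = b₀) := by
      intro x y hxy
      obtain ⟨g, hg⟩ := hxy
      have hg' : (g : G) • y = x := hg
      have hgb : (g : G) • b₀ = b₀ := g.2
      have hiff : x = b₀ ↔ y = b₀ := by
        constructor
        · intro h
          apply smul_left_cancel (g : G)
          rw [hg', hgb, h]
        · intro h
          rw [← hg', h, hgb]
      rw [decide_eq_decide]
      exact hiff
    let f : Quotient (MulAction.orbitRel (MulAction.stabilizer G b₀) B) → Bool :=
      Quotient.lift (fun b => decide (b = b₀)) hresp
    have hfinj : Function.Injective f := by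
      intro c d
      induction c using Quotient.inductionOn with | h x =>
      induction d using Quotient.inductionOn with | h y =>
      intro hxy
      simp only [f, Quotient.lift_mk] at hxy
      by_cases hx : x = b₀
      · by_cases hy : y = b₀
        · subst hx; subst hy; rfl
        · simp [hx, hy] at hxy
      · by_cases hy : y = b₀
        · simp [hx, hy] at hxy
        · exact Quotient.sound (key x y hx hy)
    have := Nat.card_le_card_of_injective f hfinj
    simp [Nat.card_eq_fintype_card, hq] at this
  obtain ⟨ba, bb, hab⟩ := hdisj
  -- 2k ≤ v
  have h2kv : 2 * k ≤ v := by
    have finj : Function.Injective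
        (Sum.elim (fun x : {p : P // I p ba} => x.val) (fun x : {p : P // I p bb} => x.val)) := by
      rintro (x | x) (y | y) hxy
      · simp only [Sum.elim_inl] at hxy; exact congrArg Sum.inl (Subtype.ext hxy)
      · simp only [Sum.elim_inl, Sum.elim_inr] at hxy
        exact absurd ⟨x.val, x.2, hxy ▸ y.2⟩ hab
      · simp only [Sum.elim_inl, Sum.elim_inr] at hxy
        exact absurd ⟨y.val, y.2, hxy ▸ x.2⟩ hab
      · simp only [Sum.elim_inr] at hxy; exact congrArg Sum.inr (Subtype.ext hxy)
    have hle := Nat.card_le_card_of_injective _ finj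
    rw [Nat.card_sum, hk, hk, hv] at hle
    omega
  -- counting identity
  have hcount : v * r = Nat.card B * k := by
    rw [← hv]; exact myDoubleCount I hk hr
  -- covering bound: v - 1 ≤ r * (k - 1)
  obtain ⟨p⟩ := ‹Nonempty P›
  have hcover : v - 1 ≤ r * (k - 1) := by
    have hchoice : ∀ q : {q : P // q ≠ p}, ∃ b : B, I p b ∧ I q.val b := by
      intro q
      have hpos : 0 < Nat.card {b : B // I p b ∧ I q.val b} := by
        rw [hl p q.val (Ne.symm q.2)]; omega
      obtain ⟨⟨b, hb⟩⟩ := (Nat.card_pos_iff.mp hpos).1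
      exact ⟨b, hb⟩
    choose fb hf1 hf2 using hchoice
    let F : {q : P // q ≠ p} → Σ b : {b : B // I p b}, {q : P // I q b.val ∧ q ≠ p} :=
      fun q => ⟨⟨fb q, hf1 q⟩, ⟨q.val, hf2 q, q.2⟩⟩
    have hFinj : Function.Injective F := by
      intro q q' h
      have : (F q).2.val = (F q').2.val := by rw [h]
      exact Subtype.ext this
    have hle := Nat.card_le_card_of_injective F hFinj
    have hL : Nat.card {q : P // q ≠ p} = v - 1 := by rw [myCardNe, hv]
    have hR : Nat.card (Σ b : {b : B // I p b}, {q : P // I q b.val ∧ q ≠ p})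
        = r * (k - 1) := by
      have _ := Fintype.ofFinite P
      have _ := Fintype.ofFinite B
      rw [Nat.card_eq_fintype_card, Fintype.card_sigma]
      have hc : ∀ b : {b : B // I p b}, Fintype.card {q : P // I q b.val ∧ q ≠ p} = k - 1 :=
        fun b => by rw [← Nat.card_eq_fintype_card, myCardErase I (hk b.val) b.2]
      simp only [hc, Finset.sum_const, Finset.card_univ, smul_eq_mul]
      rw [← Nat.card_eq_fintype_card, hr]
    rw [hL, hR] at hle
    exact hle
  have hr3 : 3 ≤ r := by
    by_contra hcon
    push_neg at hcon
    have : r * (k - 1) ≤ 2 * (k - 1) :=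
      Nat.mul_le_mul_right _ (by omega)
    omega
  have h2rB : 2 * r ≤ Nat.card B := by
    have h1 : 2 * k * r ≤ v * r := Nat.mul_le_mul_right r h2kv
    rw [hcount] at h1
    have h2 : 2 * r * k ≤ Nat.card B * k := by
      calc 2 * r * k = 2 * k * r := by ring
        _ ≤ Nat.card B * k := h1
    exact Nat.le_of_mul_le_mul_right h2 (by omega)
  refine ⟨hk3, h2kv, hr3, h2rB, ?_⟩
  intro b
  have hbpos : 0 < Nat.card {q : P // I q b} := by rw [hk b]; omega
  obtain ⟨⟨pb, hpb⟩⟩ := (Nat.card_pos_iff.mp hbpos).1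
  refine ⟨pb, ?_⟩
  have hset : (MulAction.orbit (MulAction.stabilizer G b) pb) = {q : P | I q b} := by
    ext q
    constructor
    · rintro ⟨g, rfl⟩
      have hgb : (g : G) • b = b := g.2
      have : I ((g : G) • pb) ((g : G) • b) := (hGI (g : G) pb b).mp hpb
      rw [hgb] at this
      exact this
    · intro hq
      obtain ⟨g, hg1, hg2⟩ := hPT.2.1 pb q b b hpb hq
      exact ⟨⟨g, hg2⟩, hg1⟩
  rw [hset]
  exact hk b
end

section
/- Suppose D is a non-trivial G-pairwise transitive 2-(v,k,λ) design, and the permutation group G^B induced on blocks has rank 3 and is primitive. Then G is almost simple, i.e. G has a nonabelian simple normal subgroup T whose centraliser in G is trivial. -/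
open scoped Pointwise

/-- The permutation group induced by `G` on `X` is primitive: it is transitive and
the only `G`-invariant partitions of `X` are the partition into singletons and the
partition with a single part. -/
def IsPrimitiveOn (G X : Type*) [Group G] [MulAction G X] : Prop :=
  MulAction.IsPretransitive G X ∧
    ∀ S : Set (Set X), Setoid.IsPartition S → (∀ (g : G), ∀ s ∈ S, g • s ∈ S) →
      (∀ s ∈ S, ∃ x : X, s = {x}) ∨ S = {Set.univ}

/-- `G` is almost simple: it has a nonabelian simple normal subgroup with trivial
centraliser. -/
def IsAlmostSimple (G : Type*) [Group G] : Prop :=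
  ∃ T : Subgroup G, T.Normal ∧ IsSimpleGroup T ∧
    (∃ x ∈ T, ∃ y ∈ T, x * y ≠ y * x) ∧ Subgroup.centralizer (T : Set G) = ⊥

theorem Setoid.forall_rel_or_forall_rel_of_forall_rel_or {α : Type*} (r s : Setoid α)
    (h : ∀ x y, r x y ∨ s x y) : (∀ x y, r x y) ∨ ∀ x y, s x y := by
  refine or_iff_not_imp_left.2 fun hr => ?_
  push Not at hr
  obtain ⟨a, b, hab⟩ := hr
  have hsa : ∀ z, s a z := fun z => by
    by_cases haz : r a z
    · have hzb : ¬ r z b := fun hzb => hab (r.trans haz hzb)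
      exact s.trans ((h a b).resolve_left hab) (s.symm ((h z b).resolve_left hzb))
    · exact (h a z).resolve_left haz
  exact fun x y => s.trans (s.symm (hsa x)) (hsa y)

theorem exists_isPGroup_of_orderOf_eq {H : Type*} [Group H] [Finite H]
    (h : ∀ x y : H, x ≠ 1 → y ≠ 1 → orderOf x = orderOf y) : ∃ p, p.Prime ∧ IsPGroup p H := by
  rcases subsingleton_or_nontrivial H with hH | hH
  · exact ⟨2, Nat.prime_two, .of_subsingleton 2 H⟩
  set p := (Nat.card H).minFac
  have hp : p.Prime := Nat.minFac_prime Finite.one_lt_card.ne'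
  have : Fact p.Prime := ⟨hp⟩
  obtain ⟨y, hy⟩ := exists_prime_orderOf_dvd_card' p (Nat.minFac_dvd _)
  have hy1 : y ≠ 1 := fun h => hp.one_lt.ne' (by rw [← hy, h, orderOf_one])
  refine ⟨p, hp, IsPGroup.iff_orderOf.2 fun x => ?_⟩
  rcases eq_or_ne x 1 with rfl | hx
  · exact ⟨0, by simp⟩
  · exact ⟨1, by rw [pow_one, h x y hx hy1, hy]⟩

namespace Subgroup

variable {G : Type*} [Group G]

open ConjAct

theorem commute_of_disjoint_of_le_normalizer {K L : Subgroup G} (hKL : Disjoint K L)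
    (hK : L ≤ normalizer K) (hL : K ≤ normalizer L) {x y : G} (hx : x ∈ K) (hy : y ∈ L) :
    Commute x y := by
  rw [← commutatorElement_eq_one_iff_commute, commutatorElement_def]
  refine hKL.le_bot ⟨?_, ?_⟩
  · simpa [mul_assoc] using K.mul_mem hx ((mem_normalizer_iff.1 (hK hy) _).1 (K.inv_mem hx))
  · exact L.mul_mem ((mem_normalizer_iff.1 (hL hx) y).1 hy) (L.inv_mem hy)

lemma mem_conjAct_smul_iff {H : Subgroup G} {g x : G} :
    x ∈ toConjAct g • H ↔ g⁻¹ * x * g ∈ H := by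
  rw [mem_pointwise_smul_iff_inv_smul_mem, ← toConjAct_inv, toConjAct_smul, inv_inv]

lemma conj_mem_conjAct_smul {H : Subgroup G} {x : G} (g : G) (hx : x ∈ H) :
    g * x * g⁻¹ ∈ toConjAct g • H := by
  simpa [mem_conjAct_smul_iff, mul_assoc] using hx

lemma conjAct_smul_le_of_normal {N H : Subgroup G} [N.Normal] (h : H ≤ N) (g : G) :
    toConjAct g • H ≤ N := by
  simpa only [‹N.Normal›.conjAct] using
    (pointwise_smul_le_pointwise_smul_iff (a := toConjAct g)).2 h

lemma le_normalizer_conjAct_smul {N H : Subgroup G} [N.Normal] (h : N ≤ normalizer H) (g : G) :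
    N ≤ normalizer (toConjAct g • H : Subgroup G) := fun n hn => by
  refine mem_normalizer_iff.2 fun x => ?_
  have hn' : g⁻¹ * n * g ∈ N := by simpa using ‹N.Normal›.conj_mem n hn g⁻¹
  rw [mem_conjAct_smul_iff, mem_conjAct_smul_iff, mem_normalizer_iff.1 (h hn') (g⁻¹ * x * g)]
  group

theorem commute_of_minimal_of_conjAct_smul_ne [Finite G] {N T : Subgroup G} [N.Normal]
    (hT : Minimal (fun K : Subgroup G => K ≠ ⊥ ∧ K ≤ N ∧ N ≤ normalizer K) T) {g : G}
    (hg : toConjAct g • T ≠ T) {x y : G} (hx : x ∈ T) (hy : y ∈ toConjAct g • T) :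
    Commute x y := by
  obtain ⟨-, hTN, hNT⟩ := hT.prop
  have hNgT := le_normalizer_conjAct_smul hNT g
  refine commute_of_disjoint_of_le_normalizer ?_ ((conjAct_smul_le_of_normal hTN g).trans hNT)
    (hTN.trans hNgT) hx hy
  rw [disjoint_iff]
  by_contra hne
  have hle : T ≤ toConjAct g • T := (hT.2 ⟨hne, inf_le_left.trans hTN,
    le_inf hNT hNgT |>.trans inf_normalizer_le_normalizer_inf⟩ inf_le_left).trans inf_le_right
  exact hg (eq_of_le_of_card_ge hle (Nat.card_congr (equivSMul _ T).toEquiv).ge).symm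

theorem normalClosure_le_centralizer_of_minimal [Finite G] {N T : Subgroup G} [N.Normal]
    (hT : Minimal (fun K : Subgroup G => K ≠ ⊥ ∧ K ≤ N ∧ N ≤ normalizer K) T) {z : G}
    (hz : z ∈ T) (hzT : ∀ t ∈ T, Commute z t) : normalClosure (T : Set G) ≤ centralizer {z} := by
  rw [normalClosure, closure_le]
  intro x hx
  obtain ⟨t, ht, hc⟩ := Group.mem_conjugatesOfSet_iff.1 hx
  obtain ⟨c, rfl⟩ := isConj_iff.1 hc
  have hct := conj_mem_conjAct_smul c ht
  refine mem_centralizer_singleton_iff.2 (Commute.symm ?_).eq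
  by_cases hcT : toConjAct c • T = T
  · rw [hcT] at hct
    exact hzT _ hct
  · exact commute_of_minimal_of_conjAct_smul_ne hT hcT hz hct

end Subgroup

open Finset

namespace Is2Design

variable {P B : Type*} {I : P → B → Prop} {v k l : ℕ}

section Fintype

variable [∀ p b, Decidable (I p b)]

lemma card_points_on [Fintype P] (hD : Is2Design I v k l) (b : B) : #{p | I p b} = k := by
  rw [← hD.2.2.1 b, Nat.card_eq_fintype_card, Fintype.card_subtype]

lemma card_common_blocks [Fintype B] (hD : Is2Design I v k l) {p q : P} (hpq : p ≠ q) :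
    #{b | I p b ∧ I q b} = l := by
  rw [← hD.2.2.2 p q hpq, Nat.card_eq_fintype_card, Fintype.card_subtype]

lemma lambda_pos [Fintype P] [Fintype B] (hD : Is2Design I v k l) (b : B) : 0 < l := by
  obtain ⟨p, hp, q, hq, hpq⟩ := one_lt_card.1 (hD.card_points_on b ▸ hD.2.1)
  rw [← hD.card_common_blocks hpq, card_pos]
  exact ⟨b, by simp_all⟩

lemma card_blocks_through_mul [Fintype P] [Fintype B] (hD : Is2Design I v k l) (p : P) :
    #{b | I p b} * (k - 1) = (v - 1) * l := by
  classical
  have h := card_mul_eq_card_mul (fun q b => I q b) (s := univ.erase p) (t := {b | I p b})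
    (m := l) (n := k - 1) (fun q hq => ?_) (fun b hb => ?_)
  · rwa [card_erase_of_mem (mem_univ p), card_univ, ← Nat.card_eq_fintype_card, hD.1,
      eq_comm] at h
  · rw [bipartiteAbove, filter_filter, hD.card_common_blocks (ne_of_mem_erase hq).symm]
  · rw [bipartiteBelow, filter_erase, card_erase_of_mem (by simpa using hb), hD.card_points_on]

lemma card_blocks_through_of_square [Fintype P] [Fintype B] (hD : Is2Design I v k l)
    (hBP : Fintype.card B = Fintype.card P) (p : P) : #{b | I p b} = k := by
  have hk : 0 < k - 1 := by have := hD.2.1; omega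
  have hr : ∀ q, #{b | I q b} = #{b | I p b} := fun q => Nat.eq_of_mul_eq_mul_right hk
    ((hD.card_blocks_through_mul q).trans (hD.card_blocks_through_mul p).symm)
  have h := card_mul_eq_card_mul I (s := univ) (t := univ) (m := #{b | I p b}) (n := k)
    (fun q _ => hr q) (fun b _ => hD.card_points_on b)
  rw [card_univ, card_univ, hBP] at h
  exact Nat.eq_of_mul_eq_mul_left (Fintype.card_pos_iff.2 ⟨p⟩) h

lemma sum_card_common_points_of_square [Fintype P] [Fintype B] [DecidableEq B]
    (hD : Is2Design I v k l) (hBP : Fintype.card B = Fintype.card P) (b₀ : B) :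
    ∑ b ∈ univ.erase b₀, #{p | I p b₀ ∧ I p b} = k * (k - 1) := by
  have h := sum_card_bipartiteAbove_eq_sum_card_bipartiteBelow (fun b p => I p b)
    (s := univ.erase b₀) (t := {p | I p b₀})
  simp only [bipartiteAbove, filter_filter] at h
  rw [h, sum_congr rfl fun p hp => ?_, sum_const, hD.card_points_on, smul_eq_mul]
  rw [bipartiteBelow, filter_erase, card_erase_of_mem (by simpa using hp),
    hD.card_blocks_through_of_square hBP]

lemma sum_card_offDiag_common_points [Fintype P] [Fintype B] [DecidableEq P] [DecidableEq B]
    (hD : Is2Design I v k l) (b₀ : B) :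
    ∑ b ∈ univ.erase b₀, #(offDiag {p | I p b₀ ∧ I p b}) = (k * k - k) * (l - 1) := by
  have h := sum_card_bipartiteAbove_eq_sum_card_bipartiteBelow
    (fun b (pq : P × P) => I pq.1 b ∧ I pq.2 b) (s := univ.erase b₀) (t := offDiag {p | I p b₀})
  have hoff : ∀ b, {pq ∈ offDiag {p | I p b₀} | I pq.1 b ∧ I pq.2 b} =
      offDiag {p | I p b₀ ∧ I p b} := fun b => by ext; simp; tauto
  simp only [bipartiteAbove, hoff] at h
  rw [h, sum_congr rfl fun pq hpq => ?_, sum_const, offDiag_card, hD.card_points_on, smul_eq_mul]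
  obtain ⟨hp, hq, hpq⟩ : I pq.1 b₀ ∧ I pq.2 b₀ ∧ pq.1 ≠ pq.2 := by simpa using hpq
  rw [bipartiteBelow, filter_erase, card_erase_of_mem (by simpa using ⟨hp, hq⟩),
    hD.card_common_blocks hpq]

theorem card_common_points_of_square [Fintype P] [Fintype B] (hD : Is2Design I v k l)
    (hBP : Fintype.card B = Fintype.card P) {b₀ b₁ : B} (hb : b₀ ≠ b₁) :
    #{p | I p b₀ ∧ I p b₁} = l := by
  classical
  have hk : 2 ≤ k := hD.2.1
  have hl : 1 ≤ l := hD.lambda_pos b₀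
  obtain ⟨p, -⟩ := card_pos.1 (hD.card_points_on b₀ ▸ zero_lt_two.trans_le hk)
  have hv : 1 ≤ v := by rw [← hD.1, Nat.card_eq_fintype_card]; exact Fintype.card_pos_iff.2 ⟨p⟩
  have hcard : #(univ.erase b₀) = v - 1 := by
    rw [card_erase_of_mem (mem_univ _), card_univ, hBP, ← Nat.card_eq_fintype_card, hD.1]
  have hpairs := hD.card_blocks_through_mul p
  rw [hD.card_blocks_through_of_square hBP] at hpairs
  zify [hv, (by omega : 1 ≤ k)] at hpairs
  have hsum := hD.sum_card_common_points_of_square hBP b₀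
  have hsum2 := hD.sum_card_offDiag_common_points b₀
  simp only [offDiag_card] at hsum2
  set n : B → ℕ := fun b => #{p | I p b₀ ∧ I p b}
  -- the three double counts make the variance of the `n b` around `l` vanish
  have hsq : ∑ b ∈ univ.erase b₀, ((n b : ℤ) - l) ^ 2 = 0 := by
    have e : ∀ b, ((n b : ℤ) - l) ^ 2 = ((n b * n b - n b : ℕ) : ℤ) + (1 - 2 * l) * n b + l ^ 2 :=
      fun b => by rw [Nat.cast_sub (Nat.le_mul_self _)]; push_cast; ring
    rw [sum_congr rfl fun b _ => e b, sum_add_distrib, sum_add_distrib, ← mul_sum, sum_const,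
      ← Nat.cast_sum, ← Nat.cast_sum, hsum, hsum2, hcard]
    push_cast [nsmul_eq_mul, Nat.cast_sub hl, Nat.cast_sub hv, Nat.cast_sub (Nat.le_mul_self k),
      Nat.cast_sub (by omega : 1 ≤ k)]
    linear_combination (-(l : ℤ)) * hpairs
  have h₁ := (sum_eq_zero_iff_of_nonneg fun _ _ => sq_nonneg _).1 hsq b₁ (by simp [hb.symm])
  exact_mod_cast sub_eq_zero.1 (pow_eq_zero_iff two_ne_zero |>.1 h₁)

end Fintype

theorem exists_common_point_of_card_eq [Finite P] [Finite B] (hD : Is2Design I v k l)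
    (hBP : Nat.card B = Nat.card P) (b₀ b₁ : B) : ∃ p, I p b₀ ∧ I p b₁ := by
  classical
  have := Fintype.ofFinite P
  have := Fintype.ofFinite B
  rw [Nat.card_eq_fintype_card, Nat.card_eq_fintype_card] at hBP
  suffices 0 < #{p | I p b₀ ∧ I p b₁} by simpa [card_pos, Finset.Nonempty] using this
  rcases eq_or_ne b₀ b₁ with rfl | hb
  · simp only [and_self]
    rw [hD.card_points_on]
    exact zero_lt_two.trans_le hD.2.1
  · exact hD.card_common_points_of_square hBP hb ▸ hD.lambda_pos b₀

lemma exists_incident_nonincident [Finite P] (hD : Is2Design I v k l) (hkv : k < v) (b : B) :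
    ∃ p q, I p b ∧ ¬ I q b := by
  obtain ⟨⟨p, hp⟩⟩ := (Nat.card_pos_iff.1 (hD.2.2.1 b ▸ zero_lt_two.trans_le hD.2.1)).1
  by_contra! h
  have := Nat.card_congr (Equiv.subtypeUnivEquiv (h p · hp))
  rw [hD.2.2.1 b, hD.1] at this
  exact hkv.ne this

end Is2Design

open MulAction

section Action

variable {G X : Type*} [Group G] [MulAction G X]

lemma Commute.pow_smul_eq_pow_smul {a b : G} (hab : Commute a b) {x : X} (h : a • x = b • x)
    (n : ℕ) : a ^ n • x = b ^ n • x := by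
  induction n with
  | zero => simp
  | succ n ih => rw [pow_succ', mul_smul, ih, ← mul_smul, (hab.pow_right n).eq, mul_smul, h,
      ← mul_smul, ← pow_succ]

lemma exists_smul_ne_of_ne_one [FaithfulSMul G X] {a : G} (ha : a ≠ 1) : ∃ x : X, a • x ≠ x := by
  by_contra! h
  exact ha ((faithfulSMul_iff.1 ‹_›) a h)

lemma IsDoublyTransitive.isPretransitive [Nontrivial X] (h : IsDoublyTransitive G X) :
    IsPretransitive G X := by
  refine ⟨fun x y => ?_⟩
  obtain ⟨x', hx'⟩ := exists_ne x
  obtain ⟨y', hy'⟩ := exists_ne y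
  obtain ⟨g, hg, -⟩ := h x x' y y' hx'.symm hy'.symm
  exact ⟨g, hg⟩

lemma IsDoublyTransitive.exists_conj_smul_eq (h : IsDoublyTransitive G X) {a : G} {x₀ : X}
    (ha : a • x₀ ≠ x₀) {x y : X} (hxy : x ≠ y) : ∃ g : G, (g * a * g⁻¹) • x = y := by
  obtain ⟨g, hg, hga⟩ := h x₀ (a • x₀) x y ha.symm hxy
  refine ⟨g, ?_⟩
  rw [← hg, mul_smul, inv_smul_smul, mul_smul, hga]

lemma IsDoublyTransitive.isPretransitive_of_normal [FaithfulSMul G X]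
    (h : IsDoublyTransitive G X) {N : Subgroup G} [N.Normal] (hN : N ≠ ⊥) :
    IsPretransitive N X := by
  obtain ⟨a, ha⟩ := Subgroup.ne_bot_iff_exists_ne_one.1 hN
  obtain ⟨x₀, hx₀⟩ := exists_smul_ne_of_ne_one (X := X) (by exact_mod_cast ha)
  refine ⟨fun x y => ?_⟩
  rcases eq_or_ne x y with rfl | hxy
  · exact ⟨1, one_smul _ _⟩
  obtain ⟨g, hg⟩ := h.exists_conj_smul_eq hx₀ hxy
  exact ⟨⟨_, ‹N.Normal›.conj_mem a a.2 g⟩, hg⟩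

lemma IsPrimitiveOn.isPretransitive_of_normal [FaithfulSMul G X] (h : IsPrimitiveOn G X)
    {N : Subgroup G} [N.Normal] (hN : N ≠ ⊥) : IsPretransitive N X := by
  rcases h.2 _ (IsPartition.of_orbits (G := N)) (by
      rintro g _ ⟨x, rfl⟩
      exact ⟨g • x, (smul_orbit_eq_orbit_smul N x g).symm⟩) with hsingle | huniv
  · refine absurd ((Subgroup.eq_bot_iff_forall N).2 fun a ha => ?_) hN
    refine (faithfulSMul_iff.1 ‹_›) a fun x => ?_
    obtain ⟨y, hy⟩ := hsingle (orbit N x) ⟨x, rfl⟩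
    have hx : x ∈ orbit N x := mem_orbit_self x
    have hax : (⟨a, ha⟩ : N) • x ∈ orbit N x := mem_orbit _ _
    rw [hy] at hx hax
    exact hax.trans hx.symm
  · refine ⟨fun x y => mem_orbit_iff.1 ?_⟩
    have hx : orbit N x ∈ ({Set.univ} : Set (Set X)) := huniv ▸ ⟨x, rfl⟩
    rw [Set.mem_singleton_iff.1 hx]
    exact Set.mem_univ y

lemma card_orbitRel_stabilizer_le_two {x : X}
    (h : ∀ y z, y ≠ x → z ≠ x → ∃ g ∈ stabilizer G x, g • y = z) :
    Nat.card (Quotient (orbitRel (stabilizer G x) X)) ≤ 2 := by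
  rcases subsingleton_or_nontrivial X with hX | hX
  · refine (Nat.card_le_card_of_surjective (fun _ : Unit => ⟦x⟧)
      (Quotient.ind fun z => ⟨(), by rw [Subsingleton.elim z x]⟩)).trans ?_
    simp
  obtain ⟨y, hy⟩ := exists_ne x
  have hsurj : Function.Surjective fun i : Bool =>
      if i then (⟦x⟧ : Quotient (orbitRel (stabilizer G x) X)) else ⟦y⟧ := by
    refine Quotient.ind fun z => ?_
    rcases eq_or_ne z x with rfl | hz
    · exact ⟨true, rfl⟩
    · obtain ⟨g, hg, hgz⟩ := h z y hz hy
      exact ⟨false, Quotient.sound ⟨⟨g, hg⟩, hgz⟩⟩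
  simpa using Nat.card_le_card_of_surjective _ hsurj

lemma eq_one_of_smul_eq_of_commute [FaithfulSMul G X] {C : Subgroup G} [IsPretransitive C X]
    {a : G} (hac : ∀ c ∈ C, Commute a c) {x : X} (hx : a • x = x) : a = 1 := by
  refine (faithfulSMul_iff.1 ‹_›) a fun y => ?_
  obtain ⟨c, rfl⟩ := exists_smul_eq C x y
  rw [Subgroup.smul_def, ← mul_smul, (hac c c.2).eq, mul_smul, hx]

lemma card_eq_of_isPretransitive_of_free {N : Subgroup G} [IsPretransitive N X]
    (hfree : ∀ a ∈ N, ∀ x : X, a • x = x → a = 1) (x : X) : Nat.card N = Nat.card X := by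
  have hstab : stabilizer N x = ⊥ := (Subgroup.eq_bot_iff_forall _).2 fun a ha =>
    Subtype.ext (hfree a a.2 x ha)
  rw [← index_stabilizer_of_transitive N x, hstab, Subgroup.index_bot]

theorem card_eq_card_of_commute {Y : Type*} [MulAction G Y] [FaithfulSMul G X]
    [FaithfulSMul G Y] {N C : Subgroup G} [IsPretransitive N X] [IsPretransitive N Y]
    [IsPretransitive C X] [IsPretransitive C Y] (hNC : ∀ a ∈ N, ∀ c ∈ C, Commute a c)
    (x : X) (y : Y) : Nat.card X = Nat.card Y := by
  rw [← card_eq_of_isPretransitive_of_free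
      (fun a ha _ => eq_one_of_smul_eq_of_commute (hNC a ha)) x,
    card_eq_of_isPretransitive_of_free (fun a ha _ => eq_one_of_smul_eq_of_commute (hNC a ha)) y]

theorem IsDoublyTransitive.not_forall_commute_of_normal {Y : Type*} [MulAction G Y]
    [FaithfulSMul G X] [FaithfulSMul G Y] (hX : IsDoublyTransitive G X) (hY : IsPrimitiveOn G Y)
    (x : X) (y : Y) (hXY : Nat.card X ≠ Nat.card Y) {N C : Subgroup G} [N.Normal] [C.Normal]
    (hN : N ≠ ⊥) (hC : C ≠ ⊥) : ¬ ∀ a ∈ N, ∀ c ∈ C, Commute a c := by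
  have := hX.isPretransitive_of_normal hN
  have := hY.isPretransitive_of_normal hN
  have := hX.isPretransitive_of_normal hC
  have := hY.isPretransitive_of_normal hC
  exact fun hNC => hXY (card_eq_card_of_commute hNC x y)

lemma isPretransitive_conjAct_smul {T : Subgroup G} [IsPretransitive T X] (g : G) :
    IsPretransitive (ConjAct.toConjAct g • T : Subgroup G) X := by
  refine ⟨fun x y => ?_⟩
  obtain ⟨t, ht⟩ := exists_smul_eq T (g⁻¹ • x) (g⁻¹ • y)
  refine ⟨⟨_, Subgroup.conj_mem_conjAct_smul g t.2⟩, ?_⟩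
  rw [Subgroup.mk_smul, mul_smul, mul_smul, ← Subgroup.smul_def, ht, smul_inv_smul]

end Action

section MinimalNormalSubgroup

variable {G X : Type*} [Group G] [MulAction G X] [Finite G] [FaithfulSMul G X]

open ConjAct Subgroup

section NormalizedByN

variable {N T : Subgroup G} [N.Normal]

lemma IsDoublyTransitive.orbitRel_or_orbitRel_centralizer (h : IsDoublyTransitive G X)
    (hT : Minimal (fun K : Subgroup G => K ≠ ⊥ ∧ K ≤ N ∧ N ≤ normalizer K) T) (x y : X) :
    orbitRel T X x y ∨ orbitRel (centralizer (T : Set G)) X x y := by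
  rcases eq_or_ne y x with rfl | hyx
  · exact .inl (mem_orbit_self y)
  obtain ⟨t, ht⟩ := ne_bot_iff_exists_ne_one.1 hT.prop.1
  obtain ⟨x₀, hx₀⟩ := exists_smul_ne_of_ne_one (X := X) (by exact_mod_cast ht)
  obtain ⟨g, hg⟩ := h.exists_conj_smul_eq hx₀ hyx
  have hgt := conj_mem_conjAct_smul g t.2
  by_cases hgT : toConjAct g • T = T
  · exact .inl ⟨⟨_, by rwa [hgT] at hgt⟩, hg⟩
  · exact .inr ⟨⟨_, mem_centralizer_iff.2 fun s hs =>
      (commute_of_minimal_of_conjAct_smul_ne hT hgT hs hgt).eq⟩, hg⟩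

theorem IsDoublyTransitive.eq_one_of_minimal_of_smul_eq (h : IsDoublyTransitive G X)
    (hT : Minimal (fun K : Subgroup G => K ≠ ⊥ ∧ K ≤ N ∧ N ≤ normalizer K) T) (hTn : ¬ T.Normal)
    {t : G} (ht : t ∈ T) {x : X} (hx : t • x = x) : t = 1 := by
  obtain ⟨g, hg⟩ : ∃ g : G, toConjAct g • T ≠ T := by
    by_contra! hall
    exact hTn ⟨fun n hn g => hall g ▸ conj_mem_conjAct_smul g hn⟩
  rcases Setoid.forall_rel_or_forall_rel_of_forall_rel_or _ _
    (h.orbitRel_or_orbitRel_centralizer hT) with hTtr | hCtr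
  · have : IsPretransitive T X := ⟨fun a b => mem_orbit_iff.1 (hTtr b a)⟩
    have := isPretransitive_conjAct_smul (X := X) (T := T) g
    exact eq_one_of_smul_eq_of_commute
      (fun c hc => commute_of_minimal_of_conjAct_smul_ne hT hg ht hc) hx
  · have : IsPretransitive (centralizer (T : Set G)) X := ⟨fun a b => mem_orbit_iff.1 (hCtr b a)⟩
    exact eq_one_of_smul_eq_of_commute (fun c hc => mem_centralizer_iff.1 hc t ht) hx

theorem IsDoublyTransitive.orderOf_eq_of_minimal (h : IsDoublyTransitive G X)
    (hT : Minimal (fun K : Subgroup G => K ≠ ⊥ ∧ K ≤ N ∧ N ≤ normalizer K) T)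
    (hfree : ∀ t ∈ T, ∀ x : X, t • x = x → t = 1) {t t' : G} (ht : t ∈ T) (ht' : t' ∈ T)
    (h1 : t ≠ 1) (h1' : t' ≠ 1) : orderOf t = orderOf t' := by
  obtain ⟨x, hx⟩ := exists_smul_ne_of_ne_one (X := X) h1
  have hx' : t' • x ≠ x := fun h => h1' (hfree t' ht' x h)
  obtain ⟨g, hg, hgt⟩ := h x (t • x) x (t' • x) hx.symm hx'.symm
  have hg' : g⁻¹ • x = x := inv_smul_eq_iff.2 hg.symm
  -- `g` fixes `x` and sends `t • x` to `t' • x`, so `u` agrees with `t'` at `x`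
  set u := g * t * g⁻¹
  have hu : u ∈ toConjAct g • T := conj_mem_conjAct_smul g ht
  have hux : u • x = t' • x := by rw [mul_smul, mul_smul, hg', hgt]
  have hcomm : Commute u t' := by
    by_cases hgT : toConjAct g • T = T
    · rw [hgT] at hu
      have := hfree _ (T.mul_mem (T.inv_mem hu) ht') x (by rw [mul_smul, ← hux, inv_smul_smul])
      rw [inv_mul_eq_one.1 this]
    · exact (commute_of_minimal_of_conjAct_smul_ne hT hgT ht' hu).symm
  rw [orderOf_eq_orderOf_iff]
  intro n
  calc t ^ n = 1 ↔ t ^ n • x = x := ⟨fun h => by rw [h, one_smul], hfree _ (pow_mem ht n) x⟩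
    _ ↔ g • t ^ n • x = g • x := (smul_left_cancel_iff g).symm
    _ ↔ u ^ n • x = x := by rw [conj_pow, mul_smul, mul_smul, hg', hg]
    _ ↔ t' ^ n • x = x := by rw [hcomm.pow_smul_eq_pow_smul hux]
    _ ↔ t' ^ n = 1 := ⟨hfree _ (pow_mem ht' n) x, fun h => by rw [h, one_smul]⟩

end NormalizedByN

variable {N : Subgroup G}

theorem IsDoublyTransitive.eq_of_minimal (h : IsDoublyTransitive G X)
    (hN : Minimal (fun H : Subgroup G => H.Normal ∧ H ≠ ⊥) N)
    (hC : centralizer (N : Set G) = ⊥) {T : Subgroup G}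
    (hT : Minimal (fun K : Subgroup G => K ≠ ⊥ ∧ K ≤ N ∧ N ≤ normalizer K) T) : T = N := by
  have := hN.prop.1
  obtain ⟨hTb, hTN, -⟩ := hT.prop
  by_cases hTn : T.Normal
  · exact le_antisymm hTN (hN.2 ⟨hTn, hTb⟩ hTN)
  have hfree : ∀ t ∈ T, ∀ x : X, t • x = x → t = 1 := fun t ht x =>
    h.eq_one_of_minimal_of_smul_eq hT hTn ht
  obtain ⟨p, hp, hTp⟩ := exists_isPGroup_of_orderOf_eq (H := T) fun x y hx hy => by
    rw [← orderOf_submonoid, ← orderOf_submonoid y]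
    exact h.orderOf_eq_of_minimal hT hfree x.2 y.2 (by exact_mod_cast hx) (by exact_mod_cast hy)
  have : Fact p.Prime := ⟨hp⟩
  have : Nontrivial T := (nontrivial_iff_ne_bot _).2 hTb
  have := hTp.center_nontrivial
  obtain ⟨z, hz⟩ := exists_ne (1 : center T)
  have hNz : N ≤ centralizer {((z : T) : G)} := by
    refine (hN.2 ⟨normalClosure_normal, ne_bot_of_le_ne_bot hTb le_normalClosure⟩
      (normalClosure_le_normal hTN)).trans (normalClosure_le_centralizer_of_minimal hT (z : T).2 ?_)
    intro t ht
    exact congrArg Subtype.val (mem_center_iff.1 z.2 ⟨t, ht⟩).symm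
  have hzC : ((z : T) : G) ∈ centralizer (N : Set G) :=
    mem_centralizer_iff.2 fun n hn => mem_centralizer_singleton_iff.1 (hNz hn)
  rw [hC, mem_bot] at hzC
  exact absurd (Subtype.ext (Subtype.ext hzC)) hz

theorem IsDoublyTransitive.isSimpleGroup_of_minimal (h : IsDoublyTransitive G X)
    (hN : Minimal (fun H : Subgroup G => H.Normal ∧ H ≠ ⊥) N)
    (hC : centralizer (N : Set G) = ⊥) : IsSimpleGroup N := by
  have : Nontrivial N := (nontrivial_iff_ne_bot _).2 hN.prop.2
  refine ⟨fun H hH => or_iff_not_imp_left.2 fun hHb => ?_⟩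
  set K := H.map N.subtype
  have hKN : K ≤ N := map_subtype_le H
  have hHK : K.subgroupOf N = H := H.comap_map_eq_self_of_injective N.subtype_injective
  have hNK : N ≤ normalizer K := (normal_subgroupOf_iff_le_normalizer hKN).1 (hHK ▸ hH)
  have hK : K ≠ ⊥ := (map_eq_bot_iff_of_injective H N.subtype_injective).not.2 hHb
  obtain ⟨T, hTK, hT⟩ := exists_minimal_le_of_wellFoundedLT
    (fun K : Subgroup G => K ≠ ⊥ ∧ K ≤ N ∧ N ≤ normalizer K) K ⟨hK, hKN, hNK⟩
  have hKN' : K = N := le_antisymm hKN (h.eq_of_minimal hN hC hT ▸ hTK)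
  rw [← hHK, hKN', subgroupOf_self]

end MinimalNormalSubgroup

section PairwiseTransitive

variable {P B G : Type*} [Group G] [MulAction G P] [MulAction G B] {I : P → B → Prop}

lemma PairwiseTransitive.exists_disjoint_blocks [Nonempty B] (hPT : PairwiseTransitive G I)
    (hrank : HasRank G B 3) : ∃ b₀ b₁ : B, ¬ ∃ p, I p b₀ ∧ I p b₁ := by
  by_contra! hmeet
  obtain ⟨b⟩ := ‹Nonempty B›
  have := card_orbitRel_stabilizer_le_two (G := G) (x := b) fun y z hy hz =>
    hPT.2.2.2.1 b y b z hy.symm hz.symm (hmeet b y) (hmeet b z)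
  rw [hrank.2 b] at this
  omega

lemma faithfulSMul_blocks_of_isDoublyTransitive
    (hGI : ∀ (g : G) (p : P) (b : B), I p b ↔ I (g • p) (g • b))
    (hfaith : ∀ g : G, (∀ p : P, g • p = p) → (∀ b : B, g • b = b) → g = 1)
    (h2 : IsDoublyTransitive G P) {b : B} {p q : P} (hp : I p b) (hq : ¬ I q b) :
    FaithfulSMul G B := by
  refine faithfulSMul_iff.2 fun g hg => hfaith g (fun x => ?_) hg
  by_contra hx
  obtain ⟨a, ha⟩ := h2.exists_conj_smul_eq hx (fun h => hq (h ▸ hp) : p ≠ q)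
  apply hq
  have := (hGI (a * g * a⁻¹) p b).1 hp
  rwa [ha, mul_smul, mul_smul, hg, smul_inv_smul] at this

lemma faithfulSMul_points_of_isPrimitiveOn [FaithfulSMul G B]
    (hGI : ∀ (g : G) (p : P) (b : B), I p b ↔ I (g • p) (g • b)) (hprim : IsPrimitiveOn G B)
    {b₀ b₁ : B} (hdisj : ¬ ∃ p, I p b₀ ∧ I p b₁) {p : P} (hp : I p b₀) : FaithfulSMul G P := by
  set K := (MulAction.toPermHom G P).ker
  have hK : ∀ g, g ∈ K ↔ ∀ x : P, g • x = x := fun g => by simp [K, Equiv.ext_iff]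
  suffices K = ⊥ from faithfulSMul_iff.2 fun g hg =>
    (Subgroup.eq_bot_iff_forall K).1 this g ((hK g).2 hg)
  by_contra hKb
  have := hprim.isPretransitive_of_normal hKb
  obtain ⟨k, hk⟩ := exists_smul_eq K b₀ b₁
  refine hdisj ⟨p, hp, ?_⟩
  have := (hGI k p b₀).1 hp
  rwa [(hK k).1 k.2 p, ← Subgroup.smul_def, hk] at this

end PairwiseTransitive

theorem rank_three_primitive_implies_almost_simple_general
    {P B G : Type*} [Finite P] [Finite B] [Nonempty B]
    [Group G] [MulAction G P] [MulAction G B]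
    (I : P → B → Prop) (v k l : ℕ)
    (hD : Is2Design I v k l) (hnt : 2 < k ∧ k < v)
    (hGI : ∀ (g : G) (p : P) (b : B), I p b ↔ I (g • p) (g • b))
    (hfaith : ∀ g : G, (∀ p : P, g • p = p) → (∀ b : B, g • b = b) → g = 1)
    (hPT : PairwiseTransitive G I)
    (hrank : HasRank G B 3) (hprim : IsPrimitiveOn G B) :
    IsAlmostSimple G := by
  have h2 : IsDoublyTransitive G P := hPT.1
  obtain ⟨b⟩ := ‹Nonempty B›
  obtain ⟨p, q, hp, hq⟩ := hD.exists_incident_nonincident hnt.2 b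
  have : Nontrivial P := ⟨⟨p, q, fun h => hq (h ▸ hp)⟩⟩
  have : FaithfulSMul G B := faithfulSMul_blocks_of_isDoublyTransitive hGI hfaith h2 hp hq
  obtain ⟨b₀, b₁, hdisj⟩ := hPT.exists_disjoint_blocks hrank
  obtain ⟨p₀, -, hp₀, -⟩ := hD.exists_incident_nonincident hnt.2 b₀
  have : FaithfulSMul G P := faithfulSMul_points_of_isPrimitiveOn hGI hprim hdisj hp₀
  have hcard : Nat.card P ≠ Nat.card B := fun h =>
    hdisj (hD.exists_common_point_of_card_eq h.symm b₀ b₁)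
  have : Finite G := Finite.of_injective _ (MulAction.toPerm_injective (α := G) (β := P))
  have : Nontrivial G := by
    obtain ⟨g, hg⟩ := h2.isPretransitive.exists_smul_eq p q
    exact ⟨⟨g, 1, fun h => hq (by rw [← hg, h, one_smul]; exact hp)⟩⟩
  obtain ⟨N, -, hN⟩ := exists_minimal_le_of_wellFoundedLT
    (fun N : Subgroup G => N.Normal ∧ N ≠ ⊥) ⊤ ⟨inferInstance, top_ne_bot⟩
  have := hN.prop.1
  have hC : Subgroup.centralizer (N : Set G) = ⊥ := by
    by_contra hC
    exact h2.not_forall_commute_of_normal hprim p b hcard hN.prop.2 hC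
      fun a ha c hc => Subgroup.mem_centralizer_iff.1 hc a ha
  refine ⟨N, hN.prop.1, h2.isSimpleGroup_of_minimal hN hC, ?_, hC⟩
  by_contra! hab
  exact h2.not_forall_commute_of_normal hprim p b hcard hN.prop.2 hN.prop.2 hab

/-- If a non-trivial 2-design is `G`-pairwise transitive and `G` has rank 3 and is
primitive on blocks, then `G` is almost simple. -/
theorem rank_three_primitive_implies_almost_simple
    {P B G : Type*} [Finite P] [Finite B] [Nonempty P] [Nonempty B]
    [Group G] [MulAction G P] [MulAction G B]
    (I : P → B → Prop) (v k l : ℕ)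
    (hD : Is2Design I v k l) (hnt : 2 < k ∧ k < v)
    (hGI : ∀ (g : G) (p : P) (b : B), I p b ↔ I (g • p) (g • b))
    (hfaith : ∀ g : G, (∀ p : P, g • p = p) → (∀ b : B, g • b = b) → g = 1)
    (hPT : PairwiseTransitive G I)
    (hrank : HasRank G B 3) (hprim : IsPrimitiveOn G B) :
    IsAlmostSimple G :=
  rank_three_primitive_implies_almost_simple_general I v k l hD hnt hGI hfaith hPT hrank hprim
end
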